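/- arXiv:2511.17764 — 13 statements merged into one kernel-verified Lean document; each statement's English description precedes it below -/
import Mathlib

section
/- Let h be an m×n ROCN matrix (m ≤ n). Let A_1,…,A_m be Hermitian operators on a finite-dimensional complex Hilbert space H_A and B_1,…,B_n Hermitian operators on a finite-dimensional complex Hilbert space H_B, all satisfying A_i² = 1 and B_j² = 1. Then the following exact operator identity (sum-of-squares decomposition) holds on H_A ⊗ H_B: n·(1⊗1) − Σ_{i=1}^m Σ_{j=1}^n h_{ij} A_i ⊗ B_j = (1/2) Σ_{j=1}^n N_j† N_j, where N_j = 1⊗1 − Σ_{i=1}^m h_{ij} A_i ⊗ B_j. -/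
open Matrix Kronecker Finset

/-- An `m × n` real matrix `h` (with `m ≤ n`) is ROCN (row-orthogonal, column-normalized)
if all its rows are nonzero, its rows are pairwise orthogonal, and every column has
unit Euclidean norm. -/
def IsROCN {m n : ℕ} (h : Matrix (Fin m) (Fin n) ℝ) : Prop :=
  m ≤ n ∧
  (∀ i, ∃ j, h i j ≠ 0) ∧
  (∀ i k, i ≠ k → ∑ j, h i j * h k j = 0) ∧
  (∀ j, ∑ i, (h i j) ^ 2 = 1)

/-!
Put `Sⱼ = Σᵢ hᵢⱼ Aᵢ ⊗ Bⱼ`, so that `Nⱼ = 1 - Sⱼ` with `Sⱼ` Hermitian and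
`Nⱼᴴ Nⱼ = 1 - 2 Sⱼ + Sⱼ²`. The identity thus reduces to `Σⱼ Sⱼ² = n`. Writing
`Aᵢ ⊗ Bⱼ = (Aᵢ ⊗ 1)(1 ⊗ Bⱼ)` with commuting factors and `Bⱼ² = 1`, one gets
`Σⱼ Sⱼ² = Σᵢₖ (Σⱼ hᵢⱼ hₖⱼ) Aᵢ Aₖ ⊗ 1`; orthogonality of the rows leaves only `i = k`,
where `Aᵢ² = 1`, and the unit columns give `Σᵢⱼ hᵢⱼ² = n`.
-/

theorem sum_star_one_sub_mul_one_sub {R ι : Type*} [Ring R] [StarRing R] [Fintype ι]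
    {S : ι → R} (hS : ∀ j, IsSelfAdjoint (S j)) (hsq : ∑ j, S j * S j = Fintype.card ι) :
    ∑ j, star (1 - S j) * (1 - S j) = 2 * (Fintype.card ι - ∑ j, S j) := by
  have hexpand : ∀ j, star (1 - S j) * (1 - S j) = 1 - 2 * S j + S j * S j := fun j => by
    rw [star_sub, star_one, (hS j).star_eq]; noncomm_ring
  simp only [hexpand, sum_add_distrib, sum_sub_distrib, ← mul_sum, hsq, sum_const, card_univ,
    nsmul_one]
  rw [mul_sub, two_mul (Fintype.card ι : R)]
  abel

theorem sq_sum_smul_mul {𝕜 R ι : Type*} [CommSemiring 𝕜] [Semiring R] [Algebra 𝕜 R] [Fintype ι]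
    (c : ι → 𝕜) (a : ι → R) {b : R} (hab : ∀ i, Commute (a i) b) (hb : b * b = 1) :
    (∑ i, c i • (a i * b)) * (∑ i, c i • (a i * b)) = ∑ i, ∑ k, (c i * c k) • (a i * a k) := by
  rw [sum_mul_sum]
  refine sum_congr rfl fun i _ => sum_congr rfl fun k _ => ?_
  rw [smul_mul_smul_comm, mul_assoc, ← mul_assoc b, ← (hab k).eq, mul_assoc, hb, mul_one]

theorem sum_sq_sum_smul_mul_eq_card {𝕜 R m n : Type*} [CommSemiring 𝕜] [Semiring R] [Algebra 𝕜 R]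
    [Fintype m] [Fintype n] {h : Matrix m n 𝕜}
    (horth : ∀ i k, i ≠ k → ∑ j, h i j * h k j = 0) (hcol : ∀ j, ∑ i, h i j ^ 2 = 1)
    {a : m → R} {b : n → R} (hab : ∀ i j, Commute (a i) (b j))
    (ha : ∀ i, a i * a i = 1) (hb : ∀ j, b j * b j = 1) :
    ∑ j, (∑ i, h i j • (a i * b j)) * (∑ i, h i j • (a i * b j)) = Fintype.card n := by
  calc ∑ j, (∑ i, h i j • (a i * b j)) * (∑ i, h i j • (a i * b j))
      = ∑ i, ∑ k, (∑ j, h i j * h k j) • (a i * a k) := by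
        simp only [fun j => sq_sum_smul_mul (h · j) a (hab · j) (hb j), sum_smul]
        rw [sum_comm]; exact sum_congr rfl fun i _ => sum_comm
    _ = ∑ i, ∑ j, h i j ^ 2 • (1 : R) := by
        refine sum_congr rfl fun i _ => ?_
        rw [sum_eq_single i (fun k _ hki => by rw [horth i k hki.symm, zero_smul]) (by simp),
          ha i, sum_smul]
        simp only [sq]
    _ = Fintype.card n := by
        rw [sum_comm]; simp [← sum_smul, hcol]

theorem kronecker_one_mul_one_kronecker {l n α : Type*} [Fintype l] [Fintype n] [DecidableEq l]
    [DecidableEq n] [CommSemiring α] (A : Matrix l l α) (B : Matrix n n α) :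
    (A ⊗ₖ 1) * (1 ⊗ₖ B) = A ⊗ₖ B := by
  rw [← mul_kronecker_mul, mul_one, one_mul]

theorem commute_kronecker_one_one_kronecker {l n α : Type*} [Fintype l] [Fintype n]
    [DecidableEq l] [DecidableEq n] [CommSemiring α] (A : Matrix l l α) (B : Matrix n n α) :
    Commute (A ⊗ₖ 1) (1 ⊗ₖ B) := by
  rw [Commute, SemiconjBy, ← mul_kronecker_mul, ← mul_kronecker_mul]
  simp

/-- For an ROCN matrix `h` and Hermitian involutions `A i`, `B j`, the
sum-of-squares identity
`n·(1⊗1) − Σᵢⱼ hᵢⱼ Aᵢ ⊗ Bⱼ = (1/2) Σⱼ Nⱼᴴ Nⱼ` holds, where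
`Nⱼ = 1⊗1 − Σᵢ hᵢⱼ Aᵢ ⊗ Bⱼ`. -/
theorem rocn_sos_decomposition {m n dA dB : ℕ}
    (h : Matrix (Fin m) (Fin n) ℝ) (hROCN : IsROCN h)
    (A : Fin m → Matrix (Fin dA) (Fin dA) ℂ)
    (B : Fin n → Matrix (Fin dB) (Fin dB) ℂ)
    (hAH : ∀ i, (A i)ᴴ = A i) (hBH : ∀ j, (B j)ᴴ = B j)
    (hA2 : ∀ i, A i * A i = 1) (hB2 : ∀ j, B j * B j = 1)
    (N : Fin n → Matrix (Fin dA × Fin dB) (Fin dA × Fin dB) ℂ)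
    (hN : ∀ j, N j = (1 : Matrix (Fin dA) (Fin dA) ℂ) ⊗ₖ (1 : Matrix (Fin dB) (Fin dB) ℂ)
          - ∑ i, (h i j : ℂ) • (A i ⊗ₖ B j)) :
    (n : ℂ) • ((1 : Matrix (Fin dA) (Fin dA) ℂ) ⊗ₖ (1 : Matrix (Fin dB) (Fin dB) ℂ))
      - ∑ i, ∑ j, (h i j : ℂ) • (A i ⊗ₖ B j)
    = (1 / 2 : ℂ) • ∑ j, (N j)ᴴ * N j := by
  obtain ⟨-, -, horth, hcol⟩ := hROCN
  set S := fun j => ∑ i, (h i j : ℂ) • (A i ⊗ₖ B j) with hS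
  have hS_sa (j : Fin n) : IsSelfAdjoint (S j) :=
    isSelfAdjoint_sum _ fun i _ => IsSelfAdjoint.smul (Complex.conj_ofReal _) <| by
      rw [IsSelfAdjoint, star_eq_conjTranspose, conjTranspose_kronecker, hAH, hBH]
  have hS_sq : ∑ j, S j * S j = Fintype.card (Fin n) := by
    rw [show S = fun j => ∑ i, (h i j : ℂ) • ((A i ⊗ₖ 1) * (1 ⊗ₖ B j)) by
      simp only [hS, kronecker_one_mul_one_kronecker]]
    refine sum_sq_sum_smul_mul_eq_card (fun i k hik => ?_) (fun j => ?_)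
      (fun i j => commute_kronecker_one_one_kronecker (A i) (B j))
      (fun i => by rw [← mul_kronecker_mul, hA2 i, mul_one, one_kronecker_one])
      (fun j => by rw [← mul_kronecker_mul, hB2 j, mul_one, one_kronecker_one])
    · exact_mod_cast congrArg Complex.ofReal (horth i k hik)
    · exact_mod_cast congrArg Complex.ofReal (hcol j)
  rw [one_kronecker_one] at hN ⊢
  simp only [hN, ← star_eq_conjTranspose, sum_comm (γ := Fin m), ← hS]
  rw [sum_star_one_sub_mul_one_sub hS_sa hS_sq, Fintype.card_fin, two_mul, smul_add,
    ← add_smul, Nat.cast_smul_eq_nsmul, nsmul_one]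
  norm_num
end

section
/- Let h be an m×n ROCN matrix (m ≤ n). For all Hermitian operators A_1,…,A_m on a finite-dimensional complex Hilbert space H_A and B_1,…,B_n on a finite-dimensional complex Hilbert space H_B with A_i² = 1 and B_j² = 1, and every unit vector ψ ∈ H_A ⊗ H_B, one has ⟨ψ| Σ_{i=1}^m Σ_{j=1}^n h_{ij} (A_i ⊗ B_j) |ψ⟩ ≤ n. (Upper bound part of Proposition 1: the quantum value of the ROCN Bell functional is at most n.) -/
/-!
With `X j = ∑ i, h i j • (A i ⊗ 1)` and `Y j = 1 ⊗ B j` the Bell operator is `∑ j, X j * Y j`.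
Row orthogonality, `A i ^ 2 = 1` and column normalization give `∑ j, X j ^ 2 = n`, and
`∑ j, Y j ^ 2 = n` because `B j ^ 2 = 1`. For Hermitian `X`, `Y`, positivity of `(X - Y)ᴴ (X - Y)`
gives `2 Re ⟨ψ|XY|ψ⟩ ≤ ⟨ψ|X²|ψ⟩ + ⟨ψ|Y²|ψ⟩`; summed over `j`, this bounds twice the Bell value
by `2n`.
-/

open Matrix Kronecker Finset

open scoped ComplexOrder

theorem sum_mul_self_sum_smul_eq_card {ι κ R : Type*} [Fintype ι] [Fintype κ] [Ring R] [Algebra ℝ R]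
    (h : ι → κ → ℝ) (horth : ∀ i k, i ≠ k → ∑ j, h i j * h k j = 0)
    (hcol : ∀ j, ∑ i, h i j ^ 2 = 1) (a : ι → R) (ha : ∀ i, a i * a i = 1) :
    ∑ j, (∑ i, h i j • a i) * (∑ i, h i j • a i) = Fintype.card κ := by
  calc ∑ j, (∑ i, h i j • a i) * (∑ i, h i j • a i)
      = ∑ i, ∑ k, (∑ j, h i j * h k j) • (a i * a k) := by
        simp only [sum_mul_sum, smul_mul_smul_comm, sum_smul]
        rw [sum_comm]; exact sum_congr rfl fun _ _ => sum_comm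
    _ = ∑ i, (∑ j, h i j ^ 2) • (1 : R) := by
        refine sum_congr rfl fun i _ => ?_
        rw [sum_eq_single i (fun k _ hki => by rw [horth i k hki.symm, zero_smul]) (by simp),
          ha i]
        simp only [sq]
    _ = Fintype.card κ := by
        rw [← sum_smul, sum_comm]
        simp [hcol, Nat.cast_smul_eq_nsmul]

section Expectation

variable {ι : Type*} [Fintype ι]

theorem two_mul_re_dotProduct_mul_mulVec_le {X Y : Matrix ι ι ℂ} (hX : X.IsHermitian)
    (hY : Y.IsHermitian) (ψ : ι → ℂ) :
    2 * (star ψ ⬝ᵥ (X * Y) *ᵥ ψ).re ≤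
      (star ψ ⬝ᵥ (X * X) *ᵥ ψ).re + (star ψ ⬝ᵥ (Y * Y) *ᵥ ψ).re := by
  have hsq : 0 ≤ (star ψ ⬝ᵥ ((X - Y)ᴴ * (X - Y)) *ᵥ ψ).re :=
    (Complex.nonneg_iff.mp ((posSemidef_conjTranspose_mul_self _).dotProduct_mulVec_nonneg ψ)).1
  have hswap : star ψ ⬝ᵥ (Y * X) *ᵥ ψ = star (star ψ ⬝ᵥ (X * Y) *ᵥ ψ) := by
    rw [star_dotProduct, star_mulVec, conjTranspose_mul, hX.eq, hY.eq, ← dotProduct_mulVec]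
  rw [conjTranspose_sub, hX.eq, hY.eq] at hsq
  simp only [sub_mul, mul_sub, sub_mulVec, dotProduct_sub, Complex.sub_re, hswap,
    Complex.star_def, Complex.conj_re] at hsq
  linarith

theorem two_mul_re_sum_mul_le {κ : Type*} [Fintype κ] {X Y : κ → Matrix ι ι ℂ}
    (hX : ∀ j, (X j).IsHermitian) (hY : ∀ j, (Y j).IsHermitian) (ψ : ι → ℂ) :
    2 * (star ψ ⬝ᵥ (∑ j, X j * Y j) *ᵥ ψ).re ≤
      (star ψ ⬝ᵥ (∑ j, X j * X j) *ᵥ ψ).re + (star ψ ⬝ᵥ (∑ j, Y j * Y j) *ᵥ ψ).re := by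
  simp only [sum_mulVec, dotProduct_sum, Complex.re_sum, mul_sum, ← sum_add_distrib]
  exact sum_le_sum fun j _ => two_mul_re_dotProduct_mul_mulVec_le (hX j) (hY j) ψ

end Expectation

/-- For an ROCN matrix `h`, Hermitian involutions `A i` and `B j`, and
any unit vector `ψ`, we have `⟨ψ| Σᵢⱼ hᵢⱼ (Aᵢ ⊗ Bⱼ) |ψ⟩ ≤ n` (upper bound on the quantum
value of the ROCN Bell functional). -/
theorem rocn_quantum_bound {m n dA dB : ℕ}
    (h : Matrix (Fin m) (Fin n) ℝ) (hROCN : IsROCN h)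
    (A : Fin m → Matrix (Fin dA) (Fin dA) ℂ)
    (B : Fin n → Matrix (Fin dB) (Fin dB) ℂ)
    (hAH : ∀ i, (A i)ᴴ = A i) (hBH : ∀ j, (B j)ᴴ = B j)
    (hA2 : ∀ i, A i * A i = 1) (hB2 : ∀ j, B j * B j = 1)
    (ψ : Fin dA × Fin dB → ℂ) (hψ : star ψ ⬝ᵥ ψ = 1) :
    (star ψ ⬝ᵥ (∑ i, ∑ j, (h i j : ℂ) • (A i ⊗ₖ B j)).mulVec ψ).re ≤ n := by
  obtain ⟨-, -, horth, hcol⟩ := hROCN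
  set X : Fin n → Matrix (Fin dA × Fin dB) (Fin dA × Fin dB) ℂ :=
    fun j => ∑ i, h i j • (A i ⊗ₖ 1)
  set Y : Fin n → Matrix (Fin dA × Fin dB) (Fin dA × Fin dB) ℂ := fun j => 1 ⊗ₖ B j
  have hbell : ∑ i, ∑ j, (h i j : ℂ) • (A i ⊗ₖ B j) = ∑ j, X j * Y j := by
    rw [sum_comm]
    refine sum_congr rfl fun j _ => ?_
    simp only [X, Y, sum_mul, smul_mul_assoc, ← mul_kronecker_mul, mul_one, one_mul,
      Complex.coe_smul]
  have hXsq : ∑ j, X j * X j = n := by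
    simpa only [Fintype.card_fin] using
      sum_mul_self_sum_smul_eq_card h horth hcol (fun i => A i ⊗ₖ (1 : Matrix (Fin dB) (Fin dB) ℂ))
        fun i => by rw [← mul_kronecker_mul, hA2, mul_one, one_kronecker_one]
  have hYsq : ∑ j, Y j * Y j = n := by
    simp [Y, ← mul_kronecker_mul, hB2]
  have hXH : ∀ j, (X j).IsHermitian := fun j =>
    isSelfAdjoint_sum _ fun i _ => IsHermitian.smul
      (by rw [IsHermitian, conjTranspose_kronecker, hAH, conjTranspose_one]) rfl
  have hYH : ∀ j, (Y j).IsHermitian := fun j => by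
    rw [IsHermitian, conjTranspose_kronecker, hBH, conjTranspose_one]
  have hbound := two_mul_re_sum_mul_le hXH hYH ψ
  rw [hXsq, hYsq] at hbound
  simp only [natCast_mulVec, dotProduct_smul, hψ, smul_eq_mul, mul_one,
    Complex.natCast_re] at hbound
  rw [hbell]
  linarith
end

section
/- Let h be an m×n ROCN matrix (m ≤ n), let A_1,…,A_m be Hermitian d×d complex matrices satisfying A_i A_k + A_k A_i = 2δ_{ik}·I, and set B_j = Σ_{i=1}^m h_{ij} A_i^T for j = 1,…,n. Let |Φ_d⟩ = (1/√d) Σ_{k=1}^d |k⟩⊗|k⟩ ∈ ℂ^d ⊗ ℂ^d be the maximally entangled state. Then for every j, (Σ_{i=1}^m h_{ij} A_i ⊗ B_j)|Φ_d⟩ = |Φ_d⟩, and consequently ⟨Φ_d| Σ_{i=1}^m Σ_{j=1}^n h_{ij} (A_i ⊗ B_j) |Φ_d⟩ = n. (Attainability part of Proposition 1: the maximal quantum value β_Q^h = n of the ROCN Bell functional is achieved by the reference strategy.) -/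
/-!
For a column `c = h_{·j}`, the anticommutation relations give `(Σᵢ cᵢ Aᵢ)² = (Σᵢ cᵢ²) • 1 = 1`.
Since `Bⱼ = (Σᵢ cᵢ Aᵢ)ᵀ`, the operator `Σᵢ hᵢⱼ Aᵢ ⊗ Bⱼ` is `C ⊗ Cᵀ` with `C² = 1`, and the
transpose trick `(X ⊗ Yᵀ)|Φ_d⟩ = (XY ⊗ 1)|Φ_d⟩` shows that it fixes `|Φ_d⟩`. Summing the
expectation values over the `n` columns of the unit vector `|Φ_d⟩` gives `n`.
-/

open Matrix Kronecker Finset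

/-- The maximally entangled state `|Φ_d⟩ = (1/√d) Σₖ |k⟩ ⊗ |k⟩` on `ℂ^d ⊗ ℂ^d`. -/
noncomputable def maxEnt (d : ℕ) : Fin d × Fin d → ℂ :=
  fun p => if p.1 = p.2 then ((1 / Real.sqrt d : ℝ) : ℂ) else 0

theorem Matrix.sum_kronecker {ι l m n p : Type*} [Fintype ι] {R : Type*} [CommSemiring R]
    (M : ι → Matrix l m R) (N : Matrix n p R) :
    (∑ i, M i) ⊗ₖ N = ∑ i, M i ⊗ₖ N := by
  ext ⟨a, b⟩ ⟨c, e⟩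
  simp [Matrix.sum_apply, Finset.sum_mul]

theorem kronecker_transpose_mulVec_maxEnt {d : ℕ} {X Y : Matrix (Fin d) (Fin d) ℂ}
    (hXY : X * Y = 1) : (X ⊗ₖ Yᵀ) *ᵥ maxEnt d = maxEnt d := by
  ext ⟨a, b⟩
  have hab := congrFun (congrFun hXY a) b
  simp only [mul_apply, one_apply] at hab
  simp only [mulVec, dotProduct, maxEnt, Fintype.sum_prod_type, kroneckerMap_apply,
    transpose_apply, mul_ite, mul_zero, Finset.sum_ite_eq, Finset.mem_univ, if_true]
  rw [← Finset.sum_mul, hab]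
  split_ifs <;> simp

theorem star_maxEnt_dotProduct_maxEnt {d : ℕ} (hd : 0 < d) :
    star (maxEnt d) ⬝ᵥ maxEnt d = 1 := by
  have hentry : ∀ a b : Fin d, star (maxEnt d (a, b)) * maxEnt d (a, b)
      = if a = b then (d : ℂ)⁻¹ else 0 := by
    intro a b
    unfold maxEnt
    split_ifs
    · rw [Complex.star_def, Complex.conj_ofReal, ← Complex.ofReal_mul, div_mul_div_comm,
        one_mul, Real.mul_self_sqrt (Nat.cast_nonneg d)]
      simp
    · simp
  simp only [dotProduct, Pi.star_apply, Fintype.sum_prod_type, hentry, Finset.sum_ite_eq,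
    Finset.mem_univ, if_true, Finset.sum_const, Finset.card_univ, Fintype.card_fin, nsmul_eq_mul]
  exact mul_inv_cancel₀ (Nat.cast_ne_zero.mpr hd.ne')

theorem anticomm_sum_smul_mul_self {ι 𝕜 M : Type*} [Fintype ι] [DecidableEq ι] [Field 𝕜]
    [CharZero 𝕜] [Ring M] [Algebra 𝕜 M] (A : ι → M)
    (hA : ∀ i k, A i * A k + A k * A i = if i = k then (2 : 𝕜) • 1 else 0) (c : ι → 𝕜) :
    (∑ i, c i • A i) * (∑ i, c i • A i) = (∑ i, c i ^ 2) • 1 := by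
  set C := ∑ i, c i • A i
  have hC : C * C = ∑ i, ∑ k, (c i * c k) • (A i * A k) := by
    simp only [C, Finset.sum_mul_sum, smul_mul_smul_comm]
  have hC' : C * C = ∑ i, ∑ k, (c i * c k) • (A k * A i) := by
    rw [hC, Finset.sum_comm]
    exact Finset.sum_congr rfl fun i _ => Finset.sum_congr rfl fun k _ => by rw [mul_comm]
  have h2 : (2 : 𝕜) • (C * C) = (2 : 𝕜) • ((∑ i, c i ^ 2) • 1) := by
    calc (2 : 𝕜) • (C * C) = ∑ i, ∑ k, (c i * c k) • (A i * A k + A k * A i) := by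
          rw [two_smul]
          nth_rewrite 1 [hC]
          rw [hC']
          simp only [smul_add, Finset.sum_add_distrib]
      _ = (2 : 𝕜) • ((∑ i, c i ^ 2) • 1) := by
          simp only [hA, smul_ite, smul_zero, Finset.sum_ite_eq, Finset.mem_univ, if_true,
            smul_smul, ← Finset.sum_smul, ← Finset.sum_mul, sq, mul_comm (2 : 𝕜)]
  exact smul_right_injective M two_ne_zero h2

theorem rocn_bound_attained_general {m n d : ℕ} (hd : 0 < d)
    (h : Matrix (Fin m) (Fin n) ℝ) (hROCN : IsROCN h)
    (A : Fin m → Matrix (Fin d) (Fin d) ℂ)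
    (hCAR : ∀ i k, A i * A k + A k * A i = if i = k then (2 : ℂ) • 1 else 0)
    (B : Fin n → Matrix (Fin d) (Fin d) ℂ)
    (hB : ∀ j, B j = ∑ i, (h i j : ℂ) • (A i)ᵀ) :
    (∀ j, (∑ i, (h i j : ℂ) • (A i ⊗ₖ B j)).mulVec (maxEnt d) = maxEnt d) ∧
    star (maxEnt d) ⬝ᵥ (∑ i, ∑ j, (h i j : ℂ) • (A i ⊗ₖ B j)).mulVec (maxEnt d)
      = (n : ℂ) := by
  obtain ⟨-, -, -, hcol⟩ := hROCN
  have hfix : ∀ j, (∑ i, (h i j : ℂ) • (A i ⊗ₖ B j)).mulVec (maxEnt d) = maxEnt d := by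
    intro j
    have hBj : B j = (∑ i, (h i j : ℂ) • A i)ᵀ := by
      simp only [hB j, transpose_sum, transpose_smul]
    have hsq : (∑ i, (h i j : ℂ) • A i) * (∑ i, (h i j : ℂ) • A i) = 1 := by
      have hunit : ∑ i, (h i j : ℂ) ^ 2 = 1 := by exact_mod_cast hcol j
      rw [anticomm_sum_smul_mul_self A hCAR, hunit, one_smul]
    simp only [← smul_kronecker, ← sum_kronecker, hBj]
    exact kronecker_transpose_mulVec_maxEnt hsq
  refine ⟨hfix, ?_⟩
  rw [Finset.sum_comm, sum_mulVec, dotProduct_sum]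
  simp only [hfix, star_maxEnt_dotProduct_maxEnt hd, sum_const, card_univ, Fintype.card_fin,
    nsmul_eq_mul, mul_one]

/-- (Attainability part of Proposition 1.) For an ROCN matrix `h` and
pairwise anticommuting Hermitian involutions `A i` on `ℂ^d`, set `Bⱼ = Σᵢ hᵢⱼ Aᵢᵀ`. Then
for every `j`, `(Σᵢ hᵢⱼ Aᵢ ⊗ Bⱼ)|Φ_d⟩ = |Φ_d⟩`, and consequently
`⟨Φ_d| Σᵢⱼ hᵢⱼ (Aᵢ ⊗ Bⱼ) |Φ_d⟩ = n`. -/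
theorem rocn_bound_attained {m n d : ℕ} (hd : 0 < d)
    (h : Matrix (Fin m) (Fin n) ℝ) (hROCN : IsROCN h)
    (A : Fin m → Matrix (Fin d) (Fin d) ℂ)
    (hAH : ∀ i, (A i)ᴴ = A i)
    (hCAR : ∀ i k, A i * A k + A k * A i = if i = k then (2 : ℂ) • 1 else 0)
    (B : Fin n → Matrix (Fin d) (Fin d) ℂ)
    (hB : ∀ j, B j = ∑ i, (h i j : ℂ) • (A i)ᵀ) :
    (∀ j, (∑ i, (h i j : ℂ) • (A i ⊗ₖ B j)).mulVec (maxEnt d) = maxEnt d) ∧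
    star (maxEnt d) ⬝ᵥ (∑ i, ∑ j, (h i j : ℂ) • (A i ⊗ₖ B j)).mulVec (maxEnt d)
      = (n : ℂ) :=
  rocn_bound_attained_general hd h hROCN A hCAR B hB
end

section
/- Let h be an m×n ROCN matrix (m ≤ n), and define β_C^h = max over a ∈ {−1,1}^m of Σ_{j=1}^n |Σ_{i=1}^m h_{ij} a_i|. Then β_C^h ≤ n, and β_C^h = n if and only if there exists a ∈ {−1,1}^m such that Σ_{1 ≤ i < k ≤ m} h_{ij} h_{kj} a_i a_k = 0 for every j ∈ {1,…,n}. In particular, the ROCN Bell inequality exhibits a quantum advantage (β_C^h < β_Q^h = n) exactly when no such sign vector a exists. -/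
open Finset

/-- The classical bound `β_C^h = max_{a ∈ {±1}^m} Σⱼ |Σᵢ hᵢⱼ aᵢ|` of the correlation
Bell functional determined by `h`. -/
noncomputable def betaC {m n : ℕ} (h : Matrix (Fin m) (Fin n) ℝ) : ℝ :=
  sSup {x : ℝ | ∃ a : Fin m → ℝ, (∀ i, a i = 1 ∨ a i = -1) ∧
    x = ∑ j, |∑ i, h i j * a i|}

/-! Write `cⱼ = Σᵢ hᵢⱼ aᵢ` for a sign vector `a`. Since `aᵢ² = 1` and the columns are normalized,
`cⱼ² = 1 + 2 Σ_{i<k} hᵢⱼ hₖⱼ aᵢ aₖ`, and summing over `j` the cross terms cancel by row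
orthogonality, so `Σⱼ cⱼ² = n`. Then `Σⱼ (|cⱼ| - 1)² = 2 (n - Σⱼ |cⱼ|)`, which gives `Σⱼ |cⱼ| ≤ n`
with equality iff every `|cⱼ| = 1`, i.e. iff every cross term vanishes. The supremum defining
`β_C^h` is over finitely many sign vectors, so it is attained. -/

lemma sq_sum_eq_sum_sq_add_two_mul_sum_lt {ι R : Type*} [Fintype ι] [LinearOrder ι]
    [CommSemiring R] (f : ι → R) :
    (∑ i, f i) ^ 2 = ∑ i, f i ^ 2 + 2 * ∑ i, ∑ k, (if i < k then f i * f k else 0) := by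
  set g : ι → ι → R := fun i k => if i < k then f i * f k else 0
  have hsplit : ∀ i k, f i * f k = g i k + g k i + if i = k then f i * f k else 0 := by
    intro i k
    rcases lt_trichotomy i k with hik | rfl | hki
    · simp [g, hik, hik.not_gt, hik.ne]
    · simp [g]
    · simp [g, hki, hki.not_gt, hki.ne', mul_comm]
  have hdiag : ∑ i, ∑ k, (if i = k then f i * f k else 0) = ∑ i, f i ^ 2 := by
    simp only [sum_ite_eq, mem_univ, if_true, sq]
  calc (∑ i, f i) ^ 2 = ∑ i, ∑ k, f i * f k := by rw [sq, sum_mul_sum]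
    _ = ∑ i, ∑ k, (g i k + g k i + if i = k then f i * f k else 0) :=
      sum_congr rfl fun i _ => sum_congr rfl fun k _ => hsplit i k
    _ = ∑ i, f i ^ 2 + 2 * ∑ i, ∑ k, g i k := by
      simp only [sum_add_distrib]
      rw [sum_comm (f := fun i k => g k i), hdiag]
      ring

section SumSqEqCard

variable {κ : Type*} [Fintype κ] {x : κ → ℝ}

lemma sum_abs_sub_one_sq_eq (hx : ∑ j, x j ^ 2 = Fintype.card κ) :
    ∑ j, (|x j| - 1) ^ 2 = 2 * (Fintype.card κ - ∑ j, |x j|) := by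
  simp only [sub_sq, sq_abs, one_pow, mul_one, sum_add_distrib, sum_sub_distrib, ← mul_sum, hx,
    sum_const, card_univ, nsmul_eq_mul]
  ring

lemma sum_abs_le_card_of_sum_sq_eq_card (hx : ∑ j, x j ^ 2 = Fintype.card κ) :
    ∑ j, |x j| ≤ Fintype.card κ := by
  have := sum_abs_sub_one_sq_eq hx
  have : 0 ≤ ∑ j, (|x j| - 1) ^ 2 := sum_nonneg fun j _ => sq_nonneg _
  linarith

lemma sum_abs_eq_card_iff_of_sum_sq_eq_card (hx : ∑ j, x j ^ 2 = Fintype.card κ) :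
    ∑ j, |x j| = Fintype.card κ ↔ ∀ j, |x j| = 1 := by
  rw [eq_comm, ← sub_eq_zero, ← mul_eq_zero_iff_left two_ne_zero, ← sum_abs_sub_one_sq_eq hx,
    sum_eq_zero_iff_of_nonneg fun j _ => sq_nonneg _]
  simp [sub_eq_zero]

end SumSqEqCard

section Correlation

variable {ι κ : Type*} [Fintype ι] [LinearOrder ι]

def crossTerm (h : Matrix ι κ ℝ) (a : ι → ℝ) (j : κ) : ℝ :=
  ∑ i, ∑ k, if i < k then h i j * h k j * a i * a k else 0

lemma sq_sum_mul_eq_sum_sq_add_two_mul_crossTerm (h : Matrix ι κ ℝ) {a : ι → ℝ}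
    (ha : ∀ i, a i ^ 2 = 1) (j : κ) :
    (∑ i, h i j * a i) ^ 2 = ∑ i, h i j ^ 2 + 2 * crossTerm h a j := by
  rw [sq_sum_eq_sum_sq_add_two_mul_sum_lt, crossTerm]
  simp only [mul_pow, ha, mul_one, mul_comm, mul_left_comm]

variable [Fintype κ] {h : Matrix ι κ ℝ}

lemma sum_crossTerm_eq_zero (horth : ∀ i k, i ≠ k → ∑ j, h i j * h k j = 0) (a : ι → ℝ) :
    ∑ j, crossTerm h a j = 0 := by
  unfold crossTerm
  rw [sum_comm]
  refine sum_eq_zero fun i _ => ?_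
  rw [sum_comm]
  refine sum_eq_zero fun k _ => ?_
  split_ifs with hik
  · simp only [← sum_mul, horth i k hik.ne, zero_mul]
  · exact sum_const_zero

lemma sum_sq_sum_mul_eq_card (horth : ∀ i k, i ≠ k → ∑ j, h i j * h k j = 0)
    (hcol : ∀ j, ∑ i, h i j ^ 2 = 1) {a : ι → ℝ} (ha : ∀ i, a i ^ 2 = 1) :
    ∑ j, (∑ i, h i j * a i) ^ 2 = Fintype.card κ := by
  simp only [sq_sum_mul_eq_sum_sq_add_two_mul_crossTerm h ha, hcol, sum_add_distrib, ← mul_sum,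
    sum_crossTerm_eq_zero horth, sum_const, card_univ, nsmul_eq_mul, mul_one, mul_zero, add_zero]

lemma sum_abs_sum_mul_le_card (horth : ∀ i k, i ≠ k → ∑ j, h i j * h k j = 0)
    (hcol : ∀ j, ∑ i, h i j ^ 2 = 1) {a : ι → ℝ} (ha : ∀ i, a i ^ 2 = 1) :
    ∑ j, |∑ i, h i j * a i| ≤ Fintype.card κ :=
  sum_abs_le_card_of_sum_sq_eq_card (sum_sq_sum_mul_eq_card horth hcol ha)

lemma sum_abs_sum_mul_eq_card_iff (horth : ∀ i k, i ≠ k → ∑ j, h i j * h k j = 0)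
    (hcol : ∀ j, ∑ i, h i j ^ 2 = 1) {a : ι → ℝ} (ha : ∀ i, a i ^ 2 = 1) :
    ∑ j, |∑ i, h i j * a i| = Fintype.card κ ↔ ∀ j, crossTerm h a j = 0 := by
  rw [sum_abs_eq_card_iff_of_sum_sq_eq_card (sum_sq_sum_mul_eq_card horth hcol ha)]
  refine forall_congr' fun j => ?_
  rw [← abs_one, ← sq_eq_sq_iff_abs_eq_abs, sq_sum_mul_eq_sum_sq_add_two_mul_crossTerm h ha,
    hcol]
  simp

end Correlation

lemma finite_setOf_exists_sign_eq {ι : Type*} [Finite ι] (F : (ι → ℝ) → ℝ) :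
    {x : ℝ | ∃ a : ι → ℝ, (∀ i, a i = 1 ∨ a i = -1) ∧ x = F a}.Finite := by
  refine ((Set.Finite.pi' fun _ => (Set.finite_singleton (-1 : ℝ)).insert 1).image F).subset ?_
  rintro x ⟨a, ha, rfl⟩
  exact ⟨a, ha, rfl⟩

lemma csSup_eq_iff_mem_of_finite {α : Type*} [ConditionallyCompleteLinearOrder α] {s : Set α}
    (hne : s.Nonempty) (hs : s.Finite) {b : α} (hb : b ∈ upperBounds s) :
    sSup s = b ↔ b ∈ s :=
  ⟨fun h => h ▸ hne.csSup_mem hs, fun h => IsGreatest.csSup_eq ⟨h, hb⟩⟩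

section BetaC

variable {m n : ℕ} {h : Matrix (Fin m) (Fin n) ℝ}

lemma betaC_le (horth : ∀ i k, i ≠ k → ∑ j, h i j * h k j = 0)
    (hcol : ∀ j, ∑ i, h i j ^ 2 = 1) : betaC h ≤ n := by
  refine csSup_le ⟨_, fun _ => 1, fun _ => Or.inl rfl, rfl⟩ ?_
  rintro x ⟨a, ha, rfl⟩
  simpa using sum_abs_sum_mul_le_card horth hcol fun i => sq_eq_one_iff.mpr (ha i)

lemma betaC_eq_card_iff (horth : ∀ i k, i ≠ k → ∑ j, h i j * h k j = 0)
    (hcol : ∀ j, ∑ i, h i j ^ 2 = 1) :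
    betaC h = n ↔ ∃ a : Fin m → ℝ, (∀ i, a i = 1 ∨ a i = -1) ∧ ∀ j, crossTerm h a j = 0 := by
  unfold betaC
  refine (csSup_eq_iff_mem_of_finite ?_ (finite_setOf_exists_sign_eq _) ?_).trans ?_
  · exact ⟨_, fun _ => 1, fun _ => Or.inl rfl, rfl⟩
  · rintro x ⟨a, ha, rfl⟩
    simpa using sum_abs_sum_mul_le_card horth hcol fun i => sq_eq_one_iff.mpr (ha i)
  · refine exists_congr fun a => and_congr_right fun ha => eq_comm.trans ?_
    simpa using sum_abs_sum_mul_eq_card_iff horth hcol fun i => sq_eq_one_iff.mpr (ha i)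

end BetaC

/-- For an ROCN matrix `h`: `β_C^h ≤ n`; `β_C^h = n` iff there is a sign
vector `a ∈ {±1}^m` with `Σ_{i<k} hᵢⱼ hₖⱼ aᵢ aₖ = 0` for every column `j`; and there is a
quantum advantage `β_C^h < n = β_Q^h` exactly when no such sign vector exists. -/
theorem rocn_classical_bound {m n : ℕ}
    (h : Matrix (Fin m) (Fin n) ℝ) (hROCN : IsROCN h) :
    betaC h ≤ n ∧
    (betaC h = n ↔ ∃ a : Fin m → ℝ, (∀ i, a i = 1 ∨ a i = -1) ∧
      ∀ j, ∑ i, ∑ k, (if i < k then h i j * h k j * a i * a k else 0) = 0) ∧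
    (betaC h < n ↔ ¬ ∃ a : Fin m → ℝ, (∀ i, a i = 1 ∨ a i = -1) ∧
      ∀ j, ∑ i, ∑ k, (if i < k then h i j * h k j * a i * a k else 0) = 0) := by
  obtain ⟨-, -, horth, hcol⟩ := hROCN
  have hle := betaC_le horth hcol
  have heq := betaC_eq_card_iff horth hcol
  exact ⟨hle, heq, hle.lt_iff_ne.trans (not_congr heq)⟩
end

section
/- If there exist m ≥ 2 Hermitian D×D complex matrices A_1,…,A_m satisfying A_i A_k + A_k A_i = 2δ_{ik}·I for all i,k (pairwise anticommuting Hermitian involutions), then 2^⌊m/2⌋ divides D. -/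
open Matrix


namespace CliffordDiv

variable {D : ℕ}

lemma trace_idem (E : Matrix (Fin D) (Fin D) ℂ) (h : E * E = E) :
    ∃ r : ℕ, E.trace = (r : ℂ) := by
  let f := Matrix.toLin' E
  have hf : f ∘ₗ f = f := by
    simp only [f, ← Matrix.toLin'_mul, h]
  obtain ⟨p, hp⟩ := (LinearMap.isProj_iff_isIdempotentElem f).mpr hf
  refine ⟨Module.finrank ℂ p, ?_⟩
  have h1 := LinearMap.IsProj.trace hp
  have h2 : LinearMap.trace ℂ (Fin D → ℂ) f = E.trace := by
    rw [LinearMap.trace_eq_matrix_trace ℂ (Pi.basisFun ℂ (Fin D)) f]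
    congr 1
    rw [LinearMap.toMatrix_eq_toMatrix']
    exact LinearMap.toMatrix'_toLin' E
  rw [← h2, h1]

noncomputable def Q (P : ℕ → Matrix (Fin D) (Fin D) ℂ) : ℕ → Matrix (Fin D) (Fin D) ℂ
  | 0 => 1
  | n + 1 => Q P n * (1 + P n)

noncomputable def PB (P : ℕ → Matrix (Fin D) (Fin D) ℂ) :
    ℕ → ℕ → (ℕ → Bool) → Matrix (Fin D) (Fin D) ℂ
  | _, 0, _ => 1
  | n, d + 1, ε => (if ε n then P n else 1) * PB P (n + 1) d ε

variable {P : ℕ → Matrix (Fin D) (Fin D) ℂ}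

lemma PB_congr (d : ℕ) : ∀ (n : ℕ) (ε ε' : ℕ → Bool),
    (∀ j, n ≤ j → j < n + d → ε j = ε' j) → PB P n d ε = PB P n d ε' := by
  induction d with
  | zero => intro n ε ε' _; rfl
  | succ d ih =>
    intro n ε ε' h
    simp only [PB]
    rw [h n le_rfl (by omega), ih (n + 1) ε ε' fun j h1 h2 => h j (by omega) (by omega)]

lemma PB_false (d : ℕ) : ∀ (n : ℕ) (ε : ℕ → Bool),
    (∀ j, n ≤ j → j < n + d → ε j = false) → PB P n d ε = 1 := by
  induction d with
  | zero => intro n ε _; rfl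
  | succ d ih =>
    intro n ε h
    simp only [PB]
    rw [h n le_rfl (by omega), ih (n + 1) ε fun j h1 h2 => h j (by omega) (by omega)]
    simp

lemma B_slide (B : Matrix (Fin D) (Fin D) ℂ) (j₀ : ℕ)
    (hanti : B * P j₀ = -(P j₀ * B))
    (hcomm : ∀ j, j ≠ j₀ → B * P j = P j * B)
    (ε : ℕ → Bool) (hε : ε j₀ = true) (d : ℕ) :
    ∀ n, B * PB P n d ε = (if n ≤ j₀ ∧ j₀ < n + d then (-1 : ℂ) else 1) • (PB P n d ε * B) := by
  induction d with
  | zero =>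
    intro n
    rw [if_neg (by omega)]
    simp [PB]
  | succ d ih =>
    intro n
    simp only [PB]
    by_cases hn : j₀ = n
    · subst hn
      rw [hε, if_pos rfl]
      have h1 := ih (j₀ + 1)
      rw [if_neg (by omega), one_smul] at h1
      rw [← mul_assoc, hanti, neg_mul, mul_assoc, h1, if_pos (by omega), neg_one_smul, mul_assoc]
    · have hF : B * (if ε n then P n else 1) = (if ε n then P n else 1) * B := by
        split
        · exact hcomm n fun h => hn h.symm
        · rw [one_mul, mul_one]
      have h1 := ih (n + 1)
      rw [← mul_assoc, hF, mul_assoc, h1, mul_smul_comm, ← mul_assoc]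
      congr 1
      by_cases h : n + 1 ≤ j₀ ∧ j₀ < n + 1 + d
      · rw [if_pos h, if_pos (by omega)]
      · rw [if_neg h, if_neg (by omega)]

lemma PB_trace_zero (B : Matrix (Fin D) (Fin D) ℂ) (j₀ : ℕ)
    (hB2 : B * B = 1)
    (hanti : B * P j₀ = -(P j₀ * B))
    (hcomm : ∀ j, j ≠ j₀ → B * P j = P j * B)
    (ε : ℕ → Bool) (hε : ε j₀ = true) (d n : ℕ) (h1 : n ≤ j₀) (h2 : j₀ < n + d) :
    Matrix.trace (PB P n d ε) = 0 := by
  have hs := B_slide B j₀ hanti hcomm ε hε d n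
  rw [if_pos ⟨h1, h2⟩, neg_one_smul] at hs
  have key : Matrix.trace (PB P n d ε) = - Matrix.trace (PB P n d ε) := by
    conv_lhs => rw [show PB P n d ε = B * (B * PB P n d ε) by rw [← mul_assoc, hB2, one_mul]]
    rw [hs, mul_neg, trace_neg, Matrix.trace_mul_comm, mul_assoc, hB2, mul_one]
  linear_combination key / 2

lemma P_comm_Q (hPP : ∀ i j, P i * P j = P j * P i) (j : ℕ) :
    ∀ n, P j * Q P n = Q P n * P j := by
  intro n
  induction n with
  | zero => simp [Q]
  | succ n ih =>
    simp only [Q]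
    have hx : P j * (1 + P n) = (1 + P n) * P j := by
      rw [mul_add, add_mul, mul_one, one_mul, hPP j n]
    rw [← mul_assoc, ih, mul_assoc, hx, ← mul_assoc]

lemma Q_sq (hPP : ∀ i j, P i * P j = P j * P i) (hP2 : ∀ i, P i * P i = 1) :
    ∀ n, Q P n * Q P n = (2 : ℂ) ^ n • Q P n := by
  intro n
  induction n with
  | zero => simp [Q]
  | succ n ih =>
    have hc : (1 + P n) * Q P n = Q P n * (1 + P n) := by
      rw [add_mul, mul_add, one_mul, mul_one, P_comm_Q hPP]
    have hsq : (1 + P n) * (1 + P n) = (2 : ℂ) • (1 + P n) := by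
      simp only [mul_add, add_mul, one_mul, mul_one, hP2 n, two_smul, smul_add]
      abel
    simp only [Q]
    calc Q P n * (1 + P n) * (Q P n * (1 + P n))
        = Q P n * ((1 + P n) * Q P n) * (1 + P n) := by rw [mul_assoc, mul_assoc, mul_assoc]
      _ = Q P n * Q P n * ((1 + P n) * (1 + P n)) := by
          rw [hc, mul_assoc, mul_assoc, mul_assoc]
      _ = ((2 : ℂ) ^ n • Q P n) * ((2 : ℂ) • (1 + P n)) := by rw [ih, hsq]
      _ = (2 : ℂ) ^ (n + 1) • (Q P n * (1 + P n)) := by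
          rw [smul_mul_assoc, mul_smul_comm, smul_smul, pow_succ]

lemma trace_QPB (k : ℕ)
    (hPP : ∀ i j, P i * P j = P j * P i)
    (B : ℕ → Matrix (Fin D) (Fin D) ℂ)
    (hB2 : ∀ i, i < k → B i * B i = 1)
    (hanti : ∀ i, i < k → B i * P i = -(P i * B i))
    (hcomm : ∀ i j, i ≠ j → B i * P j = P j * B i) :
    ∀ n, n ≤ k → ∀ ε : ℕ → Bool, Matrix.trace (Q P n * PB P n (k - n) ε) =
      if ∀ j ∈ Finset.Ico n k, ε j = false then (D : ℂ) else 0 := by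
  intro n
  induction n with
  | zero =>
    intro _ ε
    simp only [Q, one_mul, Nat.sub_zero]
    by_cases hall : ∀ j ∈ Finset.Ico 0 k, ε j = false
    · rw [if_pos hall, PB_false k 0 ε fun j hj1 hj2 => hall j (Finset.mem_Ico.mpr ⟨hj1, by omega⟩)]
      simp
    · rw [if_neg hall]
      push_neg at hall
      obtain ⟨j₀, hj₀m, hj₀⟩ := hall
      rw [Finset.mem_Ico] at hj₀m
      exact PB_trace_zero (B j₀) j₀ (hB2 j₀ hj₀m.2) (hanti j₀ hj₀m.2)
        (fun j hj => hcomm j₀ j (Ne.symm hj)) ε (by simpa using hj₀) k 0 (by omega) (by omega)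
  | succ n ih =>
    intro hnk ε
    have hd : k - n = (k - (n + 1)) + 1 := by omega
    set d := k - (n + 1) with hdd
    set εT : ℕ → Bool := fun j => if j = n then true else ε j with hεT
    set εF : ℕ → Bool := fun j => if j = n then false else ε j with hεF
    have hPBT : PB P (n + 1) d εT = PB P (n + 1) d ε :=
      PB_congr d (n + 1) εT ε fun j hj1 hj2 => by
        simp only [hεT]; rw [if_neg (by omega : ¬ j = n)]
    have hPBF : PB P (n + 1) d εF = PB P (n + 1) d ε :=
      PB_congr d (n + 1) εF ε fun j hj1 hj2 => by
        simp only [hεF]; rw [if_neg (by omega : ¬ j = n)]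
    have e1 : εF n = false := by simp [hεF]
    have e2 : εT n = true := by simp [hεT]
    have key : Q P (n + 1) * PB P (n + 1) d ε =
        Q P n * PB P n (d + 1) εF + Q P n * PB P n (d + 1) εT := by
      simp only [Q, PB, hPBT, hPBF, e1, e2]
      simp only [Bool.false_eq_true, if_false, if_true, one_mul]
      rw [mul_assoc, add_mul, one_mul, mul_add]
    have h1 := ih (by omega) εF
    have h2 := ih (by omega) εT
    rw [hd] at h1 h2
    rw [key, Matrix.trace_add, h1, h2]
    rw [if_neg (show ¬ ∀ j ∈ Finset.Ico n k, εT j = false by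
      intro hall
      have := hall n (Finset.mem_Ico.mpr ⟨le_rfl, by omega⟩)
      rw [e2] at this
      exact absurd this (by simp))]
    rw [add_zero]
    by_cases hc : ∀ j ∈ Finset.Ico (n + 1) k, ε j = false
    · rw [if_pos hc, if_pos ?_]
      intro j hj
      rw [Finset.mem_Ico] at hj
      by_cases hjn : j = n
      · simp [hεF, hjn]
      · simp only [hεF, if_neg hjn]
        exact hc j (Finset.mem_Ico.mpr ⟨by omega, hj.2⟩)
    · rw [if_neg hc, if_neg ?_]
      push_neg at hc
      obtain ⟨j₀, hj₀m, hj₀⟩ := hc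
      rw [Finset.mem_Ico] at hj₀m
      intro hall
      have := hall j₀ (Finset.mem_Ico.mpr ⟨by omega, hj₀m.2⟩)
      rw [hεF] at this
      simp only [if_neg (by omega : j₀ ≠ n)] at this
      exact hj₀ this

theorem abstract_main (k : ℕ) (P B : ℕ → Matrix (Fin D) (Fin D) ℂ)
    (hPP : ∀ i j, P i * P j = P j * P i)
    (hP2 : ∀ i, P i * P i = 1)
    (hB2 : ∀ i, i < k → B i * B i = 1)
    (hanti : ∀ i, i < k → B i * P i = -(P i * B i))
    (hcomm : ∀ i j, i ≠ j → B i * P j = P j * B i) :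
    2 ^ k ∣ D := by
  have h2k : (2 : ℂ) ^ k ≠ 0 := pow_ne_zero _ two_ne_zero
  have htrQ : Matrix.trace (Q P k) = (D : ℂ) := by
    have := trace_QPB k hPP B hB2 hanti hcomm k le_rfl (fun _ => false)
    rw [Nat.sub_self] at this
    simp only [PB, mul_one] at this
    rw [this, if_pos (by simp)]
  set E := ((2 : ℂ) ^ k)⁻¹ • Q P k with hE
  have hEE : E * E = E := by
    rw [hE, smul_mul_assoc, mul_smul_comm, Q_sq hPP hP2, smul_smul, smul_smul]
    congr 1
    field_simp
  obtain ⟨r, hr⟩ := trace_idem E hEE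
  rw [hE, Matrix.trace_smul, htrQ, smul_eq_mul] at hr
  have hD : (D : ℂ) = ((2 ^ k * r : ℕ) : ℂ) := by
    push_cast
    field_simp at hr
    rw [hr]
  exact ⟨r, Nat.cast_injective hD⟩

end CliffordDiv

open CliffordDiv in
/-- If there exist `m ≥ 2` Hermitian `D × D` complex matrices
`A₁, …, A_m` satisfying the canonical anticommutation relations
`AᵢAₖ + AₖAᵢ = 2δᵢₖ I` (pairwise anticommuting Hermitian involutions), then
`2^⌊m/2⌋` divides `D`. -/
theorem clifford_dimension_divisibility {m D : ℕ} (hm : 2 ≤ m)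
    (A : Fin m → Matrix (Fin D) (Fin D) ℂ)
    (hAH : ∀ i, (A i)ᴴ = A i)
    (hCAR : ∀ i k, A i * A k + A k * A i = if i = k then (2 : ℂ) • 1 else 0) :
    2 ^ (m / 2) ∣ D := by
  have hsq : ∀ i, A i * A i = 1 := by
    intro i
    have h := hCAR i i
    rw [if_pos rfl] at h
    have h2 : (2 : ℂ) • (A i * A i) = (2 : ℂ) • (1 : Matrix (Fin D) (Fin D) ℂ) := by
      rw [two_smul]; exact h
    exact smul_right_injective _ two_ne_zero h2
  have hanti : ∀ i j, i ≠ j → A i * A j = -(A j * A i) := by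
    intro i j hne
    have h := hCAR i j
    rw [if_neg hne] at h
    exact eq_neg_of_add_eq_zero_left h
  have hne' : ∀ (x y : ℕ) (hx : x < m) (hy : y < m), x ≠ y → (⟨x, hx⟩ : Fin m) ≠ ⟨y, hy⟩ :=
    fun x y hx hy h => by simpa [Fin.ext_iff] using h
  have hAcomm : ∀ x c d : Fin m, x ≠ c → x ≠ d →
      A x * (A c * A d) = (A c * A d) * A x := by
    intro x c d h1 h2
    rw [← mul_assoc, hanti x c h1, neg_mul, mul_assoc, hanti x d h2, mul_neg, neg_neg,
      ← mul_assoc]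
  have comm4 : ∀ a b c d : Fin m, a ≠ c → a ≠ d → b ≠ c → b ≠ d →
      (A a * A b) * (A c * A d) = (A c * A d) * (A a * A b) := by
    intro a b c d h1 h2 h3 h4
    rw [mul_assoc, hAcomm b c d h3 h4, ← mul_assoc, hAcomm a c d h1 h2, mul_assoc]
  have sq2 : ∀ a b : Fin m, a ≠ b → (A a * A b) * (A a * A b) = -1 := by
    intro a b hab
    rw [mul_assoc, ← mul_assoc (A b), hanti b a (Ne.symm hab), neg_mul, mul_neg,
      mul_assoc (A a) (A b) (A b), hsq b, mul_one, hsq a]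
  set P : ℕ → Matrix (Fin D) (Fin D) ℂ := fun j =>
    if h : 2 * j + 1 < m then Complex.I • (A ⟨2 * j, by omega⟩ * A ⟨2 * j + 1, h⟩) else 1
    with hP
  set B : ℕ → Matrix (Fin D) (Fin D) ℂ := fun j =>
    if h : 2 * j + 1 < m then A ⟨2 * j, by omega⟩ else 1 with hB
  have hlt : ∀ j, j < m / 2 → 2 * j + 1 < m := by omega
  apply abstract_main (m / 2) P B
  · -- hPP
    intro i j
    rcases eq_or_ne i j with rfl | hne
    · rfl
    by_cases hi : 2 * i + 1 < m <;> by_cases hj : 2 * j + 1 < m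
    · simp only [hP, dif_pos hi, dif_pos hj]
      rw [smul_mul_assoc, smul_mul_assoc, mul_smul_comm, mul_smul_comm]
      congr 1
      congr 1
      exact comm4 _ _ _ _ (hne' _ _ _ _ (by omega)) (hne' _ _ _ _ (by omega))
        (hne' _ _ _ _ (by omega)) (hne' _ _ _ _ (by omega))
    · simp [hP, dif_pos hi, dif_neg hj]
    · simp [hP, dif_neg hi, dif_pos hj]
    · simp [hP, dif_neg hi, dif_neg hj]
  · -- hP2
    intro i
    by_cases hi : 2 * i + 1 < m
    · simp only [hP, dif_pos hi]
      rw [smul_mul_assoc, mul_smul_comm, smul_smul, Complex.I_mul_I,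
        sq2 _ _ (hne' _ _ _ _ (by omega)), neg_smul, smul_neg, neg_neg, one_smul]
    · simp [hP, dif_neg hi]
  · -- hB2
    intro i hik
    have hi := hlt i hik
    simp only [hB, dif_pos hi]
    exact hsq _
  · -- hanti B P
    intro i hik
    have hi := hlt i hik
    simp only [hP, hB, dif_pos hi]
    set a : Fin m := ⟨2 * i, by omega⟩
    set b : Fin m := ⟨2 * i + 1, hi⟩
    have hab : a ≠ b := hne' _ _ _ _ (by omega)
    rw [mul_smul_comm, smul_mul_assoc, ← smul_neg]
    congr 1
    rw [← mul_assoc, hsq a, one_mul, mul_assoc, hanti b a (Ne.symm hab), mul_neg, neg_neg,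
      ← mul_assoc, hsq a, one_mul]
  · -- hcomm B P
    intro i j hne
    by_cases hi : 2 * i + 1 < m <;> by_cases hj : 2 * j + 1 < m
    · simp only [hP, hB, dif_pos hi, dif_pos hj]
      rw [mul_smul_comm, smul_mul_assoc]
      congr 1
      exact hAcomm _ _ _ (hne' _ _ _ _ (by omega)) (hne' _ _ _ _ (by omega))
    · simp [hP, hB, dif_pos hi, dif_neg hj]
    · simp [hP, hB, dif_neg hi, dif_pos hj]
    · simp [hP, hB, dif_neg hi, dif_neg hj]
end

section
/- (Jordan–Wigner representation theorem.) Let A_1,…,A_m be Hermitian operators on a finite-dimensional complex Hilbert space H satisfying A_i A_k + A_k A_i = 2δ_{ik}·1 for all i,k, and write m = 2r + ε with ε ∈ {0,1} and r = ⌊m/2⌋. Then there exist a natural number d' with dim H = 2^r · d' and a unitary U : H → (ℂ²)^{⊗r} ⊗ ℂ^{d'} such that: for every odd i ≤ 2r, U A_i U† = Y^{⊗(i−1)/2} ⊗ Z ⊗ I₂^{⊗(2r−i−1)/2} ⊗ I_{d'}; for every even i ≤ 2r, U A_i U† = Y^{⊗(i−2)/2} ⊗ X ⊗ I₂^{⊗(2r−i)/2}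 ⊗ I_{d'}; and if ε = 1, then U A_m U† = Y^{⊗r} ⊗ A'_m for some Hermitian unitary operator A'_m on ℂ^{d'}. -/
open Matrix Kronecker Finset

noncomputable section

/-- Pauli matrix `X`. -/
def PauliX : Matrix (Fin 2) (Fin 2) ℂ := !![0, 1; 1, 0]
/-- Pauli matrix `Y`. -/
def PauliY : Matrix (Fin 2) (Fin 2) ℂ := !![0, -Complex.I; Complex.I, 0]
/-- Pauli matrix `Z`. -/
def PauliZ : Matrix (Fin 2) (Fin 2) ℂ := !![1, 0; 0, -1]

/-- The tensor (Kronecker) product `O₁ ⊗ O₂ ⊗ ⋯ ⊗ O_r` of the qubit operators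
`O_k = f k` (factors indexed `1, …, r`), realized as a matrix on
`(ℂ²)^{⊗ r} ≅ ℂ^{Fin r → Fin 2}` in the canonical basis:
its `(v, w)` entry is `∏ₖ (O_k)_{v_k w_k}`. -/
def qubitTensor (r : ℕ) (f : ℕ → Matrix (Fin 2) (Fin 2) ℂ) :
    Matrix (Fin r → Fin 2) (Fin r → Fin 2) ℂ :=
  Matrix.of fun v w => ∏ k : Fin r, f (k.val + 1) (v k) (w k)

/-- The `k`-th tensor factor of the `i`-th Jordan–Wigner generator (`i`, `k` 1-indexed):
for odd `i`, the generator is `Y^{⊗(i−1)/2} ⊗ Z ⊗ I₂^{⊗(2r−i−1)/2}`; for even `i`, it is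
`Y^{⊗(i−2)/2} ⊗ X ⊗ I₂^{⊗(2r−i)/2}`. -/
def JWfactor (i : ℕ) : ℕ → Matrix (Fin 2) (Fin 2) ℂ := fun k =>
  if k < (i + 1) / 2 then PauliY
  else if k = (i + 1) / 2 then (if i % 2 = 1 then PauliZ else PauliX)
  else 1

/-- The `i`-th Jordan–Wigner generator (1-indexed) on `r` qubits. -/
def JWgen (r i : ℕ) : Matrix (Fin r → Fin 2) (Fin r → Fin 2) ℂ :=
  qubitTensor r (JWfactor i)

lemma PauliY_mul_self : PauliY * PauliY = 1 := by
  rw [show PauliY * PauliY = !![0, -Complex.I; Complex.I, 0] * !![0, -Complex.I; Complex.I, 0]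
    from rfl, Matrix.mul_fin_two, Matrix.one_fin_two]
  norm_num [Complex.I_mul_I]

lemma kron_conjTranspose {l m n p : Type*} (A : Matrix l m ℂ) (B : Matrix n p ℂ) :
    (A ⊗ₖ B)ᴴ = Aᴴ ⊗ₖ Bᴴ := by
  ext ⟨i, j⟩ ⟨k, l⟩
  simp [kroneckerMap_apply, conjTranspose_apply, star_mul', mul_comm]

lemma submatrix_row_mul {I J K L : Type*} [Fintype K]
    (X : Matrix J K ℂ) (N : Matrix K L ℂ) (f : I → J) :
    X.submatrix f id * N = (X * N).submatrix f id := by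
  ext i l; simp [Matrix.mul_apply]

lemma mul_submatrix_col {I J K L : Type*} [Fintype K]
    (N : Matrix L K ℂ) (X : Matrix K J ℂ) (f : I → J) :
    N * X.submatrix id f = (N * X).submatrix id f := by
  ext l i; simp [Matrix.mul_apply]

lemma sub_mul_sub {I I' J K : Type*} [Fintype K]
    (Y : Matrix J K ℂ) (Z : Matrix K J ℂ) (f : I → J) (g : I' → J) :
    Y.submatrix f id * Z.submatrix id g = (Y * Z).submatrix f g := by
  ext i j; simp [Matrix.mul_apply]

lemma sub_mid_mul {I J K L : Type*} [Fintype I] [Fintype J]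
    (Y : Matrix K J ℂ) (Z : Matrix J L ℂ) (e : I ≃ J) :
    (Y.submatrix id ⇑e) * (Z.submatrix ⇑e id) = Y * Z := by
  ext a b
  rw [Matrix.mul_apply, Matrix.mul_apply]
  exact Equiv.sum_comp e (fun q => Y a q * Z q b)

lemma prod_one_entry {r : ℕ} (v w : Fin r → Fin 2) :
    (∏ k : Fin r, (1 : Matrix (Fin 2) (Fin 2) ℂ) (v k) (w k)) = if v = w then 1 else 0 := by
  by_cases h : v = w
  · subst h; simp [one_apply]
  · obtain ⟨k, hk⟩ := Function.ne_iff.mp h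
    rw [if_neg h]
    exact Finset.prod_eq_zero (Finset.mem_univ k) (by simp [one_apply, hk])

lemma anticomm_extract {d : ℕ} (M : Matrix (Fin 2 × Fin d) (Fin 2 × Fin d) ℂ)
    (hZ : (PauliZ ⊗ₖ (1 : Matrix (Fin d) (Fin d) ℂ)) * M + M * (PauliZ ⊗ₖ 1) = 0)
    (hX : (PauliX ⊗ₖ (1 : Matrix (Fin d) (Fin d) ℂ)) * M + M * (PauliX ⊗ₖ 1) = 0) :
    M = PauliY ⊗ₖ (Matrix.of fun a b => Complex.I * M (0, a) (1, b)) := by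
  have keyL : ∀ (N : Matrix (Fin 2) (Fin 2) ℂ) (p q : Fin 2 × Fin d),
      ((N ⊗ₖ (1 : Matrix (Fin d) (Fin d) ℂ)) * M) p q
        = ∑ u : Fin 2, N p.1 u * M (u, p.2) q := by
    intro N p q
    rw [Matrix.mul_apply, Fintype.sum_prod_type]
    refine Finset.sum_congr rfl (fun u _ => ?_)
    simp [kroneckerMap_apply, one_apply, ite_mul, mul_ite, mul_assoc]
  have keyR : ∀ (N : Matrix (Fin 2) (Fin 2) ℂ) (p q : Fin 2 × Fin d),
      (M * (N ⊗ₖ (1 : Matrix (Fin d) (Fin d) ℂ))) p q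
        = ∑ u : Fin 2, M p (u, q.2) * N u q.1 := by
    intro N p q
    rw [Matrix.mul_apply, Fintype.sum_prod_type]
    refine Finset.sum_congr rfl (fun u _ => ?_)
    simp [kroneckerMap_apply, one_apply, ite_mul, mul_ite, mul_comm, mul_assoc, mul_left_comm]
  have E1 : ∀ a b, M (0, a) (0, b) = 0 := by
    intro a b
    have h := congrFun (congrFun hZ (0, a)) (0, b)
    rw [Matrix.add_apply, keyL, keyR, Fin.sum_univ_two, Fin.sum_univ_two] at h
    simp only [PauliZ, Matrix.zero_apply] at h
    norm_num [Matrix.cons_val_zero, Matrix.cons_val_one] at h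
    linear_combination h
  have E2 : ∀ a b, M (1, a) (1, b) = 0 := by
    intro a b
    have h := congrFun (congrFun hZ (1, a)) (1, b)
    rw [Matrix.add_apply, keyL, keyR, Fin.sum_univ_two, Fin.sum_univ_two] at h
    simp only [PauliZ, Matrix.zero_apply] at h
    norm_num [Matrix.cons_val_zero, Matrix.cons_val_one] at h
    linear_combination h
  have E3 : ∀ a b, M (1, a) (0, b) = -M (0, a) (1, b) := by
    intro a b
    have h := congrFun (congrFun hX (0, a)) (0, b)
    rw [Matrix.add_apply, keyL, keyR, Fin.sum_univ_two, Fin.sum_univ_two] at h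
    simp only [PauliX, Matrix.zero_apply] at h
    norm_num [Matrix.cons_val_zero, Matrix.cons_val_one] at h
    linear_combination h
  ext ⟨s, a⟩ ⟨t, b⟩
  fin_cases s <;> fin_cases t <;>
    simp [kroneckerMap_apply, PauliY, E1, E2, E3] <;>
    (first
      | linear_combination M (0, a) (1, b) * Complex.I_mul_I
      | linear_combination (-M (0, a) (1, b)) * Complex.I_mul_I)

lemma proj_factor {D : ℕ} (P : Matrix (Fin D) (Fin D) ℂ) (hH : Pᴴ = P) (hPP : P * P = P) :
    ∃ d : ℕ, ∃ W : Matrix (Fin D) (Fin d) ℂ, Wᴴ * W = 1 ∧ W * Wᴴ = P := by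
  have hP : P.IsHermitian := hH
  set Q : Matrix (Fin D) (Fin D) ℂ := (hP.eigenvectorUnitary : Matrix (Fin D) (Fin D) ℂ) with hQ
  have hQ1 : star Q * Q = 1 := Unitary.coe_star_mul_self _
  have hQ2 : Q * star Q = 1 := Unitary.coe_mul_star_self _
  set F : Matrix (Fin D) (Fin D) ℂ := diagonal (RCLike.ofReal ∘ hP.eigenvalues) with hF
  have hFapp : ∀ i j, F i j = if i = j then (hP.eigenvalues i : ℂ) else 0 := by
    intro i j; rw [hF, diagonal_apply]; rfl
  have hdiag : star Q * P * Q = F := by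
    have h := hP.conjStarAlgAut_star_eigenvectorUnitary
    rwa [Unitary.conjStarAlgAut_star_apply] at h
  have heig : ∀ i, hP.eigenvalues i = 0 ∨ hP.eigenvalues i = 1 := by
    intro i
    have h2 : F * F = F := by
      rw [← hdiag]
      calc star Q * P * Q * (star Q * P * Q) = star Q * P * ((Q * star Q) * (P * Q)) := by
            simp only [Matrix.mul_assoc]
        _ = star Q * (P * P) * Q := by rw [hQ2, Matrix.one_mul]; simp only [Matrix.mul_assoc]
        _ = star Q * P * Q := by rw [hPP]
    have h3 : (F * F) i i = F i i := by rw [h2]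
    rw [Matrix.mul_apply] at h3
    have h4 : (hP.eigenvalues i : ℂ) * (hP.eigenvalues i : ℂ) = (hP.eigenvalues i : ℂ) := by
      have : ∀ j ∈ Finset.univ, j ≠ i → F i j * F j i = 0 := by
        intro j _ hj; rw [hFapp i j, if_neg (fun h => hj h.symm)]; ring
      rw [Finset.sum_eq_single i (fun j _ hj => by rw [hFapp i j, if_neg (fun h => hj h.symm)]; ring)
        (fun h => absurd (Finset.mem_univ i) h)] at h3
      rw [hFapp i i, if_pos rfl] at h3; exact h3
    have h5 : (hP.eigenvalues i : ℂ) * ((hP.eigenvalues i : ℂ) - 1) = 0 := by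
      linear_combination h4
    rcases mul_eq_zero.mp h5 with h | h
    · left; exact_mod_cast h
    · right; have : (hP.eigenvalues i : ℂ) = 1 := by linear_combination h
      exact_mod_cast this
  classical
  set S : Finset (Fin D) := Finset.univ.filter (fun i => hP.eigenvalues i = 1) with hS
  set d := S.card with hd
  set g : Fin d → Fin D := fun j => (S.orderIsoOfFin rfl j : Fin D) with hg
  have hginj : Function.Injective g := fun a b hab => by
    have := Subtype.ext hab
    exact (S.orderIsoOfFin rfl).injective this
  refine ⟨d, Q.submatrix id g, ?_, ?_⟩
  · have h1 : (Q.submatrix id g)ᴴ = (star Q).submatrix g id := by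
      rw [conjTranspose_submatrix]; rfl
    rw [h1]
    have h2 := Matrix.submatrix_mul_equiv (star Q) Q g (Equiv.refl (Fin D)) g
    simp only [Equiv.coe_refl] at h2
    rw [show (Q.submatrix id g) = Q.submatrix (Equiv.refl (Fin D)) g from rfl] at *
    rw [h2, hQ1]
    ext a b
    simp [one_apply, hginj.eq_iff]
  · ext a b
    have hPab : P = Q * F * star Q := by
        have h := hP.spectral_theorem
        rwa [Unitary.conjStarAlgAut_apply] at h
    have hPentry : P a b = ∑ i, Q a i * (hP.eigenvalues i : ℂ) * star (Q b i) := by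
      conv_lhs => rw [hPab]
      rw [Matrix.mul_apply]
      congr 1; ext i
      rw [Matrix.mul_apply]
      rw [Finset.sum_eq_single i (fun j _ hj => by rw [hFapp j i, if_neg hj]; ring)
        (fun h => absurd (Finset.mem_univ i) h)]
      rw [hFapp i i, if_pos rfl, Matrix.star_apply]
    have hWentry : (Q.submatrix id g * (Q.submatrix id g)ᴴ) a b
        = ∑ j : Fin d, Q a (g j) * star (Q b (g j)) := by
      rw [Matrix.mul_apply]
      exact Finset.sum_congr rfl (fun j _ => by simp [conjTranspose_apply])
    rw [hWentry, hPentry]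
    rw [show (∑ j : Fin d, Q a (g j) * star (Q b (g j)))
        = ∑ x : {i // i ∈ S}, Q a x * star (Q b x) from
      Fintype.sum_equiv (S.orderIsoOfFin rfl).toEquiv _ _ (fun j => rfl)]
    have h6 : ∀ i : Fin D, Q a i * (hP.eigenvalues i : ℂ) * star (Q b i)
        = if i ∈ S then Q a i * star (Q b i) else 0 := by
      intro i
      by_cases hi : i ∈ S
      · have h7 : hP.eigenvalues i = 1 := by simpa [hS] using hi
        simp [hi, h7]
      · have h7 : hP.eigenvalues i = 0 := by
          rcases heig i with h | h
          · exact h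
          · exact absurd (by simp [hS, h] : i ∈ S) hi
        simp [hi, h7]
    rw [Finset.sum_congr rfl (fun i _ => h6 i), Finset.sum_ite_mem, Finset.univ_inter,
      ← Finset.sum_coe_sort S (fun i => Q a i * star (Q b i))]

lemma pair_step {D : ℕ} (B1 B2 : Matrix (Fin D) (Fin D) ℂ)
    (h1 : B1ᴴ = B1) (h2 : B2ᴴ = B2) (h11 : B1 * B1 = 1) (h22 : B2 * B2 = 1)
    (h12 : B1 * B2 + B2 * B1 = 0) :
    ∃ d, D = 2 * d ∧ ∃ V : Matrix (Fin 2 × Fin d) (Fin D) ℂ,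
      V * Vᴴ = 1 ∧ Vᴴ * V = 1 ∧ V * B1 * Vᴴ = PauliZ ⊗ₖ 1 ∧ V * B2 * Vᴴ = PauliX ⊗ₖ 1 := by
  have hanti : B2 * B1 = -(B1 * B2) := eq_neg_of_add_eq_zero_right h12
  set P : Matrix (Fin D) (Fin D) ℂ := (2:ℂ)⁻¹ • (1 + B1) with hPdef
  have hPH : Pᴴ = P := by
    rw [hPdef, conjTranspose_smul, conjTranspose_add, conjTranspose_one, h1]
    norm_num
  have hPP : P * P = P := by
    rw [hPdef, smul_mul_smul_comm]
    have e : ((1 : Matrix (Fin D) (Fin D) ℂ) + B1) * (1 + B1) = (2:ℂ) • (1 + B1) := by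
      simp only [mul_add, add_mul, mul_one, one_mul, h11]
      module
    rw [e, smul_smul]
    norm_num
  obtain ⟨d, W, hW1, hW2⟩ := proj_factor P hPH hPP
  have hPW : P * W = W := by
    calc P * W = (W * Wᴴ) * W := by rw [hW2]
      _ = W * (Wᴴ * W) := by rw [Matrix.mul_assoc]
      _ = W := by rw [hW1, Matrix.mul_one]
  have hB1P : B1 * P = P := by
    rw [hPdef, Matrix.mul_smul, mul_add, Matrix.mul_one, h11, add_comm]
  have hB1W : B1 * W = W := by
    calc B1 * W = B1 * (P * W) := by rw [hPW]
      _ = (B1 * P) * W := by rw [Matrix.mul_assoc]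
      _ = W := by rw [hB1P, hPW]
  have hWH1 : Wᴴ * B1 = Wᴴ := by
    have := congrArg conjTranspose hB1W
    rwa [conjTranspose_mul, h1] at this
  have hWBW : Wᴴ * B2 * W = 0 := by
    have key : Wᴴ * B2 * W = -(Wᴴ * B2 * W) := by
      calc Wᴴ * B2 * W = Wᴴ * B2 * (B1 * W) := by rw [hB1W]
        _ = Wᴴ * (B2 * B1) * W := by simp only [Matrix.mul_assoc]
        _ = Wᴴ * (-(B1 * B2)) * W := by rw [hanti]
        _ = -(Wᴴ * B1 * (B2 * W)) := by simp only [Matrix.mul_neg, Matrix.neg_mul,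
            Matrix.mul_assoc]
        _ = -(Wᴴ * B2 * W) := by rw [hWH1, Matrix.mul_assoc]
    have h2X : (2:ℂ) • (Wᴴ * B2 * W) = 0 := by
      rw [two_smul]; nth_rewrite 1 [key]; abel
    exact (smul_eq_zero.mp h2X).resolve_left (by norm_num)
  -- trace argument: D = 2 * d
  have htrB1 : trace B1 = 0 := by
    have c1 : trace B1 = trace (B2 * (B1 * B2)) := by
      conv_lhs => rw [show B1 = B1 * B2 * B2 by rw [Matrix.mul_assoc, h22, Matrix.mul_one]]
      rw [trace_mul_comm (B1 * B2) B2]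
    have c2 : trace (B2 * (B1 * B2)) = -trace B1 := by
      rw [← Matrix.mul_assoc, hanti, Matrix.neg_mul, trace_neg, Matrix.mul_assoc, h22,
        Matrix.mul_one]
    have h3 := c1.trans c2
    have h4 : (2:ℂ) * trace B1 = 0 := by linear_combination h3
    exact (mul_eq_zero.mp h4).resolve_left (by norm_num)
  have hD2d : D = 2 * d := by
    have t1 : trace P = (d : ℂ) := by
      rw [← hW2, trace_mul_comm, hW1, trace_one]
      simp
    have t2 : trace P = (2:ℂ)⁻¹ * (D : ℂ) := by
      rw [hPdef, trace_smul, trace_add, trace_one, htrB1, add_zero]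
      simp
    have h5 : (D : ℂ) = 2 * (d : ℂ) := by
      rw [t1] at t2
      field_simp at t2
      linear_combination -t2
    exact_mod_cast h5
  -- build V
  set V : Matrix (Fin 2 × Fin d) (Fin D) ℂ :=
    Matrix.of (fun p i => (if p.1 = 0 then Wᴴ else Wᴴ * B2) p.2 i) with hVdef
  have hVH : ∀ (i : Fin D) (q : Fin 2 × Fin d),
      Vᴴ i q = (if q.1 = 0 then W else B2 * W) i q.2 := by
    intro i q
    rw [conjTranspose_apply]
    by_cases hq : q.1 = 0 <;>
      simp only [hVdef, of_apply, hq, ite_true, ite_false, if_true, if_false]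
    · rw [← conjTranspose_apply, conjTranspose_conjTranspose]
    · rw [← conjTranspose_apply, conjTranspose_mul, h2, conjTranspose_conjTranspose]
  have sandwich : ∀ M : Matrix (Fin D) (Fin D) ℂ, ∀ (p q : Fin 2 × Fin d),
      (V * M * Vᴴ) p q
        = ((if p.1 = 0 then Wᴴ else Wᴴ * B2) * M * (if q.1 = 0 then W else B2 * W)) p.2 q.2 := by
    intro M p q
    rw [Matrix.mul_apply]
    rw [show ((if p.1 = 0 then Wᴴ else Wᴴ * B2) * M * (if q.1 = 0 then W else B2 * W)) p.2 q.2
      = ∑ i, ((if p.1 = 0 then Wᴴ else Wᴴ * B2) * M) p.2 i * (if q.1 = 0 then W else B2 * W) i q.2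
      from Matrix.mul_apply]
    refine Finset.sum_congr rfl (fun i _ => ?_)
    rw [hVH]
    congr 1
  -- block identities
  have q1 : Wᴴ * (B2 * W) = 0 := by rw [← Matrix.mul_assoc, hWBW]
  have q3 : (Wᴴ * B2) * (B2 * W) = 1 := by
    calc (Wᴴ * B2) * (B2 * W) = Wᴴ * (B2 * (B2 * W)) := by simp only [Matrix.mul_assoc]
      _ = Wᴴ * W := by rw [← Matrix.mul_assoc B2 B2 W, h22, Matrix.one_mul]
      _ = 1 := hW1
  have b00 : Wᴴ * B1 * W = 1 := by rw [hWH1, hW1]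
  have b01 : Wᴴ * B1 * (B2 * W) = 0 := by rw [hWH1, q1]
  have b10 : (Wᴴ * B2) * B1 * W = 0 := by rw [Matrix.mul_assoc, hB1W, hWBW]
  have b11 : (Wᴴ * B2) * B1 * (B2 * W) = -1 := by
    calc (Wᴴ * B2) * B1 * (B2 * W) = Wᴴ * ((B2 * B1) * (B2 * W)) := by
          simp only [Matrix.mul_assoc]
      _ = Wᴴ * ((-(B1 * B2)) * (B2 * W)) := by rw [hanti]
      _ = -(Wᴴ * (B1 * (B2 * (B2 * W)))) := by
          simp only [Matrix.neg_mul, Matrix.mul_neg, Matrix.mul_assoc]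
      _ = -(Wᴴ * (B1 * W)) := by rw [← Matrix.mul_assoc B2 B2 W, h22, Matrix.one_mul]
      _ = -1 := by rw [hB1W, hW1]
  have x01 : Wᴴ * B2 * (B2 * W) = 1 := q3
  have wb2 : (Wᴴ * B2) * B2 = Wᴴ := by rw [Matrix.mul_assoc, h22, Matrix.mul_one]
  have x10 : (Wᴴ * B2) * B2 * W = 1 := by rw [wb2, hW1]
  have x11 : (Wᴴ * B2) * B2 * (B2 * W) = 0 := by rw [wb2, q1]
  refine ⟨d, hD2d, V, ?_, ?_, ?_, ?_⟩
  · have hM : V * Vᴴ = V * (1 : Matrix (Fin D) (Fin D) ℂ) * Vᴴ := by rw [Matrix.mul_one]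
    rw [hM]
    ext ⟨s, j⟩ ⟨t, k⟩
    rw [sandwich 1 (s, j) (t, k)]
    fin_cases s <;> fin_cases t <;>
      simp [hW1, q1, q3, hWBW, Matrix.mul_one, one_apply, Prod.ext_iff] <;>
      (try split_ifs <;> simp)
  · have hVHV : Vᴴ * V = W * Wᴴ + (B2 * W) * (Wᴴ * B2) := by
      ext i i'
      rw [Matrix.mul_apply, Fintype.sum_prod_type, Fin.sum_univ_two]
      simp only [hVH, hVdef, of_apply]
      norm_num
      simp [Matrix.add_apply, Matrix.mul_apply, conjTranspose_apply]
      have hB2e : ∀ a b, starRingEnd ℂ (B2 a b) = B2 b a := by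
        intro a b
        have := congrFun (congrFun h2 b) a
        rw [conjTranspose_apply] at this
        exact this
      simp only [hB2e]
      refine Finset.sum_congr rfl (fun x _ => ?_)
      congr 1
      exact Finset.sum_congr rfl (fun y _ => mul_comm _ _)
    rw [hVHV]
    have hbpb : (B2 * W) * (Wᴴ * B2) = B2 * P * B2 := by
      rw [← hW2]; simp only [Matrix.mul_assoc]
    have hB2PB2 : B2 * P * B2 = (2:ℂ)⁻¹ • (1 - B1) := by
      rw [hPdef, Matrix.mul_smul, Matrix.smul_mul]
      congr 1
      rw [mul_add, Matrix.mul_one, add_mul, h22, hanti, Matrix.neg_mul, Matrix.mul_assoc, h22,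
        Matrix.mul_one, sub_eq_add_neg]
    rw [hbpb, hB2PB2, hW2, hPdef]
    module
  · ext ⟨s, j⟩ ⟨t, k⟩
    rw [sandwich B1 (s, j) (t, k)]
    fin_cases s <;> fin_cases t <;>
      simp [b00, b01, b10, b11, PauliZ, one_apply, kroneckerMap_apply] <;>
      (try split_ifs <;> simp)
  · ext ⟨s, j⟩ ⟨t, k⟩
    rw [sandwich B2 (s, j) (t, k)]
    fin_cases s <;> fin_cases t <;>
      simp [hWBW, x01, x10, x11, PauliX, one_apply, kroneckerMap_apply] <;>
      (try split_ifs <;> simp)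

-- JWfactor / qubitTensor combinatorial lemmas
lemma JWfactor_one_of {I : ℕ} (hI : 3 ≤ I) : JWfactor I 1 = PauliY := by
  unfold JWfactor; rw [if_pos (by omega)]

lemma JWfactor_shift (J k : ℕ) : JWfactor (J + 2) (k + 2) = JWfactor J (k + 1) := by
  unfold JWfactor
  split_ifs <;> first | rfl | omega

lemma JWfactor_11 : JWfactor 1 1 = PauliZ := by unfold JWfactor; norm_num
lemma JWfactor_21 : JWfactor 2 1 = PauliX := by unfold JWfactor; norm_num
lemma JWfactor_one_tail (k : ℕ) : JWfactor 1 (k + 2) = 1 := by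
  unfold JWfactor; rw [if_neg (by omega), if_neg (by omega)]
lemma JWfactor_two_tail (k : ℕ) : JWfactor 2 (k + 2) = 1 := by
  unfold JWfactor; rw [if_neg (by omega), if_neg (by omega)]

lemma qubitTensor_succ (r : ℕ) (f : ℕ → Matrix (Fin 2) (Fin 2) ℂ) (v w : Fin (r+1) → Fin 2) :
    qubitTensor (r+1) f v w
      = f 1 (v 0) (w 0)
        * qubitTensor r (fun k => f (k + 1)) (Fin.tail v) (Fin.tail w) := by
  show (∏ k : Fin (r+1), f (k.val + 1) (v k) (w k)) = _
  rw [Fin.prod_univ_succ]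
  rfl

def splitEquiv (r d' : ℕ) :
    ((Fin (r+1) → Fin 2) × Fin d') ≃ (Fin 2 × ((Fin r → Fin 2) × Fin d')) where
  toFun p := (p.1 0, (Fin.tail p.1, p.2))
  invFun q := (Fin.cons q.1 q.2.1, q.2.2)
  left_inv p := by
    show (Fin.cons (p.1 0) (Fin.tail p.1), p.2) = p
    rw [Fin.cons_self_tail]
  right_inv q := by simp

lemma JW_one_kron (r d' : ℕ) :
    ((PauliZ ⊗ₖ (1 : Matrix ((Fin r → Fin 2) × Fin d') ((Fin r → Fin 2) × Fin d') ℂ)).submatrix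
        (splitEquiv r d') (splitEquiv r d'))
      = JWgen (r+1) 1 ⊗ₖ (1 : Matrix (Fin d') (Fin d') ℂ) := by
  ext ⟨v, x⟩ ⟨w, y⟩
  simp only [submatrix_apply, kroneckerMap_apply, splitEquiv, Equiv.coe_fn_mk]
  rw [show (JWgen (r+1) 1 : Matrix _ _ ℂ) v w = qubitTensor (r+1) (JWfactor 1) v w from rfl,
    qubitTensor_succ, JWfactor_11]
  rw [show qubitTensor r (fun k => JWfactor 1 (k+1)) (Fin.tail v) (Fin.tail w)
      = ∏ k : Fin r, JWfactor 1 (k.val + 1 + 1) (Fin.tail v k) (Fin.tail w k) from rfl]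
  have : ∀ k : Fin r, JWfactor 1 (k.val + 1 + 1) (Fin.tail v k) (Fin.tail w k)
      = (1 : Matrix (Fin 2) (Fin 2) ℂ) (Fin.tail v k) (Fin.tail w k) := by
    intro k; rw [show k.val + 1 + 1 = k.val + 2 from rfl, JWfactor_one_tail]
  rw [Finset.prod_congr rfl (fun k _ => this k), prod_one_entry]
  rw [one_apply, one_apply]
  simp only [Prod.mk.injEq]
  by_cases h1 : Fin.tail v = Fin.tail w <;> by_cases h2 : x = y <;>
    simp [h1, h2] <;> ring

lemma JW_two_kron (r d' : ℕ) :
    ((PauliX ⊗ₖ (1 : Matrix ((Fin r → Fin 2) × Fin d') ((Fin r → Fin 2) × Fin d') ℂ)).submatrix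
        (splitEquiv r d') (splitEquiv r d'))
      = JWgen (r+1) 2 ⊗ₖ (1 : Matrix (Fin d') (Fin d') ℂ) := by
  ext ⟨v, x⟩ ⟨w, y⟩
  simp only [submatrix_apply, kroneckerMap_apply, splitEquiv, Equiv.coe_fn_mk]
  rw [show (JWgen (r+1) 2 : Matrix _ _ ℂ) v w = qubitTensor (r+1) (JWfactor 2) v w from rfl,
    qubitTensor_succ, JWfactor_21]
  rw [show qubitTensor r (fun k => JWfactor 2 (k+1)) (Fin.tail v) (Fin.tail w)
      = ∏ k : Fin r, JWfactor 2 (k.val + 1 + 1) (Fin.tail v k) (Fin.tail w k) from rfl]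
  have : ∀ k : Fin r, JWfactor 2 (k.val + 1 + 1) (Fin.tail v k) (Fin.tail w k)
      = (1 : Matrix (Fin 2) (Fin 2) ℂ) (Fin.tail v k) (Fin.tail w k) := by
    intro k; rw [show k.val + 1 + 1 = k.val + 2 from rfl, JWfactor_two_tail]
  rw [Finset.prod_congr rfl (fun k _ => this k), prod_one_entry]
  rw [one_apply, one_apply]
  simp only [Prod.mk.injEq]
  by_cases h1 : Fin.tail v = Fin.tail w <;> by_cases h2 : x = y <;>
    simp [h1, h2] <;> ring

lemma JW_shift_kron (r d' J : ℕ) (hJ : 1 ≤ J) :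
    ((PauliY ⊗ₖ (JWgen r J ⊗ₖ (1 : Matrix (Fin d') (Fin d') ℂ))).submatrix
        (splitEquiv r d') (splitEquiv r d'))
      = JWgen (r+1) (J+2) ⊗ₖ (1 : Matrix (Fin d') (Fin d') ℂ) := by
  ext ⟨v, x⟩ ⟨w, y⟩
  simp only [submatrix_apply, kroneckerMap_apply, splitEquiv, Equiv.coe_fn_mk]
  rw [show (JWgen (r+1) (J+2) : Matrix _ _ ℂ) v w = qubitTensor (r+1) (JWfactor (J+2)) v w
    from rfl, qubitTensor_succ, JWfactor_one_of (by omega)]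
  rw [show qubitTensor r (fun k => JWfactor (J+2) (k+1)) (Fin.tail v) (Fin.tail w)
      = ∏ k : Fin r, JWfactor (J+2) (k.val + 1 + 1) (Fin.tail v k) (Fin.tail w k) from rfl]
  have : ∀ k : Fin r, JWfactor (J+2) (k.val + 1 + 1) (Fin.tail v k) (Fin.tail w k)
      = JWfactor J (k.val + 1) (Fin.tail v k) (Fin.tail w k) := by
    intro k; rw [show k.val + 1 + 1 = k.val + 2 from rfl, JWfactor_shift]
  rw [Finset.prod_congr rfl (fun k _ => this k)]
  rw [show (JWgen r J : Matrix _ _ ℂ) (Fin.tail v) (Fin.tail w)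
      = ∏ k : Fin r, JWfactor J (k.val + 1) (Fin.tail v k) (Fin.tail w k) from rfl]
  ring

lemma JW_Y_kron (r d' : ℕ) (A' : Matrix (Fin d') (Fin d') ℂ) :
    ((PauliY ⊗ₖ (qubitTensor r (fun _ => PauliY) ⊗ₖ A')).submatrix
        (splitEquiv r d') (splitEquiv r d'))
      = qubitTensor (r+1) (fun _ => PauliY) ⊗ₖ A' := by
  ext ⟨v, x⟩ ⟨w, y⟩
  simp only [submatrix_apply, kroneckerMap_apply, splitEquiv, Equiv.coe_fn_mk]
  rw [qubitTensor_succ]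
  rw [show qubitTensor r (fun _ => PauliY) (Fin.tail v) (Fin.tail w)
      = ∏ k : Fin r, PauliY (Fin.tail v k) (Fin.tail w k) from rfl]
  ring


lemma car_sq {m D : ℕ} (A : Fin m → Matrix (Fin D) (Fin D) ℂ)
    (hCAR : ∀ i k, A i * A k + A k * A i = if i = k then (2 : ℂ) • 1 else 0) (i : Fin m) :
    A i * A i = 1 := by
  have h := hCAR i i
  rw [if_pos rfl] at h
  rw [← two_smul ℂ (A i * A i)] at h
  exact smul_right_injective _ (two_ne_zero) h

lemma JW_aux (r : ℕ) : ∀ (m D : ℕ) (A : Fin m → Matrix (Fin D) (Fin D) ℂ),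
    (m = 2*r ∨ m = 2*r + 1) →
    (∀ i, (A i)ᴴ = A i) →
    (∀ i k, A i * A k + A k * A i = if i = k then (2:ℂ) • 1 else 0) →
    ∃ d' : ℕ, D = 2^r * d' ∧
    ∃ U : Matrix ((Fin r → Fin 2) × Fin d') (Fin D) ℂ,
      U * Uᴴ = 1 ∧ Uᴴ * U = 1 ∧
      (∀ i : Fin m, (i:ℕ) + 1 ≤ 2*r →
        U * A i * Uᴴ = JWgen r ((i:ℕ)+1) ⊗ₖ (1 : Matrix (Fin d') (Fin d') ℂ)) ∧
      (∀ i : Fin m, (i:ℕ)+1 = m → m = 2*r + 1 →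
        ∃ A' : Matrix (Fin d') (Fin d') ℂ, A'ᴴ = A' ∧ A' * A' = 1 ∧
          U * A i * Uᴴ = qubitTensor r (fun _ => PauliY) ⊗ₖ A') := by
  induction r with
  | zero =>
    intro m D A hm hAH hCAR
    refine ⟨D, by norm_num, ?_⟩
    set e : ((Fin 0 → Fin 2) × Fin D) ≃ Fin D :=
      ⟨Prod.snd, fun x => (fun k => k.elim0, x),
        fun p => Prod.ext (Subsingleton.elim _ _) rfl, fun x => rfl⟩ with he
    have hsub : ∀ B : Matrix (Fin D) (Fin D) ℂ,
        ((1 : Matrix (Fin D) (Fin D) ℂ).submatrix e id) * B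
            * ((1 : Matrix (Fin D) (Fin D) ℂ).submatrix e id)ᴴ
          = B.submatrix e e := by
      intro B
      rw [conjTranspose_submatrix, conjTranspose_one, submatrix_row_mul, Matrix.one_mul,
        sub_mul_sub, Matrix.mul_one]
    refine ⟨(1 : Matrix (Fin D) (Fin D) ℂ).submatrix e id, ?_, ?_, ?_, ?_⟩
    · have h := hsub 1
      rwa [Matrix.mul_one, submatrix_one_equiv] at h
    · rw [conjTranspose_submatrix, conjTranspose_one, sub_mid_mul, Matrix.one_mul]
    · intro i hi
      omega
    · intro i hi hm1
      refine ⟨A i, hAH i, car_sq A hCAR i, ?_⟩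
      rw [hsub]
      ext ⟨v, x⟩ ⟨w, y⟩
      simp only [submatrix_apply, kroneckerMap_apply]
      rw [show e (v, x) = x from rfl, show e (w, y) = y from rfl]
      rw [show qubitTensor 0 (fun _ => PauliY) v w = ∏ k : Fin 0, PauliY (v k) (w k) from rfl]
      simp
  | succ r IH =>
    intro m D A hm hAH hCAR
    have hm2 : 2 ≤ m := by omega
    set i0 : Fin m := ⟨0, by omega⟩ with hi0def
    set i1 : Fin m := ⟨1, by omega⟩ with hi1def
    have h01 : i0 ≠ i1 := by simp [hi0def, hi1def, Fin.ext_iff]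
    obtain ⟨d, hD, V, hV1, hV2, hVB1, hVB2⟩ :=
      pair_step (A i0) (A i1) (hAH i0) (hAH i1) (car_sq A hCAR i0) (car_sq A hCAR i1)
        (by have h := hCAR i0 i1; rwa [if_neg h01] at h)
    have conj_mul : ∀ X Y : Matrix (Fin D) (Fin D) ℂ,
        (V * X * Vᴴ) * (V * Y * Vᴴ) = V * (X * Y) * Vᴴ := by
      intro X Y
      calc (V*X*Vᴴ)*(V*Y*Vᴴ) = V*(X*((Vᴴ*V)*(Y*Vᴴ))) := by simp only [Matrix.mul_assoc]
        _ = V*(X*Y)*Vᴴ := by rw [hV2, Matrix.one_mul]; simp only [Matrix.mul_assoc]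
    have conj_add : ∀ X Y : Matrix (Fin D) (Fin D) ℂ,
        V * X * Vᴴ + V * Y * Vᴴ = V * (X + Y) * Vᴴ := by
      intro X Y
      rw [Matrix.mul_add, Matrix.add_mul]
    set n := m - 2 with hn
    have hmn : m = n + 2 := by omega
    set g : Fin n → Fin m := fun j => ⟨j.val + 2, by omega⟩ with hg
    have hg0 : ∀ j, i0 ≠ g j := by intro j; simp [hi0def, hg, Fin.ext_iff]
    have hg1 : ∀ j, i1 ≠ g j := by intro j; simp [hi1def, hg, Fin.ext_iff]
    have hginj : Function.Injective g := by
      intro a b hab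
      have : a.val + 2 = b.val + 2 := congrArg Fin.val hab
      exact Fin.ext (by omega)
    set A2 : Fin n → Matrix (Fin d) (Fin d) ℂ :=
      fun j => Matrix.of (fun a b => Complex.I * (V * A (g j) * Vᴴ) (0, a) (1, b)) with hA2
    have hM : ∀ j : Fin n, V * A (g j) * Vᴴ = PauliY ⊗ₖ A2 j := by
      intro j
      apply anticomm_extract
      · rw [← hVB1, conj_mul, conj_mul, conj_add]
        have h := hCAR i0 (g j)
        rw [if_neg (hg0 j)] at h
        rw [h, Matrix.mul_zero, Matrix.zero_mul]
      · rw [← hVB2, conj_mul, conj_mul, conj_add]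
        have h := hCAR i1 (g j)
        rw [if_neg (hg1 j)] at h
        rw [h, Matrix.mul_zero, Matrix.zero_mul]
    have hMH : ∀ j, (V * A (g j) * Vᴴ)ᴴ = V * A (g j) * Vᴴ := by
      intro j
      rw [conjTranspose_mul, conjTranspose_mul, conjTranspose_conjTranspose, hAH]
      simp only [Matrix.mul_assoc]
    have hA2H : ∀ j, (A2 j)ᴴ = A2 j := by
      intro j
      ext a b
      have hstar : star ((V * A (g j) * Vᴴ) (0, b) (1, a))
          = (V * A (g j) * Vᴴ) (1, a) (0, b) := by
        calc star ((V * A (g j) * Vᴴ) (0, b) (1, a))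
            = (V * A (g j) * Vᴴ)ᴴ (1, a) (0, b) := (conjTranspose_apply _ _ _).symm
          _ = (V * A (g j) * Vᴴ) (1, a) (0, b) := by rw [hMH j]
      have hY10 : (V * A (g j) * Vᴴ) (1, a) (0, b) = Complex.I * A2 j a b := by
        rw [hM j]
        simp [kroneckerMap_apply, PauliY]
      calc (A2 j)ᴴ a b = star (A2 j b a) := conjTranspose_apply _ _ _
        _ = star (Complex.I * (V * A (g j) * Vᴴ) (0, b) (1, a)) := rfl
        _ = star Complex.I * ((V * A (g j) * Vᴴ) (1, a) (0, b)) := by rw [star_mul', hstar]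
        _ = star Complex.I * (Complex.I * A2 j a b) := by rw [hY10]
        _ = A2 j a b := by
            rw [show star Complex.I = -Complex.I from Complex.conj_I]
            linear_combination (-(A2 j a b)) * Complex.I_mul_I
    have hA2CAR : ∀ j k, A2 j * A2 k + A2 k * A2 j
        = if j = k then (2:ℂ) • (1 : Matrix (Fin d) (Fin d) ℂ) else 0 := by
      intro j k
      have hbig : (PauliY ⊗ₖ A2 j) * (PauliY ⊗ₖ A2 k) + (PauliY ⊗ₖ A2 k) * (PauliY ⊗ₖ A2 j)
          = if j = k then (2:ℂ) • (1 : Matrix (Fin 2 × Fin d) (Fin 2 × Fin d) ℂ) else 0 := by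
        rw [← hM j, ← hM k, conj_mul, conj_mul, conj_add]
        have h := hCAR (g j) (g k)
        by_cases hjk : j = k
        · subst hjk
          rw [if_pos rfl] at h
          rw [h, if_pos rfl, Matrix.mul_smul, Matrix.mul_one, Matrix.smul_mul, hV1]
        · rw [if_neg (fun hc => hjk (hginj hc))] at h
          rw [h, if_neg hjk, Matrix.mul_zero, Matrix.zero_mul]
      rw [← Matrix.mul_kronecker_mul, ← Matrix.mul_kronecker_mul, PauliY_mul_self] at hbig
      by_cases hjk : j = k
      · subst hjk
        rw [if_pos rfl] at hbig ⊢
        ext a b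
        have h := congrFun (congrFun hbig (0, a)) (0, b)
        simp only [Matrix.add_apply, kroneckerMap_apply, Matrix.smul_apply, one_apply,
          Prod.mk.injEq, smul_eq_mul] at h ⊢
        convert h using 2 <;> simp
      · rw [if_neg hjk] at hbig ⊢
        ext a b
        have h := congrFun (congrFun hbig (0, a)) (0, b)
        simpa [kroneckerMap_apply, one_apply] using h
    have hn' : n = 2*r ∨ n = 2*r + 1 := by omega
    obtain ⟨d', hd', U', hU'1, hU'2, hU'jw, hU'odd⟩ := IH n d A2 hn' hA2H hA2CAR
    refine ⟨d', by rw [hD, hd']; ring, ?_⟩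
    set e := splitEquiv r d' with he
    set X : Matrix (Fin 2 × ((Fin r → Fin 2) × Fin d')) (Fin 2 × Fin d) ℂ :=
      (1 : Matrix (Fin 2) (Fin 2) ℂ) ⊗ₖ U' with hX
    set T : Matrix ((Fin (r+1) → Fin 2) × Fin d') (Fin 2 × Fin d) ℂ :=
      X.submatrix e id with hT
    have hXX : X * Xᴴ = 1 := by
      rw [hX, kron_conjTranspose, conjTranspose_one, ← Matrix.mul_kronecker_mul,
        Matrix.mul_one, hU'1, Matrix.one_kronecker_one]
    have hXX2 : Xᴴ * X = 1 := by
      rw [hX, kron_conjTranspose, conjTranspose_one, ← Matrix.mul_kronecker_mul,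
        Matrix.one_mul, hU'2, Matrix.one_kronecker_one]
    have hsand : ∀ B : Matrix (Fin D) (Fin D) ℂ,
        (T * V) * B * (T * V)ᴴ = (X * (V * B * Vᴴ) * Xᴴ).submatrix e e := by
      intro B
      rw [conjTranspose_mul]
      calc T*V*B*(Vᴴ*Tᴴ) = T*(V*B*Vᴴ)*Tᴴ := by simp only [Matrix.mul_assoc]
        _ = (X.submatrix e id)*(V*B*Vᴴ)*(Xᴴ.submatrix id e) := by
            rw [hT, conjTranspose_submatrix]
        _ = (X*(V*B*Vᴴ)*Xᴴ).submatrix e e := by rw [submatrix_row_mul, sub_mul_sub]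
    have hkron : ∀ (N : Matrix (Fin 2) (Fin 2) ℂ) (C : Matrix (Fin d) (Fin d) ℂ),
        X * (N ⊗ₖ C) * Xᴴ = N ⊗ₖ (U' * C * U'ᴴ) := by
      intro N C
      rw [hX, kron_conjTranspose, conjTranspose_one, ← Matrix.mul_kronecker_mul,
        ← Matrix.mul_kronecker_mul, Matrix.one_mul, Matrix.mul_one]
    refine ⟨T * V, ?_, ?_, ?_, ?_⟩
    · rw [conjTranspose_mul]
      calc T*V*(Vᴴ*Tᴴ) = T*(V*Vᴴ)*Tᴴ := by simp only [Matrix.mul_assoc]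
        _ = T*Tᴴ := by rw [hV1, Matrix.mul_one]
        _ = (X*Xᴴ).submatrix e e := by rw [hT, conjTranspose_submatrix, sub_mul_sub]
        _ = 1 := by rw [hXX, submatrix_one_equiv]
    · rw [conjTranspose_mul]
      calc Vᴴ*Tᴴ*(T*V) = Vᴴ*((Tᴴ*T)*V) := by simp only [Matrix.mul_assoc]
        _ = 1 := by
            rw [hT, conjTranspose_submatrix, sub_mid_mul, hXX2, Matrix.one_mul, hV2]
    · intro i hi
      rcases show (i:ℕ) = 0 ∨ (i:ℕ) = 1 ∨ ∃ j : Fin n, i = g j by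
        rcases Nat.lt_or_ge (i:ℕ) 2 with h | h
        · omega
        · right; right
          exact ⟨⟨(i:ℕ) - 2, by omega⟩, Fin.ext (by show (i:ℕ) = (i:ℕ) - 2 + 2; omega)⟩
        with h0 | h1 | ⟨j, hj⟩
      · rw [show ((i:ℕ) + 1) = 1 by omega]
        rw [(Fin.ext h0 : i = i0), hsand, hVB1, hkron, Matrix.mul_one, hU'1]
        exact JW_one_kron r d'
      · rw [show ((i:ℕ) + 1) = 2 by omega]
        rw [(Fin.ext h1 : i = i1), hsand, hVB2, hkron, Matrix.mul_one, hU'1]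
        exact JW_two_kron r d'
      · have hval : (i:ℕ) = (j:ℕ) + 2 := by rw [hj]
        have hjle : (j:ℕ) + 1 ≤ 2*r := by omega
        rw [show ((i:ℕ) + 1) = ((j:ℕ) + 1) + 2 by omega]
        rw [hj, hsand, hM j, hkron, hU'jw j hjle]
        exact JW_shift_kron r d' ((j:ℕ)+1) (by omega)
    · intro i hi hmodd
      have hn2r1 : n = 2*r + 1 := by omega
      set j : Fin n := ⟨n - 1, by omega⟩ with hjdef
      have hjval : (j:ℕ) = n - 1 := rfl
      have hij : i = g j := Fin.ext (by show (i:ℕ) = (j:ℕ) + 2; omega)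
      obtain ⟨A', hA'H, hA'sq, hA'eq⟩ := hU'odd j (by omega) hn2r1
      refine ⟨A', hA'H, hA'sq, ?_⟩
      rw [hij, hsand, hM j, hkron, hA'eq]
      exact JW_Y_kron r d' A'


/-- (Jordan–Wigner representation theorem.) Hermitian operators
`A₁, …, A_m` on a finite-dimensional complex Hilbert space satisfying the canonical
anticommutation relations can be brought, by a unitary `U : H → (ℂ²)^{⊗r} ⊗ ℂ^{d'}`
(`r = ⌊m/2⌋`, `dim H = 2^r · d'`), to the canonical Jordan–Wigner form; for odd `m` the
last generator becomes `Y^{⊗r} ⊗ A'_m` with `A'_m` a Hermitian unitary on `ℂ^{d'}`. -/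
theorem jordan_wigner_representation {m D : ℕ}
    (A : Fin m → Matrix (Fin D) (Fin D) ℂ)
    (hAH : ∀ i, (A i)ᴴ = A i)
    (hCAR : ∀ i k, A i * A k + A k * A i = if i = k then (2 : ℂ) • 1 else 0) :
    ∃ d' : ℕ, D = 2 ^ (m / 2) * d' ∧
      ∃ U : Matrix ((Fin (m / 2) → Fin 2) × Fin d') (Fin D) ℂ,
        U * Uᴴ = 1 ∧ Uᴴ * U = 1 ∧
        (∀ i : Fin m, (i : ℕ) + 1 ≤ 2 * (m / 2) →
          U * A i * Uᴴ
            = JWgen (m / 2) ((i : ℕ) + 1) ⊗ₖ (1 : Matrix (Fin d') (Fin d') ℂ)) ∧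
        (m % 2 = 1 → ∀ i : Fin m, (i : ℕ) + 1 = m →
          ∃ A' : Matrix (Fin d') (Fin d') ℂ, A'ᴴ = A' ∧ A' * A' = 1 ∧
            U * A i * Uᴴ = qubitTensor (m / 2) (fun _ => PauliY) ⊗ₖ A') := by
  have hm : m = 2 * (m / 2) ∨ m = 2 * (m / 2) + 1 := by omega
  obtain ⟨d', hd', U, hU1, hU2, hjw, hodd⟩ := JW_aux (m / 2) m D A hm hAH hCAR
  exact ⟨d', hd', U, hU1, hU2, hjw, fun hm1 i hi => hodd i hi (by omega)⟩

end
end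

section
/- (Structure of the commutant, Theorem 3.) Let r ≥ 1, let H' be a finite-dimensional complex Hilbert space, and consider the 2r Jordan–Wigner generators on (ℂ²)^{⊗r} ⊗ H': G_i = Y^{⊗(i−1)/2} ⊗ Z ⊗ I₂^{⊗(2r−i−1)/2} ⊗ 1_{H'} for odd i, and G_i = Y^{⊗(i−2)/2} ⊗ X ⊗ I₂^{⊗(2r−i)/2} ⊗ 1_{H'} for even i, i = 1,…,2r. If P is a positive semidefinite operator on (ℂ²)^{⊗r} ⊗ H' commuting with G_i for every i ∈ {1,…,2r}, then P = I₂^{⊗r} ⊗ P' for some positive semidefinite operator P' on H'. Moreover, if A'_m is a Hermitian unitary on H' and P also commutes with Y^{⊗r} ⊗ A'_m, then P' commutes with A'_m. -/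
open Matrix Kronecker Finset
open scoped ComplexOrder

noncomputable section

/-- The `i`-th Jordan–Wigner generator (1-indexed) on `r` qubits, tensored with the
identity on an auxiliary space `ℂ^{d'}`. -/
def JWgenAux (r d' i : ℕ) :
    Matrix ((Fin r → Fin 2) × Fin d') ((Fin r → Fin 2) × Fin d') ℂ :=
  qubitTensor r (JWfactor i) ⊗ₖ (1 : Matrix (Fin d') (Fin d') ℂ)

namespace CCSaux

abbrev M2 := Matrix (Fin 2) (Fin 2) ℂ

/- Pauli facts -/
lemma YY : PauliY * PauliY = 1 := by
  ext i j; fin_cases i <;> fin_cases j <;>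
    simp [PauliY, Matrix.mul_apply, Fin.sum_univ_two, Matrix.one_apply, Complex.I_mul_I]

lemma ZX : PauliZ * PauliX = Complex.I • PauliY := by
  ext i j; fin_cases i <;> fin_cases j <;>
    simp [PauliY, PauliZ, PauliX, Matrix.mul_apply, Fin.sum_univ_two]

lemma PauliZ_diag (a : Fin 2) : PauliZ a a = if a = 0 then 1 else -1 := by
  fin_cases a <;> simp [PauliZ]

lemma PauliZ_off {a b : Fin 2} (h : a ≠ b) : PauliZ a b = 0 := by
  fin_cases a <;> fin_cases b <;> simp_all [PauliZ]

lemma PauliX_apply (a b : Fin 2) : PauliX a b = if b = a + 1 then 1 else 0 := by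
  fin_cases a <;> fin_cases b <;> simp [PauliX]

lemma PauliY01 : PauliY 0 1 = -Complex.I := by simp [PauliY]

/- qubitTensor algebra -/
lemma qT_congr {r : ℕ} {f g : ℕ → M2} (h : ∀ k : Fin r, f (k.val+1) = g (k.val+1)) :
    qubitTensor r f = qubitTensor r g := by
  ext v w
  simp only [qubitTensor, Matrix.of_apply]
  exact Finset.prod_congr rfl (fun k _ => by rw [h k])

lemma qT_mul {r : ℕ} (f g : ℕ → M2) :
    qubitTensor r f * qubitTensor r g = qubitTensor r (fun k => f k * g k) := by
  ext v w
  simp only [qubitTensor, Matrix.mul_apply, Matrix.of_apply]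
  rw [Fintype.prod_sum fun (k : Fin r) (j : Fin 2) => f (k.val+1) (v k) j * g (k.val+1) j (w k)]
  exact Finset.sum_congr rfl fun u _ => (Finset.prod_mul_distrib).symm

lemma qT_one {r : ℕ} : qubitTensor r (fun _ => 1) = 1 := by
  ext v w
  simp only [qubitTensor, Matrix.of_apply, Matrix.one_apply, Finset.prod_boole]
  by_cases h : v = w
  · simp [h]
  · rw [if_neg, if_neg h]
    intro hall
    exact h (funext fun k => hall k (Finset.mem_univ k))

def sitefun (k : ℕ) (A : M2) : ℕ → M2 := fun j => if j = k then A else 1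

lemma qT_site_apply {r : ℕ} (k : Fin r) (A : M2) (v w : Fin r → Fin 2) :
    qubitTensor r (sitefun (k.val + 1) A) v w
      = if ∀ j, j ≠ k → v j = w j then A (v k) (w k) else 0 := by
  show (Matrix.of _ : Matrix _ _ ℂ) v w = _
  rw [Matrix.of_apply]
  rw [← Finset.mul_prod_erase Finset.univ _ (Finset.mem_univ k)]
  have h1 : sitefun (k.val+1) A (k.val + 1) = A := by simp [sitefun]
  have h2 : ∀ j : Fin r, j ≠ k → sitefun (k.val+1) A (j.val + 1) = (1 : M2) := by
    intro j hj
    have : j.val + 1 ≠ k.val + 1 := by simpa [Fin.val_eq_val] using hj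
    simp [sitefun, this, Fin.val_injective.ne hj]
  rw [h1]
  have : ∏ j ∈ Finset.univ.erase k, sitefun (k.val+1) A (j.val + 1) (v j) (w j)
      = ∏ j ∈ Finset.univ.erase k, (if v j = w j then (1:ℂ) else 0) := by
    refine Finset.prod_congr rfl fun j hj => ?_
    rw [h2 j (Finset.mem_erase.1 hj).1, Matrix.one_apply]
  rw [this, Finset.prod_boole]
  by_cases h : ∀ j, j ≠ k → v j = w j
  · rw [if_pos, if_pos h, mul_one]
    intro j hj; exact h j (Finset.mem_erase.1 hj).1
  · rw [if_neg, if_neg h, mul_zero]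
    intro hall
    exact h fun j hj => hall j (Finset.mem_erase.2 ⟨hj, Finset.mem_univ j⟩)

lemma qT_site_smul {r : ℕ} (k : Fin r) (c : ℂ) (A : M2) :
    qubitTensor r (sitefun (k.val+1) (c • A)) = c • qubitTensor r (sitefun (k.val+1) A) := by
  ext v w
  rw [Matrix.smul_apply, qT_site_apply, qT_site_apply, smul_eq_mul]
  split_ifs
  · rw [Matrix.smul_apply, smul_eq_mul]
  · rw [mul_zero]

def flipk {r : ℕ} (k : Fin r) (v : Fin r → Fin 2) : Fin r → Fin 2 :=
  Function.update v k (v k + 1)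

lemma flipk_flipk {r : ℕ} (k : Fin r) (v : Fin r → Fin 2) : flipk k (flipk k v) = v := by
  funext j
  by_cases hj : j = k
  · subst hj
    simp only [flipk, Function.update_self]
    have : ∀ x : Fin 2, x + 1 + 1 = x := by decide
    rw [this]
  · simp only [flipk, Function.update_of_ne hj]

lemma flipk_apply_ne {r : ℕ} (k : Fin r) (v : Fin r → Fin 2) {j : Fin r} (hj : j ≠ k) :
    flipk k v j = v j := Function.update_of_ne hj _ _

lemma flipk_apply_self {r : ℕ} (k : Fin r) (v : Fin r → Fin 2) :
    flipk k v k = v k + 1 := Function.update_self _ _ _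

lemma Zk_apply {r : ℕ} (k : Fin r) (u w : Fin r → Fin 2) :
    qubitTensor r (sitefun (k.val+1) PauliZ) u w
      = if u = w then (if w k = 0 then 1 else -1) else 0 := by
  rw [qT_site_apply]
  by_cases huw : u = w
  · subst huw
    rw [if_pos (fun j _ => rfl), if_pos rfl, PauliZ_diag]
  · rw [if_neg huw]
    by_cases hc : ∀ j, j ≠ k → u j = w j
    · rw [if_pos hc]
      have hk : u k ≠ w k := by
        intro h
        exact huw (funext fun j => by by_cases hj : j = k
                                      · subst hj; exact h
                                      · exact hc j hj)
      exact PauliZ_off hk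
    · rw [if_neg hc]

lemma Xk_apply {r : ℕ} (k : Fin r) (u w : Fin r → Fin 2) :
    qubitTensor r (sitefun (k.val+1) PauliX) u w
      = if w = flipk k u then 1 else 0 := by
  rw [qT_site_apply]
  by_cases hc : ∀ j, j ≠ k → u j = w j
  · rw [if_pos hc, PauliX_apply]
    congr 1
    apply propext
    constructor
    · intro h
      funext j
      by_cases hj : j = k
      · subst hj; rw [flipk_apply_self]; exact h
      · rw [flipk_apply_ne k u hj]; exact (hc j hj).symm
    · intro h
      rw [h, flipk_apply_self]
  · rw [if_neg hc, if_neg]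
    intro h
    apply hc
    intro j hj
    rw [h, flipk_apply_ne k u hj]

/- kronecker entry computations -/
lemma mulk_right {r d' : ℕ} (P : Matrix ((Fin r → Fin 2) × Fin d') ((Fin r → Fin 2) × Fin d') ℂ)
    (Q : Matrix (Fin r → Fin 2) (Fin r → Fin 2) ℂ) (v w : Fin r → Fin 2) (a b : Fin d') :
    (P * (Q ⊗ₖ (1 : Matrix (Fin d') (Fin d') ℂ))) (v,a) (w,b)
      = ∑ u : Fin r → Fin 2, P (v,a) (u,b) * Q u w := by
  rw [Matrix.mul_apply, Fintype.sum_prod_type]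
  refine Finset.sum_congr rfl fun u _ => ?_
  simp only [Matrix.kroneckerMap_apply, Matrix.one_apply, mul_ite, mul_one, mul_zero]
  rw [Finset.sum_eq_single b]
  · simp [mul_comm]
  · intro c _ hc; simp [hc]
  · intro h; exact absurd (Finset.mem_univ b) h

lemma mulk_left {r d' : ℕ} (P : Matrix ((Fin r → Fin 2) × Fin d') ((Fin r → Fin 2) × Fin d') ℂ)
    (Q : Matrix (Fin r → Fin 2) (Fin r → Fin 2) ℂ) (v w : Fin r → Fin 2) (a b : Fin d') :
    ((Q ⊗ₖ (1 : Matrix (Fin d') (Fin d') ℂ)) * P) (v,a) (w,b)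
      = ∑ u : Fin r → Fin 2, Q v u * P (u,a) (w,b) := by
  rw [Matrix.mul_apply, Fintype.sum_prod_type]
  refine Finset.sum_congr rfl fun u _ => ?_
  simp only [Matrix.kroneckerMap_apply, Matrix.one_apply, mul_ite, mul_one, mul_zero, ite_mul,
    zero_mul]
  rw [Finset.sum_eq_single a]
  · simp
  · intro c _ hc; rw [if_neg (fun h : a = c => hc h.symm)]
  · intro h; exact absurd (Finset.mem_univ a) h

def prefY (m : ℕ) : ℕ → M2 := fun j => if j ≤ m then PauliY else 1

end CCSaux

open CCSaux

/-- (Structure of the commutant, Theorem 3.) If a positive semidefinite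
operator `P` on `(ℂ²)^{⊗r} ⊗ H'` commutes with all `2r` Jordan–Wigner generators
`G₁, …, G_{2r}` (tensored with `1_{H'}`), then `P = I₂^{⊗r} ⊗ P'` for some positive
semidefinite `P'` on `H'`; moreover, if `A'_m` is a Hermitian unitary on `H'` and `P`
also commutes with `Y^{⊗r} ⊗ A'_m`, then `P'` commutes with `A'_m`. -/
theorem clifford_commutant_structure {r d' : ℕ} (hr : 1 ≤ r)
    (P : Matrix ((Fin r → Fin 2) × Fin d') ((Fin r → Fin 2) × Fin d') ℂ)
    (hP : P.PosSemidef)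
    (hcomm : ∀ i : ℕ, 1 ≤ i → i ≤ 2 * r → P * JWgenAux r d' i = JWgenAux r d' i * P) :
    ∃ P' : Matrix (Fin d') (Fin d') ℂ, P'.PosSemidef ∧
      P = (1 : Matrix (Fin r → Fin 2) (Fin r → Fin 2) ℂ) ⊗ₖ P' ∧
      ∀ A' : Matrix (Fin d') (Fin d') ℂ, A'ᴴ = A' → A' * A' = 1 →
        P * (qubitTensor r (fun _ => PauliY) ⊗ₖ A')
          = (qubitTensor r (fun _ => PauliY) ⊗ₖ A') * P →
        P' * A' = A' * P' := by
  classical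
  set CP : Matrix (Fin r → Fin 2) (Fin r → Fin 2) ℂ → Prop :=
    fun A => P * (A ⊗ₖ (1 : Matrix (Fin d') (Fin d') ℂ))
      = (A ⊗ₖ (1 : Matrix (Fin d') (Fin d') ℂ)) * P with hCP
  have comm_mul : ∀ A B, CP A → CP B → CP (A * B) := by
    intro A B hA hB
    show P * ((A*B) ⊗ₖ _) = _
    rw [show ((A*B) ⊗ₖ (1 : Matrix (Fin d') (Fin d') ℂ))
        = (A ⊗ₖ 1) * (B ⊗ₖ 1) by rw [← Matrix.mul_kronecker_mul, mul_one]]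
    rw [← mul_assoc, hA, mul_assoc, hB, ← mul_assoc]
  have comm_smul : ∀ (c : ℂ) A, CP A → CP (c • A) := by
    intro c A hA
    show P * ((c • A) ⊗ₖ _) = _
    rw [Matrix.smul_kronecker, Matrix.mul_smul, Matrix.smul_mul, hA]
  have hgen : ∀ i : ℕ, 1 ≤ i → i ≤ 2*r → CP (qubitTensor r (JWfactor i)) :=
    fun i h1 h2 => hcomm i h1 h2
  -- single-site Y
  have hYk : ∀ k : Fin r, CP (qubitTensor r (sitefun (k.val+1) PauliY)) := by
    intro k
    have h1 := hgen (2*k.val+1) (by omega) (by omega)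
    have h2 := hgen (2*k.val+2) (by omega) (by omega)
    have hprod := comm_mul _ _ h1 h2
    rw [qT_mul] at hprod
    have heq : qubitTensor r (fun j => JWfactor (2*k.val+1) j * JWfactor (2*k.val+2) j)
        = qubitTensor r (sitefun (k.val+1) (Complex.I • PauliY)) := by
      apply qT_congr
      intro m
      have e1 : (2*k.val+1 + 1)/2 = k.val+1 := by omega
      have e2 : (2*k.val+1) % 2 = 1 := by omega
      have e3 : (2*k.val+2 + 1)/2 = k.val+1 := by omega
      have e4 : (2*k.val+2) % 2 = 0 := by omega
      simp only [JWfactor, e1, e2, e3, e4, sitefun]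
      split_ifs <;> first | (exfalso; first | omega | assumption) | exact YY | exact ZX | exact mul_one _ | exact one_mul _ | simp
    rw [heq, qT_site_smul] at hprod
    have := comm_smul (-Complex.I) _ hprod
    rwa [smul_smul, show -Complex.I * Complex.I = 1 by
      rw [neg_mul, Complex.I_mul_I, neg_neg], one_smul] at this
  -- Y prefixes
  have hPre : ∀ m : ℕ, m ≤ r → CP (qubitTensor r (prefY m)) := by
    intro m
    induction m with
    | zero =>
      intro _
      have : qubitTensor r (prefY 0) = 1 := by
        rw [show qubitTensor r (prefY 0) = qubitTensor r (fun _ => 1) from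
          qT_congr (fun k => by simp [prefY]), qT_one]
      rw [hCP, this]
      simp
    | succ m ih =>
      intro hm
      have hk : m < r := by omega
      have hYm : CP (qubitTensor r (sitefun (m+1) PauliY)) := hYk ⟨m, hk⟩
      have hprod := comm_mul _ _ (ih (by omega)) hYm
      rw [qT_mul] at hprod
      have heq : qubitTensor r (fun j => prefY m j * sitefun (m+1) PauliY j)
          = qubitTensor r (prefY (m+1)) := by
        apply qT_congr
        intro t
        simp only [prefY, sitefun]
        split_ifs <;> first | (exfalso; first | omega | assumption) | exact mul_one _ | exact one_mul _ | rfl | simp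
      rwa [heq] at hprod
  -- single-site Z and X
  have hZk : ∀ k : Fin r, CP (qubitTensor r (sitefun (k.val+1) PauliZ)) := by
    intro k
    have h1 := hgen (2*k.val+1) (by omega) (by omega)
    have hprod := comm_mul _ _ (hPre k.val (by omega)) h1
    rw [qT_mul] at hprod
    have heq : qubitTensor r (fun j => prefY k.val j * JWfactor (2*k.val+1) j)
        = qubitTensor r (sitefun (k.val+1) PauliZ) := by
      apply qT_congr
      intro m
      have e1 : (2*k.val+1 + 1)/2 = k.val+1 := by omega
      have e2 : (2*k.val+1) % 2 = 1 := by omega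
      simp only [JWfactor, prefY, sitefun, e1, e2]
      split_ifs <;> first | (exfalso; first | omega | assumption) | exact YY | exact ZX | exact mul_one _ | exact one_mul _ | simp
    rwa [heq] at hprod
  have hXk : ∀ k : Fin r, CP (qubitTensor r (sitefun (k.val+1) PauliX)) := by
    intro k
    have h1 := hgen (2*k.val+2) (by omega) (by omega)
    have hprod := comm_mul _ _ (hPre k.val (by omega)) h1
    rw [qT_mul] at hprod
    have heq : qubitTensor r (fun j => prefY k.val j * JWfactor (2*k.val+2) j)
        = qubitTensor r (sitefun (k.val+1) PauliX) := by
      apply qT_congr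
      intro m
      have e1 : (2*k.val+2 + 1)/2 = k.val+1 := by omega
      have e2 : (2*k.val+2) % 2 = 0 := by omega
      simp only [JWfactor, prefY, sitefun, e1, e2]
      split_ifs <;> first | (exfalso; first | omega | assumption) | exact YY | exact ZX | exact mul_one _ | exact one_mul _ | simp
    rwa [heq] at hprod
  -- entrywise consequences
  have entry_Z : ∀ (k : Fin r) (v w : Fin r → Fin 2) (a b : Fin d'),
      P (v,a) (w,b) * (if w k = 0 then 1 else -1)
        = (if v k = 0 then 1 else -1) * P (v,a) (w,b) := by
    intro k v w a b
    have h := hZk k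
    have h' := Matrix.ext_iff.2 h (v,a) (w,b)
    rw [mulk_right, mulk_left] at h'
    have hL : ∑ u : Fin r → Fin 2, P (v,a) (u,b) * qubitTensor r (sitefun (k.val+1) PauliZ) u w
        = P (v,a) (w,b) * (if w k = 0 then 1 else -1) := by
      rw [Finset.sum_eq_single w]
      · rw [Zk_apply, if_pos rfl]
      · intro u _ hu; rw [Zk_apply, if_neg hu, mul_zero]
      · intro h; exact absurd (Finset.mem_univ w) h
    have hR : ∑ u : Fin r → Fin 2, qubitTensor r (sitefun (k.val+1) PauliZ) v u * P (u,a) (w,b)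
        = (if v k = 0 then 1 else -1) * P (v,a) (w,b) := by
      rw [Finset.sum_eq_single v]
      · rw [Zk_apply, if_pos rfl]
      · intro u _ hu; rw [Zk_apply, if_neg (fun h => hu h.symm), zero_mul]
      · intro h; exact absurd (Finset.mem_univ v) h
    rw [hL, hR] at h'
    exact h'
  have offdiag : ∀ (v w : Fin r → Fin 2) (a : Fin d') (b : Fin d'), v ≠ w →
      P (v,a) (w,b) = 0 := by
    intro v w a b hvw
    obtain ⟨k, hk⟩ := Function.ne_iff.1 hvw
    have h := entry_Z k v w a b
    have h2 : ∀ x : Fin 2, x = 0 ∨ x = 1 := by decide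
    rcases h2 (v k) with h3 | h3 <;> rcases h2 (w k) with h4 | h4 <;>
      rw [h3, h4] at h hk <;> simp at h hk <;>
      first
        | linear_combination (-(1:ℂ)/2) * h
        | linear_combination ((1:ℂ)/2) * h
  have entry_X : ∀ (k : Fin r) (v w : Fin r → Fin 2) (a b : Fin d'),
      P (v,a) (flipk k w, b) = P (flipk k v, a) (w, b) := by
    intro k v w a b
    have h := hXk k
    have h' := Matrix.ext_iff.2 h (v,a) (w,b)
    rw [mulk_right, mulk_left] at h'
    have hL : ∑ u : Fin r → Fin 2, P (v,a) (u,b) * qubitTensor r (sitefun (k.val+1) PauliX) u w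
        = P (v,a) (flipk k w, b) := by
      rw [Finset.sum_eq_single (flipk k w)]
      · rw [Xk_apply, if_pos, mul_one]
        rw [flipk_flipk]
      · intro u _ hu
        rw [Xk_apply, if_neg, mul_zero]
        intro hcon
        exact hu (by rw [hcon, flipk_flipk])
      · intro h; exact absurd (Finset.mem_univ _) h
    have hR : ∑ u : Fin r → Fin 2, qubitTensor r (sitefun (k.val+1) PauliX) v u * P (u,a) (w,b)
        = P (flipk k v, a) (w, b) := by
      rw [Finset.sum_eq_single (flipk k v)]
      · rw [Xk_apply, if_pos rfl, one_mul]
      · intro u _ hu; rw [Xk_apply, if_neg hu, zero_mul]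
      · intro h; exact absurd (Finset.mem_univ _) h
    rw [hL, hR] at h'
    exact h'
  set v0 : Fin r → Fin 2 := fun _ => 0 with hv0
  have flip_diag : ∀ (k : Fin r) (x : Fin r → Fin 2) (a b : Fin d'),
      P (flipk k x, a) (flipk k x, b) = P (x,a) (x,b) := by
    intro k x a b
    have := entry_X k (flipk k x) x a b
    rwa [flipk_flipk] at this
  have diagconst : ∀ (v : Fin r → Fin 2) (a b : Fin d'),
      P (v,a) (v,b) = P (v0,a) (v0,b) := by
    intro v a b
    set chi : Finset (Fin r) → (Fin r → Fin 2) := fun s j => if j ∈ s then 1 else 0 with hchi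
    have key : ∀ s : Finset (Fin r), P (chi s, a) (chi s, b) = P (v0,a) (v0,b) := by
      intro s
      induction s using Finset.induction_on with
      | empty =>
        have : chi ∅ = v0 := by funext j; simp [hchi, hv0]
        rw [this]
      | @insert k s hk ih =>
        have hflip : chi (insert k s) = flipk k (chi s) := by
          funext j
          by_cases hj : j = k
          · subst hj
            rw [flipk_apply_self]
            simp [hchi, hk]
          · rw [flipk_apply_ne k _ hj]
            simp [hchi, hj]
        rw [hflip, flip_diag, ih]
    have hv : v = chi (Finset.univ.filter (fun j => v j = 1)) := by
      funext j
      have h2 : ∀ x : Fin 2, x = 0 ∨ x = 1 := by decide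
      rcases h2 (v j) with h3 | h3 <;> simp [hchi, h3]
    rw [hv, key]
  -- construct P'
  have hPeq : P = (1 : Matrix (Fin r → Fin 2) (Fin r → Fin 2) ℂ)
      ⊗ₖ P.submatrix (fun a => (v0, a)) (fun a => (v0, a)) := by
    ext ⟨v, a⟩ ⟨w, b⟩
    rw [Matrix.kroneckerMap_apply, Matrix.one_apply, Matrix.submatrix_apply]
    by_cases hvw : v = w
    · subst hvw
      rw [if_pos rfl, one_mul, diagconst]
    · rw [if_neg hvw, zero_mul, offdiag v w a b hvw]
  refine ⟨P.submatrix (fun a => (v0, a)) (fun a => (v0, a)), hP.submatrix _, hPeq, ?_⟩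
  intro A' _ _ hYA
  set P' := P.submatrix (fun a => (v0, a)) (fun a => (v0, a)) with hP'
  rw [hPeq, ← Matrix.mul_kronecker_mul, ← Matrix.mul_kronecker_mul, one_mul, mul_one] at hYA
  set v1 : Fin r → Fin 2 := fun _ => 1 with hv1
  have hentry := Matrix.ext_iff.2 hYA
  ext a b
  have h := hentry (v0, a) (v1, b)
  rw [Matrix.kroneckerMap_apply, Matrix.kroneckerMap_apply] at h
  have hY : qubitTensor r (fun _ => PauliY) v0 v1 = (-Complex.I) ^ r := by
    show (Matrix.of _ : Matrix _ _ ℂ) v0 v1 = _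
    rw [Matrix.of_apply]
    simp [hv0, hv1, PauliY01]
  rw [hY] at h
  exact mul_left_cancel₀ (pow_ne_zero r (neg_ne_zero.2 Complex.I_ne_zero)) h
end
end

section
/- (Converse direction of the self-testing lemma, Lemma B.1.) Let M be a real n × (m(m−1)/2) matrix, columns indexed by pairs (i,k) with 1 ≤ i < k ≤ m, and suppose M does not have full column rank, so there exists a nonzero s ∈ ℝ^{m(m−1)/2} with M s = 0. Let S be the symmetric m×m matrix with zero diagonal and S_{ik} = S_{ki} = s_{(i,k)} for i < k. Then for every real α with |α| < 1/‖S‖ (‖S‖ the spectral norm), there exist Hermitian matrices A_1(α),…,A_m(α) of size 2^⌈m/2⌉ × 2^⌈m/2⌉ with A_i(α)² = I, satisfying Σ_{1 ≤ i < k ≤ m} M_{j,(i,k)} (A_i(α) A_k(α) + A_k(α) A_i(α)) = 0 for all j ∈ {1,…,n}, and such that A_i(α) A_k(α) + A_k(α) A_i(α) = 2 α s_{(i,k)} · I for all i < k. In particular, for 0 < |α| < 1/‖S‖ these observables satisfy the linear system but are not pairwise anticommuting. -/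
open Matrix Finset
open scoped Matrix.Norms.L2Operator Kronecker

namespace NFR

def σx : Matrix (Fin 2) (Fin 2) ℂ := !![0, 1; 1, 0]
def σy : Matrix (Fin 2) (Fin 2) ℂ := !![0, -Complex.I; Complex.I, 0]
def σz : Matrix (Fin 2) (Fin 2) ℂ := !![1, 0; 0, -1]

lemma σx_herm : σxᴴ = σx := by
  ext i j; fin_cases i <;> fin_cases j <;> simp [σx]
lemma σy_herm : σyᴴ = σy := by
  ext i j; fin_cases i <;> fin_cases j <;> simp [σy]
lemma σz_herm : σzᴴ = σz := by
  ext i j; fin_cases i <;> fin_cases j <;> simp [σz]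

lemma σx_sq : σx * σx = 1 := by
  simp [σx, Matrix.mul_fin_two, Matrix.one_fin_two]
lemma σy_sq : σy * σy = 1 := by
  simp [σy, Matrix.mul_fin_two, Matrix.one_fin_two, Complex.I_mul_I]
lemma σz_sq : σz * σz = 1 := by
  simp [σz, Matrix.mul_fin_two, Matrix.one_fin_two]

lemma σzx : σz * σx + σx * σz = 0 := by
  ext i j
  fin_cases i <;> fin_cases j <;>
    simp [σx, σz, Matrix.mul_fin_two]
lemma σzy : σz * σy + σy * σz = 0 := by
  ext i j
  fin_cases i <;> fin_cases j <;>
    simp [σy, σz, Matrix.mul_fin_two]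
lemma σxy : σx * σy + σy * σx = 0 := by
  ext i j
  fin_cases i <;> fin_cases j <;>
    simp [σx, σy, Matrix.mul_fin_two]

def dimEquiv (k : ℕ) : Fin 2 × Fin (2 ^ k) ≃ Fin (2 ^ (k + 1)) :=
  finProdFinEquiv.trans (finCongr (by ring))

noncomputable def E (k : ℕ) :
    Matrix (Fin 2 × Fin (2 ^ k)) (Fin 2 × Fin (2 ^ k)) ℂ ≃ₐ[ℂ]
      Matrix (Fin (2 ^ (k + 1))) (Fin (2 ^ (k + 1))) ℂ :=
  Matrix.reindexAlgEquiv ℂ ℂ (dimEquiv k)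

lemma E_conjTranspose (k : ℕ) (M : Matrix (Fin 2 × Fin (2 ^ k)) (Fin 2 × Fin (2 ^ k)) ℂ) :
    (E k M)ᴴ = E k Mᴴ := by
  simp [E, Matrix.conjTranspose_reindex]

noncomputable def gam : (k : ℕ) → Fin (2 * k) → Matrix (Fin (2 ^ k)) (Fin (2 ^ k)) ℂ
  | 0, j => j.elim0
  | k + 1, j =>
    if h : (j : ℕ) < 2 * k then E k (σz ⊗ₖ gam k ⟨j, h⟩)
    else if (j : ℕ) = 2 * k then E k (σx ⊗ₖ 1)
    else E k (σy ⊗ₖ 1)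

lemma kron_herm {A : Matrix (Fin 2) (Fin 2) ℂ} {k : ℕ}
    {B : Matrix (Fin (2^k)) (Fin (2^k)) ℂ} (hA : Aᴴ = A) (hB : Bᴴ = B) :
    (A ⊗ₖ B)ᴴ = A ⊗ₖ B := by
  ext ⟨a, b⟩ ⟨c, d⟩
  simp only [conjTranspose_apply, kroneckerMap_apply, star_mul']
  rw [← conjTranspose_apply, ← conjTranspose_apply, hA, hB]

lemma gam_herm : ∀ (k : ℕ) (j : Fin (2 * k)), (gam k j)ᴴ = gam k j := by
  intro k
  induction k with
  | zero => exact fun j => j.elim0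
  | succ k ih =>
    intro j
    rw [gam]
    split_ifs with h1 h2
    · rw [E_conjTranspose, kron_herm σz_herm (ih _)]
    · rw [E_conjTranspose, kron_herm σx_herm conjTranspose_one]
    · rw [E_conjTranspose, kron_herm σy_herm conjTranspose_one]

lemma gam_sq : ∀ (k : ℕ) (j : Fin (2 * k)), gam k j * gam k j = 1 := by
  intro k
  induction k with
  | zero => exact fun j => j.elim0
  | succ k ih =>
    intro j
    rw [gam]
    split_ifs with h1 h2 <;>
      rw [← _root_.map_mul, ← Matrix.mul_kronecker_mul] <;>
      simp [σz_sq, σx_sq, σy_sq, ih, Matrix.one_kronecker_one]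

lemma Ekron_anticomm {k : ℕ} (X Y : Matrix (Fin 2) (Fin 2) ℂ)
    (A B : Matrix (Fin (2 ^ k)) (Fin (2 ^ k)) ℂ) :
    E k (X ⊗ₖ A) * E k (Y ⊗ₖ B) + E k (Y ⊗ₖ B) * E k (X ⊗ₖ A)
      = E k ((X * Y) ⊗ₖ (A * B) + (Y * X) ⊗ₖ (B * A)) := by
  rw [map_add, ← _root_.map_mul, ← _root_.map_mul, ← Matrix.mul_kronecker_mul,
    ← Matrix.mul_kronecker_mul]

lemma gam_anticomm : ∀ (k : ℕ) (j l : Fin (2 * k)), j ≠ l →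
    gam k j * gam k l + gam k l * gam k j = 0 := by
  intro k
  induction k with
  | zero => exact fun j => j.elim0
  | succ k ih =>
    intro j l hjl
    have hne : (j : ℕ) ≠ (l : ℕ) := fun h => hjl (Fin.ext h)
    rw [gam, gam]
    split_ifs with h1 h2 h3 h4 h5 h6 h7 h8 <;> rw [Ekron_anticomm]
    · rw [σz_sq, ← Matrix.kronecker_add, ih _ _ (by simp only [ne_eq, Fin.mk.injEq]; exact hne),
        Matrix.kronecker_zero, map_zero]
    · rw [mul_one, one_mul, ← Matrix.add_kronecker, σzx, Matrix.zero_kronecker, map_zero]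
    · rw [mul_one, one_mul, ← Matrix.add_kronecker, σzy, Matrix.zero_kronecker, map_zero]
    · rw [mul_one, one_mul, ← Matrix.add_kronecker, show σx * σz + σz * σx = 0 by
        rw [add_comm]; exact σzx, Matrix.zero_kronecker, map_zero]
    · exact absurd (h4.trans h6.symm) hne
    · rw [one_mul, ← Matrix.add_kronecker, σxy, Matrix.zero_kronecker, map_zero]
    · rw [mul_one, one_mul, ← Matrix.add_kronecker, show σy * σz + σz * σy = 0 by
        rw [add_comm]; exact σzy, Matrix.zero_kronecker, map_zero]
    · rw [one_mul, ← Matrix.add_kronecker, show σy * σx + σx * σy = 0 by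
        rw [add_comm]; exact σxy, Matrix.zero_kronecker, map_zero]
    · exact absurd (by omega : (j : ℕ) = l) hne

end NFR

open NFR in
/-- (Converse direction of the self-testing lemma, Lemma B.1.)
If `M` does not have full column rank, witnessed by a nonzero `s` with `M s = 0`, let `S`
be the symmetric `m × m` matrix with zero diagonal and `S_{ik} = S_{ki} = s_{(i,k)}` for
`i < k`. Then for every real `α` with `|α| < 1/‖S‖` (`‖S‖` the spectral norm) there are
Hermitian involutions `A₁(α), …, A_m(α)` of size `2^⌈m/2⌉` satisfying the linear system
`Σ_{i<k} M_{j,(i,k)} {Aᵢ(α), Aₖ(α)} = 0` for all `j`, with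
`{Aᵢ(α), Aₖ(α)} = 2α s_{(i,k)} I` for all `i < k`; in particular, for `0 < |α|` these
observables satisfy the linear system but are not pairwise anticommuting. -/
theorem not_full_rank_admits_non_anticommuting {m n : ℕ}
    (M : Matrix (Fin n) {p : Fin m × Fin m // p.1 < p.2} ℝ)
    (s : {p : Fin m × Fin m // p.1 < p.2} → ℝ) (hs : s ≠ 0)
    (hMs : M.mulVec s = 0)
    (S : Matrix (Fin m) (Fin m) ℝ)
    (hSdiag : ∀ i, S i i = 0)
    (hSsym : ∀ p : {p : Fin m × Fin m // p.1 < p.2},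
      S p.1.1 p.1.2 = s p ∧ S p.1.2 p.1.1 = s p)
    (α : ℝ) (hα : |α| < 1 / ‖S‖) :
    ∃ A : Fin m → Matrix (Fin (2 ^ ((m + 1) / 2))) (Fin (2 ^ ((m + 1) / 2))) ℂ,
      (∀ i, (A i)ᴴ = A i) ∧
      (∀ i, A i * A i = 1) ∧
      (∀ j : Fin n,
        ∑ p : {p : Fin m × Fin m // p.1 < p.2},
          M j p • (A p.1.1 * A p.1.2 + A p.1.2 * A p.1.1) = 0) ∧
      (∀ p : {p : Fin m × Fin m // p.1 < p.2},
        A p.1.1 * A p.1.2 + A p.1.2 * A p.1.1 = ((2 * α * s p : ℝ) : ℂ) • 1) ∧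
      (0 < |α| → ∃ p : {p : Fin m × Fin m // p.1 < p.2},
        A p.1.1 * A p.1.2 + A p.1.2 * A p.1.1 ≠ 0) := by
  -- basic facts about the norm bound
  have hαS1 : |α| * ‖S‖ ≤ 1 := by
    rcases eq_or_lt_of_le (norm_nonneg S) with h0 | h0
    · rw [← h0, mul_zero]; norm_num
    · have := (lt_div_iff₀ h0).mp (by rwa [one_div] at hα ⊢)
      linarith
  -- symmetry of S
  have hsym' : ∀ i k : Fin m, S k i = S i k := by
    intro i k
    rcases lt_trichotomy i k with h | h | h
    · rw [(hSsym ⟨(i, k), h⟩).1, (hSsym ⟨(i, k), h⟩).2]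
    · rw [h]
    · rw [(hSsym ⟨(k, i), h⟩).1, (hSsym ⟨(k, i), h⟩).2]
  -- the Gram matrix
  set G : Matrix (Fin m) (Fin m) ℝ := 1 + α • S with hGdef
  have hGherm : G.IsHermitian := by
    unfold Matrix.IsHermitian
    ext i k
    simp [hGdef, Matrix.conjTranspose_apply, Matrix.one_apply, hsym' i k, eq_comm]
  have hGpsd : G.PosSemidef := by
    refine PosSemidef.of_dotProduct_mulVec_nonneg hGherm fun x => ?_
    have hsx : star x = x := by
      funext i; simp
    rw [hsx]
    have hexp : dotProduct x (G *ᵥ x) = dotProduct x x + α * dotProduct x (S *ᵥ x) := by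
      rw [hGdef, Matrix.add_mulVec, Matrix.one_mulVec, Matrix.smul_mulVec,
        dotProduct_add, dotProduct_smul, smul_eq_mul]
    rw [hexp]
    set y : EuclideanSpace ℝ (Fin m) := (EuclideanSpace.equiv (Fin m) ℝ).symm x with hy
    set z : EuclideanSpace ℝ (Fin m) := (EuclideanSpace.equiv (Fin m) ℝ).symm (S *ᵥ x) with hz
    have hxy : dotProduct x x = ‖y‖ ^ 2 := by
      rw [← real_inner_self_eq_norm_sq]
      simp [PiLp.inner_apply, dotProduct, hy, mul_comm]
      rw [EuclideanSpace.norm_eq, Real.sq_sqrt (Finset.sum_nonneg fun i _ => sq_nonneg _)]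
      simp [sq, Real.norm_eq_abs, abs_mul_abs_self]
    have hinner : dotProduct x (S *ᵥ x) = inner (𝕜 := ℝ) y z := by
      simp [PiLp.inner_apply, dotProduct, hy, hz, mul_comm]
    have hzb : ‖z‖ ≤ ‖S‖ * ‖y‖ := Matrix.l2_opNorm_mulVec S y
    have hCS : |inner (𝕜 := ℝ) y z| ≤ ‖y‖ * ‖z‖ := abs_real_inner_le_norm y z
    have hb : |dotProduct x (S *ᵥ x)| ≤ ‖S‖ * ‖y‖ ^ 2 := by
      rw [hinner]
      calc |inner (𝕜 := ℝ) y z| ≤ ‖y‖ * ‖z‖ := hCS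
        _ ≤ ‖y‖ * (‖S‖ * ‖y‖) := by
            exact mul_le_mul_of_nonneg_left hzb (norm_nonneg _)
        _ = ‖S‖ * ‖y‖ ^ 2 := by ring
    rw [hxy]
    have h1 : -(|α| * |dotProduct x (S *ᵥ x)|) ≤ α * dotProduct x (S *ᵥ x) := by
      rw [← abs_mul]; exact neg_abs_le _
    have h2 : |α| * |dotProduct x (S *ᵥ x)| ≤ |α| * (‖S‖ * ‖y‖ ^ 2) :=
      mul_le_mul_of_nonneg_left hb (abs_nonneg α)
    nlinarith [sq_nonneg ‖y‖, abs_nonneg α, norm_nonneg S]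
  -- square root of the Gram matrix
  open scoped MatrixOrder in set v : Matrix (Fin m) (Fin m) ℝ := CFC.sqrt G with hvdef
  have hvv : v * v = G := open scoped MatrixOrder in
    CFC.sqrt_mul_sqrt_self G (Matrix.nonneg_iff_posSemidef.mpr hGpsd)
  have hvsym : ∀ i k : Fin m, v k i = v i k := by
    intro i k
    have h := congrFun (congrFun (open scoped MatrixOrder in (CFC.sqrt_nonneg G).isSelfAdjoint) i) k
    rw [← hvdef] at h
    simpa [Matrix.conjTranspose_apply] using h
  have hkey : ∀ i k : Fin m, ∑ j : Fin m, v i j * v k j = G i k := by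
    intro i k
    calc ∑ j : Fin m, v i j * v k j = ∑ j : Fin m, v i j * v j k := by
          refine Finset.sum_congr rfl fun j _ => ?_
          rw [hvsym j k]
      _ = (v * v) i k := by rw [Matrix.mul_apply]
      _ = G i k := by rw [hvv]
  -- the observables
  have hm : m ≤ 2 * ((m + 1) / 2) := by omega
  set ι : Fin m → Fin (2 * ((m + 1) / 2)) := Fin.castLE hm with hι
  have hιinj : Function.Injective ι := Fin.castLE_injective hm
  set A : Fin m → Matrix (Fin (2 ^ ((m + 1) / 2))) (Fin (2 ^ ((m + 1) / 2))) ℂ :=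
    fun i => ∑ j : Fin m, ((v i j : ℝ) : ℂ) • gam ((m + 1) / 2) (ι j) with hA
  have hAmul : ∀ i k : Fin m, A i * A k = ∑ j : Fin m, ∑ l : Fin m,
      ((v i j * v k l : ℝ) : ℂ) • (gam ((m + 1) / 2) (ι j) * gam ((m + 1) / 2) (ι l)) := by
    intro i k
    rw [hA]
    rw [Finset.sum_mul]
    refine Finset.sum_congr rfl fun j _ => ?_
    rw [Finset.mul_sum]
    refine Finset.sum_congr rfl fun l _ => ?_
    rw [smul_mul_assoc, mul_smul_comm, smul_smul]
    norm_cast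
  -- the anticommutation relations
  have key2 : ∀ i k : Fin m, A i * A k + A k * A i = ((2 * G i k : ℝ) : ℂ) • 1 := by
    intro i k
    have hAmul2 : A k * A i = ∑ j : Fin m, ∑ l : Fin m,
        ((v k l * v i j : ℝ) : ℂ) • (gam ((m + 1) / 2) (ι l) * gam ((m + 1) / 2) (ι j)) := by
      rw [hAmul k i]; exact Finset.sum_comm
    rw [hAmul i k, hAmul2, ← Finset.sum_add_distrib]
    calc (∑ j : Fin m, ((∑ l : Fin m, ((v i j * v k l : ℝ) : ℂ) •
            (gam ((m + 1) / 2) (ι j) * gam ((m + 1) / 2) (ι l))) +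
          ∑ l : Fin m, ((v k l * v i j : ℝ) : ℂ) •
            (gam ((m + 1) / 2) (ι l) * gam ((m + 1) / 2) (ι j))))
        = ∑ j : Fin m, ∑ l : Fin m, ((v i j * v k l : ℝ) : ℂ) •
            (gam ((m + 1) / 2) (ι j) * gam ((m + 1) / 2) (ι l) +
             gam ((m + 1) / 2) (ι l) * gam ((m + 1) / 2) (ι j)) := by
          refine Finset.sum_congr rfl fun j _ => ?_
          rw [← Finset.sum_add_distrib]
          refine Finset.sum_congr rfl fun l _ => ?_
          rw [smul_add, mul_comm (v k l)]
      _ = ∑ j : Fin m, ((v i j * v k j : ℝ) : ℂ) • ((1 : Matrix (Fin (2 ^ ((m + 1) / 2)))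
            (Fin (2 ^ ((m + 1) / 2))) ℂ) + 1) := by
          refine Finset.sum_congr rfl fun j _ => ?_
          rw [Finset.sum_eq_single_of_mem j (Finset.mem_univ j)]
          · rw [gam_sq]
          · intro l _ hlj
            rw [gam_anticomm _ _ _ (fun h => hlj (hιinj (by rw [h]))), smul_zero]
      _ = (∑ j : Fin m, ((v i j * v k j : ℝ) : ℂ)) • ((1 : Matrix (Fin (2 ^ ((m + 1) / 2)))
            (Fin (2 ^ ((m + 1) / 2))) ℂ) + 1) := by
          rw [Finset.sum_smul]
      _ = ((2 * G i k : ℝ) : ℂ) • 1 := by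
          rw [smul_add, ← add_smul, ← two_mul]
          have : (∑ j : Fin m, ((v i j * v k j : ℝ) : ℂ)) = ((G i k : ℝ) : ℂ) := by
            rw [← hkey i k]; push_cast; ring
          rw [this]
          push_cast
          ring_nf
  have hGdiag : ∀ i : Fin m, G i i = 1 := by
    intro i
    simp [hGdef, hSdiag i]
  have hGoff : ∀ p : {p : Fin m × Fin m // p.1 < p.2}, G p.1.1 p.1.2 = α * s p := by
    intro p
    have hne : p.1.1 ≠ p.1.2 := ne_of_lt p.2
    simp [hGdef, Matrix.one_apply_ne hne, (hSsym p).1]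
  have anti : ∀ p : {p : Fin m × Fin m // p.1 < p.2},
      A p.1.1 * A p.1.2 + A p.1.2 * A p.1.1 = ((2 * α * s p : ℝ) : ℂ) • 1 := by
    intro p
    rw [key2 p.1.1 p.1.2, hGoff p]
    ring_nf
  refine ⟨A, ?_, ?_, ?_, anti, ?_⟩
  · -- Hermitian
    intro i
    rw [hA]
    rw [Matrix.conjTranspose_sum]
    refine Finset.sum_congr rfl fun j _ => ?_
    rw [Matrix.conjTranspose_smul, gam_herm]
    congr 1
    simp [Complex.star_def, Complex.conj_ofReal]
  · -- involution
    intro i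
    have h2 : (2 : ℂ) • (A i * A i) = (2 : ℂ) • (1 : Matrix (Fin (2 ^ ((m + 1) / 2)))
        (Fin (2 ^ ((m + 1) / 2))) ℂ) := by
      rw [two_smul, two_smul, key2 i i, hGdiag i]
      push_cast
      norm_num [two_smul]
    exact smul_right_injective _ (two_ne_zero) h2
  · -- the linear system
    intro j
    calc ∑ p : {p : Fin m × Fin m // p.1 < p.2},
          M j p • (A p.1.1 * A p.1.2 + A p.1.2 * A p.1.1)
        = ∑ p : {p : Fin m × Fin m // p.1 < p.2},
            (M j p • ((2 * α * s p : ℝ) : ℂ)) • (1 : Matrix (Fin (2 ^ ((m + 1) / 2)))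
              (Fin (2 ^ ((m + 1) / 2))) ℂ) := by
          refine Finset.sum_congr rfl fun p _ => ?_
          rw [anti p, ← smul_assoc]
      _ = (∑ p : {p : Fin m × Fin m // p.1 < p.2},
            M j p • ((2 * α * s p : ℝ) : ℂ)) • (1 : Matrix (Fin (2 ^ ((m + 1) / 2)))
              (Fin (2 ^ ((m + 1) / 2))) ℂ) := by
          rw [Finset.sum_smul]
      _ = 0 := by
          have h0 : M.mulVec s j = 0 := congrFun hMs j
          have hsum : (∑ p : {p : Fin m × Fin m // p.1 < p.2},
              M j p • ((2 * α * s p : ℝ) : ℂ)) =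
              (((2 * α) * M.mulVec s j : ℝ) : ℂ) := by
            rw [Matrix.mulVec, dotProduct]
            push_cast [Complex.real_smul, Finset.mul_sum]
            refine Finset.sum_congr rfl fun p _ => ?_
            ring
          rw [hsum, h0]
          norm_num
  · -- non-anticommuting witness
    intro hα0
    obtain ⟨p, hp⟩ := Function.ne_iff.mp hs
    refine ⟨p, ?_⟩
    rw [anti p]
    intro hcon
    have hz : (0 : Fin (2 ^ ((m + 1) / 2))) = ⟨0, pow_pos (by norm_num) _⟩ := rfl
    have := congrFun (congrFun hcon ⟨0, pow_pos (by norm_num) _⟩) ⟨0, pow_pos (by norm_num) _⟩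
    simp only [Matrix.smul_apply, Matrix.one_apply_eq, Matrix.zero_apply, smul_eq_mul,
      mul_one] at this
    have hαne : α ≠ 0 := fun h => by simp [h] at hα0
    exact (Complex.ofReal_ne_zero.mpr (mul_ne_zero (mul_ne_zero two_ne_zero hαne) hp)) this
end

section
/- (Part I of the self-testing theorem.) Let h be an m×n ROCN matrix (m ≤ n), let A_1,…,A_m and B_1,…,B_n be Hermitian operators on finite-dimensional complex Hilbert spaces H_A and H_B with A_i² = 1 and B_j² = 1, and let ψ ∈ H_A ⊗ H_B be a unit vector whose reduced density matrix ρ_A = Tr_B |ψ⟩⟨ψ| is invertible (full rank). If ⟨ψ| Σ_{i,j} h_{ij}(A_i ⊗ B_j) |ψ⟩ = n, then for every j ∈ {1,…,n} one has (Σ_{i=1}^m h_{ij} A_i ⊗ B_j) ψ = ψ, and moreover Σ_{1 ≤ i < k ≤ m} h_{ij} h_{kj} (A_i A_k + A_k A_i) = 0 for every j. -/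
/-!
Write `Sⱼ = Σᵢ hᵢⱼ Aᵢ`, so that the `j`-th column operator is `Mⱼ = Sⱼ ⊗ Bⱼ`. Since the `Aᵢ` are
involutions and the columns of `h` are unit vectors, `Sⱼ² = 1 + Tⱼ` with `Tⱼ` the anticommutator
sum of the statement, and row orthogonality gives `Σⱼ Tⱼ = 0`; with `Bⱼ² = 1` this yields
`Σⱼ Mⱼ² = n`. The `Mⱼ` are Hermitian, so `Σⱼ ‖Mⱼψ - ψ‖² = ⟨Σⱼ Mⱼ²⟩ - 2⟨Σⱼ Mⱼ⟩ + n = 0`, hence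
`Mⱼψ = ψ`. Then `Mⱼ²ψ = ψ` says `(Tⱼ ⊗ 1)ψ = 0`, i.e. `Tⱼ Ψ = 0` for the coefficient matrix `Ψ`
of `ψ`, so `Tⱼ ρ_A = Tⱼ Ψ Ψᴴ = 0` and `Tⱼ = 0` because `ρ_A` is invertible.
-/

open Matrix Kronecker Finset

/-- The reduced density matrix `ρ_A = Tr_B |ψ⟩⟨ψ|` of a bipartite vector `ψ`. -/
noncomputable def rhoA {dA dB : ℕ} (ψ : Fin dA × Fin dB → ℂ) :
    Matrix (Fin dA) (Fin dA) ℂ :=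
  Matrix.of fun a a' => ∑ b, ψ (a, b) * star (ψ (a', b))

theorem Finset.sum_sum_eq_sum_diag_add_sum_lt {ι M : Type*} [Fintype ι] [LinearOrder ι]
    [AddCommMonoid M] (f : ι → ι → M) :
    ∑ i, ∑ k, f i k = ∑ i, f i i + ∑ i, ∑ k, if i < k then f i k + f k i else 0 := by
  have hsplit : ∀ i k, f i k = (if i = k then f i k else 0) +
      ((if i < k then f i k else 0) + if k < i then f i k else 0) := by
    intro i k
    rcases lt_trichotomy i k with hlt | rfl | hgt
    · simp [hlt, hlt.ne, hlt.not_gt]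
    · simp
    · simp [hgt, hgt.ne', hgt.not_gt]
  have hswap : ∑ i, ∑ k, (if k < i then f i k else 0) = ∑ i, ∑ k, if i < k then f k i else 0 :=
    Finset.sum_comm
  conv_lhs => enter [2, i, 2, k]; rw [hsplit i k]
  simp only [sum_add_distrib, hswap, sum_ite_eq, mem_univ, if_true]
  simp only [← sum_add_distrib, ite_add_ite, add_zero]

section AnticommutatorSum

variable {R A ι : Type*} [CommSemiring R] [Semiring A] [Algebra R A] [Fintype ι] [LinearOrder ι]

def anticommutatorSum (c : ι → R) (X : ι → A) : A :=
  ∑ i, ∑ k, (if i < k then c i * c k else 0) • (X i * X k + X k * X i)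

theorem sum_smul_mul_sum_smul (c : ι → R) (X : ι → A) :
    (∑ i, c i • X i) * (∑ i, c i • X i) =
      ∑ i, (c i * c i) • (X i * X i) + anticommutatorSum c X := by
  rw [sum_mul_sum, sum_sum_eq_sum_diag_add_sum_lt, anticommutatorSum]
  simp only [smul_mul_smul_comm, ite_smul, zero_smul, smul_add, mul_comm (c _) (c _),
    ite_add_ite, add_zero]

theorem sum_smul_mul_sum_smul_of_mul_self_eq_one (c : ι → R) {X : ι → A}
    (hX : ∀ i, X i * X i = 1) :
    (∑ i, c i • X i) * (∑ i, c i • X i) = (∑ i, c i ^ 2) • 1 + anticommutatorSum c X := by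
  rw [sum_smul_mul_sum_smul]
  simp only [hX, ← sq, sum_smul]

theorem sum_anticommutatorSum_eq_zero {κ : Type*} [Fintype κ] (c : κ → ι → R) (X : ι → A)
    (hc : ∀ i k, i ≠ k → ∑ j, c j i * c j k = 0) :
    ∑ j, anticommutatorSum (c j) X = 0 := by
  unfold anticommutatorSum
  rw [sum_comm]
  refine sum_eq_zero fun i _ => ?_
  rw [sum_comm]
  refine sum_eq_zero fun k _ => ?_
  rw [← sum_smul]
  split_ifs with hik
  · rw [hc i k hik.ne, zero_smul]
  · simp

end AnticommutatorSum

namespace Matrix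

theorem sum_kronecker_s11 {ι l m n p R : Type*} [CommSemiring R] (s : Finset ι)
    (X : ι → Matrix l m R) (Y : Matrix n p R) :
    (∑ i ∈ s, X i) ⊗ₖ Y = ∑ i ∈ s, X i ⊗ₖ Y :=
  map_sum ((kroneckerBilinear : Matrix l m R →ₗ[R] _).flip Y) X s

theorem kronecker_one_mulVec_apply {l m R : Type*} [Fintype l] [Fintype m] [DecidableEq m]
    [NonAssocSemiring R] (X : Matrix l l R) (ψ : l × m → R) (a : l) (b : m) :
    (X ⊗ₖ (1 : Matrix m m R) *ᵥ ψ) (a, b) = (X * of (Function.curry ψ)) a b := by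
  simp [mulVec, dotProduct, Fintype.sum_prod_type, mul_apply, one_apply]

theorem IsHermitian.kronecker {l m R : Type*} [CommMagma R] [StarMul R] {X : Matrix l l R}
    {Y : Matrix m m R} (hX : X.IsHermitian) (hY : Y.IsHermitian) : (X ⊗ₖ Y).IsHermitian := by
  rw [IsHermitian, conjTranspose_kronecker, hX.eq, hY.eq]

theorem IsHermitian.star_sub_dotProduct_sub {κ R : Type*} [Fintype κ] [CommRing R] [StarRing R]
    {M : Matrix κ κ R} (hM : M.IsHermitian) (ψ : κ → R) :
    star (M *ᵥ ψ - ψ) ⬝ᵥ (M *ᵥ ψ - ψ) =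
      star ψ ⬝ᵥ (M * M) *ᵥ ψ - 2 * (star ψ ⬝ᵥ M *ᵥ ψ) + star ψ ⬝ᵥ ψ := by
  have hstar : star (M *ᵥ ψ) = star ψ ᵥ* M := by rw [star_mulVec, hM.eq]
  simp only [star_sub, hstar, sub_dotProduct, dotProduct_sub, ← dotProduct_mulVec, mulVec_mulVec]
  ring

end Matrix

theorem rhoA_eq_mul_conjTranspose {dA dB : ℕ} (ψ : Fin dA × Fin dB → ℂ) :
    rhoA ψ = of (Function.curry ψ) * (of (Function.curry ψ))ᴴ := by
  ext a a'
  simp [rhoA, mul_apply]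

theorem eq_zero_of_kronecker_one_mulVec_eq_zero {dA dB : ℕ} {ψ : Fin dA × Fin dB → ℂ}
    (hρ : IsUnit (rhoA ψ)) {X : Matrix (Fin dA) (Fin dA) ℂ}
    (hX : X ⊗ₖ (1 : Matrix (Fin dB) (Fin dB) ℂ) *ᵥ ψ = 0) : X = 0 := by
  have hXψ : X * of (Function.curry ψ) = 0 := by
    ext a b
    rw [← kronecker_one_mulVec_apply, hX, Pi.zero_apply, Matrix.zero_apply]
  rw [← hρ.mul_left_eq_zero, rhoA_eq_mul_conjTranspose, ← Matrix.mul_assoc, hXψ, Matrix.zero_mul]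

theorem Matrix.mulVec_eq_self_of_sum_expectations_eq_card {ι κ R : Type*} [Fintype ι]
    [Fintype κ] [CommRing R] [PartialOrder R] [StarRing R] [StarOrderedRing R] [NoZeroDivisors R]
    {M : ι → Matrix κ κ R} (hM : ∀ j, (M j).IsHermitian) {ψ : κ → R} (hψ : star ψ ⬝ᵥ ψ = 1)
    (hsq : star ψ ⬝ᵥ (∑ j, M j * M j) *ᵥ ψ = Fintype.card ι)
    (hlin : star ψ ⬝ᵥ (∑ j, M j) *ᵥ ψ = Fintype.card ι) (j : ι) :
    M j *ᵥ ψ = ψ := by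
  have hvar : ∑ j, star (M j *ᵥ ψ - ψ) ⬝ᵥ (M j *ᵥ ψ - ψ) = 0 := by
    simp only [(hM _).star_sub_dotProduct_sub, sum_add_distrib, sum_sub_distrib, ← mul_sum,
      ← dotProduct_sum, ← sum_mulVec, hsq, hlin, hψ, sum_const, card_univ, nsmul_one]
    ring
  rw [sum_eq_zero_iff_of_nonneg fun j _ => dotProduct_star_self_nonneg _] at hvar
  exact sub_eq_zero.mp (dotProduct_star_self_eq_zero.mp (hvar j (mem_univ j)))

/-- (Part I of the self-testing theorem.) If a unit vector `ψ` whose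
reduced state `ρ_A` is full rank attains `⟨ψ| Σᵢⱼ hᵢⱼ (Aᵢ ⊗ Bⱼ) |ψ⟩ = n` for an ROCN
matrix `h` and Hermitian involutions `Aᵢ`, `Bⱼ`, then `(Σᵢ hᵢⱼ Aᵢ ⊗ Bⱼ)ψ = ψ` for every
`j`, and `Σ_{i<k} hᵢⱼ hₖⱼ {Aᵢ, Aₖ} = 0` for every `j`. -/
theorem rocn_self_testing_part_I {m n dA dB : ℕ}
    (h : Matrix (Fin m) (Fin n) ℝ) (hROCN : IsROCN h)
    (A : Fin m → Matrix (Fin dA) (Fin dA) ℂ)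
    (B : Fin n → Matrix (Fin dB) (Fin dB) ℂ)
    (hAH : ∀ i, (A i)ᴴ = A i) (hBH : ∀ j, (B j)ᴴ = B j)
    (hA2 : ∀ i, A i * A i = 1) (hB2 : ∀ j, B j * B j = 1)
    (ψ : Fin dA × Fin dB → ℂ) (hψ : star ψ ⬝ᵥ ψ = 1)
    (hfull : IsUnit (rhoA ψ))
    (hmax : star ψ ⬝ᵥ (∑ i, ∑ j, (h i j : ℂ) • (A i ⊗ₖ B j)).mulVec ψ = (n : ℂ)) :
    (∀ j, (∑ i, (h i j : ℂ) • (A i ⊗ₖ B j)).mulVec ψ = ψ) ∧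
    (∀ j, ∑ i, ∑ k,
      (if i < k then h i j * h k j else 0) • (A i * A k + A k * A i) = 0) := by
  obtain ⟨-, -, horth, hcol⟩ := hROCN
  set S : Fin n → Matrix (Fin dA) (Fin dA) ℂ := fun j => ∑ i, h i j • A i
  have hM : ∀ j, ∑ i, (h i j : ℂ) • (A i ⊗ₖ B j) = S j ⊗ₖ B j := fun j => by
    simp only [S, sum_kronecker_s11, smul_kronecker, Complex.coe_smul]
  have hMH : ∀ j, (S j ⊗ₖ B j).IsHermitian := fun j =>
    IsHermitian.kronecker
      (isSelfAdjoint_sum _ fun i _ => IsHermitian.smul (hAH i) (IsSelfAdjoint.all (h i j))) (hBH j)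
  have hM2 : ∀ j, (S j ⊗ₖ B j) * (S j ⊗ₖ B j) = 1 + anticommutatorSum (fun i => h i j) A ⊗ₖ 1 :=
    fun j => by
      rw [← mul_kronecker_mul, sum_smul_mul_sum_smul_of_mul_self_eq_one _ hA2, hcol, one_smul,
        hB2, add_kronecker, one_kronecker_one]
  have hfix : ∀ j, (S j ⊗ₖ B j) *ᵥ ψ = ψ := by
    open ComplexOrder in
    refine mulVec_eq_self_of_sum_expectations_eq_card hMH hψ ?_ ?_
    · rw [sum_congr rfl fun j _ => hM2 j, sum_add_distrib, ← sum_kronecker_s11,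
        sum_anticommutatorSum_eq_zero (fun j i => h i j) A horth]
      simp [hψ]
    · rw [sum_comm] at hmax
      simpa only [hM, Fintype.card_fin] using hmax
  refine ⟨fun j => (hM j).symm ▸ hfix j, fun j => eq_zero_of_kronecker_one_mulVec_eq_zero hfull ?_⟩
  have hsq : (S j ⊗ₖ B j * (S j ⊗ₖ B j)) *ᵥ ψ = ψ := by rw [← mulVec_mulVec, hfix, hfix]
  rwa [hM2, add_mulVec, one_mulVec, add_eq_left] at hsq
end

section
/- (Lifting the full-rank assumption, Appendix C.) Let h be an m×n ROCN matrix (m ≤ n), let A_1,…,A_m and B_1,…,B_n be Hermitian operators on finite-dimensional complex Hilbert spaces H_A and H_B with A_i² = 1 and B_j² = 1, and let ψ ∈ H_A ⊗ H_B be a unit vector satisfying, for every j ∈ {1,…,n}, ((Σ_{i=1}^m h_{ij} A_i) ⊗ B_j) ψ = ψ. Let R_A be the orthogonal projection onto the support of ρ_A = Tr_B |ψ⟩⟨ψ| and R_B the orthogonal projection onto the support of ρ_B = Tr_A |ψ⟩⟨ψ|. Then every A_i commutes with R_A and every B_j commutes with R_B; in particular, the observables are block-diagonal with respect to the decomposition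 of each local space into the support of the reduced state and its orthogonal complement, and the restrictions of A_i and B_j to these supports still square to the identity. -/
open Matrix Kronecker Finset

/-- The reduced density matrix `ρ_B = Tr_A |ψ⟩⟨ψ|` of a bipartite vector `ψ`. -/
noncomputable def rhoB {dA dB : ℕ} (ψ : Fin dA × Fin dB → ℂ) :
    Matrix (Fin dB) (Fin dB) ℂ :=
  Matrix.of fun b b' => ∑ a, ψ (a, b) * star (ψ (a, b'))

/-- `R` is the orthogonal projection onto the support of the (Hermitian, positive
semidefinite) operator `ρ`: it is a Hermitian idempotent whose kernel coincides with
the kernel of `ρ` (the support being the orthogonal complement of the kernel). -/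
def IsSupportProjection {d : ℕ} (ρ R : Matrix (Fin d) (Fin d) ℂ) : Prop :=
  Rᴴ = R ∧ R * R = R ∧ ∀ v : Fin d → ℂ, ρ.mulVec v = 0 ↔ R.mulVec v = 0

/-!
Reshape `ψ` into a `dB × dA` matrix `Q` (so `ψ = vec Q`). With `Mⱼ = ∑ᵢ hᵢⱼ Aᵢ`, saturation reads
`Bⱼ Q Mⱼᵀ = Q`, and since `Bⱼ² = 1` this is the intertwining `Bⱼ Q = Q Mⱼᵀ`. Together with its
adjoint it shows that `Bⱼ` commutes with `ρ_B = Q Qᴴ` and `Mⱼᵀ` with `Qᴴ Q = ρ_Aᵀ`. Orthogonality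
of the (nonzero) rows of `h` gives `∑ⱼ hₖⱼ Mⱼ = ‖hₖ‖² Aₖ`, so each `Aₖ` commutes with `ρ_A`.
A Hermitian operator commuting with `ρ` commutes with its support projection, and compressing an
involution commuting with a projection `R` yields an involution of the range of `R`.
-/

namespace Matrix

variable {m n α : Type*} [Fintype m] [Fintype n]

theorem mul_eq_mul_of_mul_mul_eq [Semiring α] [DecidableEq m] {X : Matrix m m α}
    {Y : Matrix n n α} {Q : Matrix m n α} (hX : X * X = 1) (h : X * Q * Y = Q) :
    X * Q = Q * Y := by
  conv_lhs => rw [← h]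
  rw [← Matrix.mul_assoc, ← Matrix.mul_assoc, hX, Matrix.one_mul]

variable [NonUnitalSemiring α] [StarRing α]

theorem commute_mul_conjTranspose_of_mul_eq_mul {X : Matrix m m α} {Y : Matrix n n α}
    {Q : Matrix m n α} (hX : X.IsHermitian) (hY : Y.IsHermitian) (h : X * Q = Q * Y) :
    Commute X (Q * Qᴴ) := by
  have h' : Qᴴ * X = Y * Qᴴ := by
    simpa only [conjTranspose_mul, hX.eq, hY.eq] using congrArg conjTranspose h
  calc X * (Q * Qᴴ) = Q * (Y * Qᴴ) := by rw [← Matrix.mul_assoc, h, Matrix.mul_assoc]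
    _ = Q * Qᴴ * X := by rw [← h', Matrix.mul_assoc]

theorem commute_conjTranspose_mul_of_mul_eq_mul {X : Matrix m m α} {Y : Matrix n n α}
    {Q : Matrix m n α} (hX : X.IsHermitian) (hY : Y.IsHermitian) (h : X * Q = Q * Y) :
    Commute Y (Qᴴ * Q) := by
  have h' : Y * Qᴴ = Qᴴ * X := by
    simpa only [conjTranspose_mul, hX.eq, hY.eq] using (congrArg conjTranspose h).symm
  simpa only [conjTranspose_conjTranspose] using
    commute_mul_conjTranspose_of_mul_eq_mul hY hX h'

end Matrix

theorem rhoA_vec {dA dB : ℕ} (Q : Matrix (Fin dB) (Fin dA) ℂ) : rhoA (vec Q) = (Qᴴ * Q)ᵀ := by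
  ext a a'
  simp [rhoA, mul_apply, mul_comm]

theorem rhoB_vec {dA dB : ℕ} (Q : Matrix (Fin dB) (Fin dA) ℂ) : rhoB (vec Q) = Q * Qᴴ := by
  ext b b'
  simp [rhoB, mul_apply]

theorem commute_of_commute_rowOrthogonal_combinations {ι κ S : Type*} [Fintype ι] [Fintype κ]
    [Ring S] [Algebra ℂ S] (h : Matrix ι κ ℝ) (hrow : ∀ i, ∃ j, h i j ≠ 0)
    (horth : ∀ i k, i ≠ k → ∑ j, h i j * h k j = 0) (A : ι → S) {X : S}
    (hX : ∀ j, Commute (∑ i, (h i j : ℂ) • A i) X) (k : ι) : Commute (A k) X := by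
  classical
  have hcomb :
      ∑ j, (h k j : ℂ) • ∑ i, (h i j : ℂ) • A i = ((∑ j, h k j * h k j : ℝ) : ℂ) • A k := by
    simp_rw [Finset.smul_sum, smul_smul]
    rw [Finset.sum_comm]
    simp_rw [← Finset.sum_smul]
    refine (Finset.sum_eq_single k (fun i _ hik => ?_) (by simp)).trans (by push_cast; rfl)
    have : ∑ j, (h k j : ℂ) * h i j = 0 := by exact_mod_cast horth k i hik.symm
    rw [this, zero_smul]
  have hnorm : (∑ j, h k j * h k j : ℝ) ≠ 0 := by
    obtain ⟨j, hj⟩ := hrow k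
    exact (Finset.sum_pos' (fun j _ => mul_self_nonneg _) ⟨j, mem_univ _, mul_self_pos.2 hj⟩).ne'
  rw [← Commute.smul_left_iff₀ (Complex.ofReal_ne_zero.2 hnorm), ← hcomb]
  exact Commute.sum_left _ _ _ fun j _ => (hX j).smul_left _

/-- The kernel of `ρ`, which is the kernel of `R`, is invariant under `X`; hence `R X (1 - R) = 0`,
and its adjoint `(1 - R) X R = 0` is the other off-diagonal block. -/
theorem IsSupportProjection.commute {d : ℕ} {ρ R X : Matrix (Fin d) (Fin d) ℂ}
    (hR : IsSupportProjection ρ R) (hX : X.IsHermitian) (hXρ : Commute X ρ) : Commute X R := by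
  obtain ⟨hRH, hRR, hker⟩ := hR
  have hupper : R * X * (1 - R) = 0 := by
    refine ext_iff_mulVec.2 fun v => ?_
    have hRw : R *ᵥ ((1 - R) *ᵥ v) = 0 := by
      rw [mulVec_mulVec, mul_sub, mul_one, hRR, sub_self, zero_mulVec]
    have hρXw : ρ *ᵥ (X *ᵥ ((1 - R) *ᵥ v)) = 0 := by
      rw [mulVec_mulVec, ← hXρ.eq, ← mulVec_mulVec, (hker _).2 hRw, mulVec_zero]
    rw [zero_mulVec, ← mulVec_mulVec, ← mulVec_mulVec]
    exact (hker _).1 hρXw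
  have hlower : (1 - R) * X * R = 0 := by
    simpa only [conjTranspose_mul, conjTranspose_sub, conjTranspose_one, hRH, hX.eq,
      conjTranspose_zero, Matrix.mul_assoc] using congrArg conjTranspose hupper
  show X * R = R * X
  linear_combination (norm := noncomm_ring) hlower - hupper

theorem Commute.mul_mul_self_eq_of_mul_self_eq_one {S : Type*} [Monoid S] {R X : S}
    (hXR : Commute X R) (hR : IsIdempotentElem R) (hX : X * X = 1) :
    (R * X * R) * (R * X * R) = R := by
  have hcompress : R * X * R = X * R := by rw [← hXR.eq, mul_assoc, hR.eq]
  rw [hcompress, hXR.symm.mul_mul_mul_comm, hX, one_mul, hR.eq]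

theorem rocn_lifting_full_rank_general {m n dA dB : ℕ}
    (h : Matrix (Fin m) (Fin n) ℝ) (hROCN : IsROCN h)
    (A : Fin m → Matrix (Fin dA) (Fin dA) ℂ)
    (B : Fin n → Matrix (Fin dB) (Fin dB) ℂ)
    (hAH : ∀ i, (A i)ᴴ = A i) (hBH : ∀ j, (B j)ᴴ = B j)
    (hA2 : ∀ i, A i * A i = 1) (hB2 : ∀ j, B j * B j = 1)
    (ψ : Fin dA × Fin dB → ℂ)
    (hsat : ∀ j, ((∑ i, (h i j : ℂ) • A i) ⊗ₖ B j).mulVec ψ = ψ)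
    (RA : Matrix (Fin dA) (Fin dA) ℂ) (hRA : IsSupportProjection (rhoA ψ) RA)
    (RB : Matrix (Fin dB) (Fin dB) ℂ) (hRB : IsSupportProjection (rhoB ψ) RB) :
    (∀ i, A i * RA = RA * A i) ∧
    (∀ j, B j * RB = RB * B j) ∧
    (∀ i, (RA * A i * RA) * (RA * A i * RA) = RA) ∧
    (∀ j, (RB * B j * RB) * (RB * B j * RB) = RB) := by
  obtain ⟨-, hrow, horth, -⟩ := hROCN
  obtain ⟨Q, rfl⟩ : ∃ Q : Matrix (Fin dB) (Fin dA) ℂ, ψ = vec Q := ⟨of fun b a => ψ (a, b), rfl⟩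
  have hMH (j) : (∑ i, (h i j : ℂ) • A i)ᵀ.IsHermitian :=
    IsHermitian.transpose <|
      isSelfAdjoint_sum _ fun i _ => IsHermitian.smul (hAH i) (Complex.conj_ofReal _)
  have hBQ (j) : B j * Q = Q * (∑ i, (h i j : ℂ) • A i)ᵀ := by
    refine mul_eq_mul_of_mul_mul_eq (hB2 j) (vec_inj.1 ?_)
    rw [← kronecker_mulVec_vec, hsat j]
  have hAρ : ∀ i, Commute (A i) (rhoA (vec Q)) := by
    refine commute_of_commute_rowOrthogonal_combinations h hrow horth A fun j => ?_
    have := commute_conjTranspose_mul_of_mul_eq_mul (hBH j) (hMH j) (hBQ j)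
    rw [rhoA_vec]
    show _ * _ = _ * _
    simpa only [transpose_mul, transpose_transpose] using
      (congrArg transpose this.eq).symm
  have hBρ (j) : Commute (B j) (rhoB (vec Q)) :=
    rhoB_vec Q ▸ commute_mul_conjTranspose_of_mul_eq_mul (hBH j) (hMH j) (hBQ j)
  have hAR (i) : Commute (A i) RA := hRA.commute (hAH i) (hAρ i)
  have hBR (j) : Commute (B j) RB := hRB.commute (hBH j) (hBρ j)
  exact ⟨hAR, hBR, fun i => (hAR i).mul_mul_self_eq_of_mul_self_eq_one hRA.2.1 (hA2 i),
    fun j => (hBR j).mul_mul_self_eq_of_mul_self_eq_one hRB.2.1 (hB2 j)⟩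

/-- (Lifting the full-rank assumption, Appendix C.) If a unit vector
`ψ` satisfies the saturation conditions `((Σᵢ hᵢⱼ Aᵢ) ⊗ Bⱼ)ψ = ψ` for an ROCN matrix
`h` and Hermitian involutions `Aᵢ`, `Bⱼ`, and `R_A`, `R_B` are the orthogonal
projections onto the supports of `ρ_A`, `ρ_B`, then every `Aᵢ` commutes with `R_A` and
every `Bⱼ` commutes with `R_B` (block-diagonality), and the restrictions of the
observables to the supports still square to the identity. -/
theorem rocn_lifting_full_rank {m n dA dB : ℕ}
    (h : Matrix (Fin m) (Fin n) ℝ) (hROCN : IsROCN h)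
    (A : Fin m → Matrix (Fin dA) (Fin dA) ℂ)
    (B : Fin n → Matrix (Fin dB) (Fin dB) ℂ)
    (hAH : ∀ i, (A i)ᴴ = A i) (hBH : ∀ j, (B j)ᴴ = B j)
    (hA2 : ∀ i, A i * A i = 1) (hB2 : ∀ j, B j * B j = 1)
    (ψ : Fin dA × Fin dB → ℂ) (hψ : star ψ ⬝ᵥ ψ = 1)
    (hsat : ∀ j, ((∑ i, (h i j : ℂ) • A i) ⊗ₖ B j).mulVec ψ = ψ)
    (RA : Matrix (Fin dA) (Fin dA) ℂ) (hRA : IsSupportProjection (rhoA ψ) RA)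
    (RB : Matrix (Fin dB) (Fin dB) ℂ) (hRB : IsSupportProjection (rhoB ψ) RB) :
    (∀ i, A i * RA = RA * A i) ∧
    (∀ j, B j * RB = RB * B j) ∧
    (∀ i, (RA * A i * RA) * (RA * A i * RA) = RA) ∧
    (∀ j, (RB * B j * RB) * (RB * B j * RB) = RB) :=
  rocn_lifting_full_rank_general h hROCN A B hAH hBH hA2 hB2 ψ hsat RA hRA RB hRB
end

section
/- (Truncated Hadamard matrices give a strict classical–quantum gap.) Let n = 4d with d ≥ 1 a natural number, let H be an n×n real matrix with entries in {−1,1} satisfying H Hᵀ = n·I (a Hadamard matrix), and let H' be the (n−1)×n matrix obtained from H by deleting one row. Then max over a ∈ {−1,1}^{n−1} of Σ_{j=1}^n |Σ_{i=1}^{n−1} H'_{ij} a_i| < n·√(n−1). Equivalently, for the ROCN matrix h = H'/√(n−1), the classical bound satisfies β_C^h < β_Q^h = n. -/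
/-!
Write `v j = ∑_{i ≠ i₀} H i j a i`. Orthogonality of the rows of `H` gives
`∑ⱼ v j ² = n (n - 1)`, so summing `2 r |v j| ≤ v j ² + r²` with `r = √(n - 1)` gives
`∑ⱼ |v j| ≤ n r`, with equality only if every `|v j|` equals `r`. But `v j` is a sum of
`n - 1 = 4d - 1` signs, hence an odd integer, and `4d - 1 ≡ 3 (mod 4)` is not a square.
-/

open Matrix Finset

theorem Finset.exists_sum_eq_card_sub_two_mul_of_sign {ι : Type*} (s : Finset ι) (x : ι → ℝ)
    (hx : ∀ i ∈ s, x i = 1 ∨ x i = -1) :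
    ∃ k : ℤ, ∑ i ∈ s, x i = #s - 2 * k := by
  classical
  induction s using Finset.induction_on with
  | empty => exact ⟨0, by simp⟩
  | insert a s ha ih =>
    obtain ⟨k, hk⟩ := ih fun i hi => hx i (mem_insert_of_mem hi)
    rw [sum_insert ha, card_insert_of_notMem ha, hk]
    rcases hx a (mem_insert_self a s) with h | h
    · exact ⟨k, by rw [h]; push_cast; ring⟩
    · exact ⟨k + 1, by rw [h]; push_cast; ring⟩

theorem Int.sq_ne_four_mul_sub_one (m d : ℤ) : m ^ 2 ≠ 4 * d - 1 := by
  intro h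
  have h4 := congrArg (Int.cast : ℤ → ZMod 4) h
  push_cast at h4
  rw [show (4 : ZMod 4) = 0 from rfl, zero_mul, zero_sub] at h4
  -- every square in `ZMod 4` is `0` or `1`
  generalize (m : ZMod 4) = y at h4
  revert y
  decide

theorem Finset.abs_sum_ne_sqrt_card_of_sign {ι : Type*} {d : ℕ} (s : Finset ι) (x : ι → ℝ)
    (hs : #s + 1 = 4 * d) (hx : ∀ i ∈ s, x i = 1 ∨ x i = -1) :
    |∑ i ∈ s, x i| ≠ √(#s : ℝ) := by
  obtain ⟨k, hk⟩ := s.exists_sum_eq_card_sub_two_mul_of_sign x hx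
  intro h
  have hsq : (∑ i ∈ s, x i) ^ 2 = #s := by
    rw [← sq_abs, h, Real.sq_sqrt (Nat.cast_nonneg _)]
  rw [hk] at hsq
  have hsqℤ : ((#s : ℤ) - 2 * k) ^ 2 = 4 * d - 1 := by
    have : (#s : ℤ) = 4 * d - 1 := by omega
    rw [← this]
    exact_mod_cast hsq
  exact Int.sq_ne_four_mul_sub_one _ _ hsqℤ

theorem Matrix.sum_sq_sum_mul_of_mul_transpose_eq_smul_one {R ι κ : Type*} [CommRing R]
    [Fintype ι] [Fintype κ] [DecidableEq ι] (H : Matrix ι κ R) (c : R)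
    (hH : H * Hᵀ = c • 1) (s : Finset ι) (a : ι → R) :
    ∑ j, (∑ i ∈ s, H i j * a i) ^ 2 = c * ∑ i ∈ s, a i ^ 2 := by
  have hrow : ∀ i i', ∑ j, H i j * H i' j = if i = i' then c else 0 := by
    intro i i'
    simpa [mul_apply, one_apply] using congrFun (congrFun hH i) i'
  calc ∑ j, (∑ i ∈ s, H i j * a i) ^ 2
      = ∑ i ∈ s, ∑ i' ∈ s, a i * a i' * ∑ j, H i j * H i' j := by
        simp only [sq, sum_mul_sum]
        simp only [mul_sum]
        rw [sum_comm]
        refine sum_congr rfl fun i _ => ?_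
        rw [sum_comm]
        exact sum_congr rfl fun i' _ => sum_congr rfl fun j _ => by ring
    _ = c * ∑ i ∈ s, a i ^ 2 := by
        simp only [hrow, mul_ite, mul_zero, sum_ite_eq, mul_sum]
        exact sum_congr rfl fun i hi => by simp [hi]; ring

theorem sum_abs_lt_card_mul_of_sum_sq_le {ι : Type*} [Fintype ι] [Nonempty ι]
    (v : ι → ℝ) {r : ℝ} (hr : 0 < r) (hsq : ∑ j, v j ^ 2 ≤ Fintype.card ι * r ^ 2)
    (hne : ∀ j, |v j| ≠ r) :
    ∑ j, |v j| < Fintype.card ι * r := by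
  have hamgm : ∀ j, 2 * r * |v j| < v j ^ 2 + r ^ 2 := by
    intro j
    have : 0 < (|v j| - r) ^ 2 := by
      have := sub_ne_zero.mpr (hne j)
      positivity
    nlinarith [sq_abs (v j)]
  have hsum : 2 * r * ∑ j, |v j| < 2 * r * (Fintype.card ι * r) :=
    calc 2 * r * ∑ j, |v j| < ∑ j, (v j ^ 2 + r ^ 2) := by
          rw [mul_sum]; exact sum_lt_sum_of_nonempty univ_nonempty fun j _ => hamgm j
      _ ≤ 2 * r * (Fintype.card ι * r) := by
          rw [sum_add_distrib, sum_const, card_univ, nsmul_eq_mul]; nlinarith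
  exact lt_of_mul_lt_mul_left hsum (by positivity)

/-- (Truncated Hadamard matrices give a strict classical–quantum gap.)
Let `n = 4d` (`d ≥ 1`) and let `H` be an `n × n` Hadamard matrix (entries `±1`,
`H Hᵀ = n I`). Delete any row `i₀`. Then every deterministic classical value of the
truncated matrix is strictly below `n √(n−1)`; i.e.
`max_{a ∈ {±1}^{n−1}} Σⱼ |Σ_{i ≠ i₀} Hᵢⱼ aᵢ| < n √(n−1)`. Equivalently, for the ROCN
matrix `h = H'/√(n−1)` one has `β_C^h < β_Q^h = n`. -/
theorem truncated_hadamard_strict_gap {d n : ℕ} (hd : 1 ≤ d) (hn : n = 4 * d)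
    (H : Matrix (Fin n) (Fin n) ℝ)
    (hent : ∀ i j, H i j = 1 ∨ H i j = -1)
    (hHad : H * Hᵀ = (n : ℝ) • 1)
    (i₀ : Fin n) :
    ∀ a : Fin n → ℝ, (∀ i, i ≠ i₀ → a i = 1 ∨ a i = -1) →
      ∑ j, |∑ i ∈ Finset.univ.erase i₀, H i j * a i|
        < n * Real.sqrt ((n : ℝ) - 1) := by
  intro a ha
  have : NeZero n := ⟨by omega⟩
  set s := univ.erase i₀
  have hs : #s + 1 = 4 * d := by simp [s]; omega
  have hcard : (n : ℝ) - 1 = #s := by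
    rw [sub_eq_iff_eq_add]; exact_mod_cast (hs.trans hn.symm).symm
  have hsign : ∀ j, ∀ i ∈ s, H i j * a i = 1 ∨ H i j * a i = -1 := fun j i hi => by
    rcases hent i j with h | h <;> rcases ha i (ne_of_mem_erase hi) with h' | h' <;>
      simp [h, h']
  have hsq : ∑ i ∈ s, a i ^ 2 = #s := by
    rw [sum_congr rfl fun i hi => show a i ^ 2 = 1 by
      rcases ha i (ne_of_mem_erase hi) with h | h <;> simp [h]]
    simp
  have hsq_sum : ∑ j, (∑ i ∈ s, H i j * a i) ^ 2 ≤ Fintype.card (Fin n) * √(#s : ℝ) ^ 2 := by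
    rw [sum_sq_sum_mul_of_mul_transpose_eq_smul_one H _ hHad, hsq,
      Real.sq_sqrt (Nat.cast_nonneg _), Fintype.card_fin]
  simpa [hcard] using sum_abs_lt_card_mul_of_sum_sq_le _
    (Real.sqrt_pos.mpr (by simp [s]; omega)) hsq_sum
    fun j => s.abs_sum_ne_sqrt_card_of_sign _ hs (hsign j)
end

section
/- (Remark on the Epping–Kampermann–Bruß bound.) Let h be an m×n ROCN matrix (m ≤ n). Then: (a) the spectral norm of h equals the maximal Euclidean row norm, ‖h‖₂ = max_{1 ≤ i ≤ m} √(Σ_{j=1}^n h_{ij}²); (b) √(mn)·‖h‖₂ ≥ n; and (c) equality √(mn)·‖h‖₂ = n holds if and only if Σ_{j=1}^n h_{ij}² = n/m for every i ∈ {1,…,m} (i.e., if and only if h is semi-orthogonal, equivalently the ROCN Bell inequality is Platonic). -/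
open Matrix Finset
open scoped Matrix.Norms.L2Operator

lemma rocn_orth_sum {m n : ℕ} (h : Matrix (Fin m) (Fin n) ℝ)
    (horth : ∀ i k, i ≠ k → ∑ j, h i j * h k j = 0) (x : Fin m → ℝ) :
    ∑ j, (∑ i, x i * h i j) ^ 2 = ∑ i, (x i) ^ 2 * ∑ j, (h i j) ^ 2 := by
  have key : ∀ i k, ∑ j, (x i * h i j) * (x k * h k j) = (x i * x k) * ∑ j, h i j * h k j := by
    intro i k; rw [Finset.mul_sum]; congr 1; ext j; ring
  calc ∑ j, (∑ i, x i * h i j) ^ 2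
      = ∑ j, ∑ i, ∑ k, (x i * h i j) * (x k * h k j) := by
        simp_rw [sq, Finset.sum_mul_sum]
    _ = ∑ i, ∑ k, ∑ j, (x i * h i j) * (x k * h k j) := by
        rw [Finset.sum_comm]; congr 1; ext i; rw [Finset.sum_comm]
    _ = ∑ i, ∑ k, (x i * x k) * ∑ j, h i j * h k j := by simp_rw [key]
    _ = ∑ i, (x i * x i) * ∑ j, h i j * h i j := by
        refine Finset.sum_congr rfl fun i _ => ?_
        refine Finset.sum_eq_single i (fun k _ hk => ?_) (fun hi => absurd (mem_univ i) hi)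
        rw [horth i k (Ne.symm hk), mul_zero]
    _ = ∑ i, (x i) ^ 2 * ∑ j, (h i j) ^ 2 := by simp_rw [← sq]

lemma rocn_norm_le {m n : ℕ} (h : Matrix (Fin m) (Fin n) ℝ)
    (horth : ∀ i k, i ≠ k → ∑ j, h i j * h k j = 0)
    (i₀ : Fin m) (hmax : ∀ i, ∑ j, (h i j) ^ 2 ≤ ∑ j, (h i₀ j) ^ 2) :
    ‖h‖ ≤ Real.sqrt (∑ j, (h i₀ j) ^ 2) := by
  have hT : ‖h‖ = ‖hᵀ‖ := by
    rw [← h.conjTranspose_eq_transpose_of_trivial, l2_opNorm_conjTranspose]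
  rw [hT, l2_opNorm_def]
  refine ContinuousLinearMap.opNorm_le_bound _ (Real.sqrt_nonneg _) fun x => ?_
  have hx : ‖x‖ = Real.sqrt (∑ i, (x i) ^ 2) := by
    rw [EuclideanSpace.norm_eq]
    congr 1; refine Finset.sum_congr rfl fun i _ => ?_
    rw [Real.norm_eq_abs, sq_abs]
  have hlhs : ‖(toEuclideanLin.trans LinearMap.toContinuousLinearMap hᵀ) x‖
      = Real.sqrt (∑ j, (∑ i, x i * h i j) ^ 2) := by
    rw [LinearEquiv.trans_apply, LinearMap.coe_toContinuousLinearMap', EuclideanSpace.norm_eq]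
    congr 1; refine Finset.sum_congr rfl fun j _ => ?_
    rw [Real.norm_eq_abs, sq_abs]
    congr 1
    show (toEuclideanLin hᵀ x) j = _
    rw [toEuclideanLin_apply]
    simp [mulVec, dotProduct, transpose_apply, mul_comm]
  rw [hlhs, hx, rocn_orth_sum h horth,
    ← Real.sqrt_mul (Finset.sum_nonneg fun j _ => sq_nonneg _)]
  apply Real.sqrt_le_sqrt
  rw [Finset.mul_sum]
  refine Finset.sum_le_sum fun i _ => ?_
  rw [mul_comm ((∑ j, (h i₀ j) ^ 2))]
  exact mul_le_mul_of_nonneg_left (hmax i) (sq_nonneg _)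

lemma rocn_le_norm {m n : ℕ} (h : Matrix (Fin m) (Fin n) ℝ) (i : Fin m) :
    Real.sqrt (∑ j, (h i j) ^ 2) ≤ ‖h‖ := by
  have hT : ‖h‖ = ‖hᵀ‖ := by
    rw [← h.conjTranspose_eq_transpose_of_trivial, l2_opNorm_conjTranspose]
  have key := hᵀ.l2_opNorm_mulVec (EuclideanSpace.single i (1:ℝ))
  rw [EuclideanSpace.norm_single, norm_one, mul_one] at key
  rw [hT]
  refine le_trans (le_of_eq ?_) key
  rw [EuclideanSpace.norm_eq]
  congr 1
  refine Finset.sum_congr rfl fun j _ => ?_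
  rw [Real.norm_eq_abs, sq_abs]
  congr 1
  show h i j = (hᵀ *ᵥ _) j
  simp [mulVec, dotProduct, EuclideanSpace.single, transpose_apply,
    Pi.single_apply, mul_comm]

/-- (Remark on the Epping–Kampermann–Bruß bound.) For an ROCN matrix
`h` (with the L2 operator norm `‖h‖` being the spectral norm, i.e. the largest singular
value): (a) `‖h‖` equals the maximal Euclidean row norm; (b) `√(mn)·‖h‖ ≥ n`; and
(c) equality holds iff `Σⱼ hᵢⱼ² = n/m` for every row `i` (iff `h` is semi-orthogonal,
i.e. the ROCN Bell inequality is Platonic). -/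
theorem rocn_spectral_norm_bound {m n : ℕ} (hm : 0 < m)
    (h : Matrix (Fin m) (Fin n) ℝ) (hROCN : IsROCN h) :
    IsGreatest (Set.range fun i : Fin m => Real.sqrt (∑ j, (h i j) ^ 2)) ‖h‖ ∧
    Real.sqrt (m * n) * ‖h‖ ≥ n ∧
    (Real.sqrt (m * n) * ‖h‖ = n ↔ ∀ i, ∑ j, (h i j) ^ 2 = (n : ℝ) / m) := by
  obtain ⟨hmn, -, horth, hcol⟩ := hROCN
  have hn : 0 < n := lt_of_lt_of_le hm hmn
  set r : Fin m → ℝ := fun i => ∑ j, (h i j) ^ 2 with hr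
  obtain ⟨i₀, -, hmax⟩ :=
    Finset.exists_max_image (univ : Finset (Fin m)) r ⟨⟨0, hm⟩, mem_univ _⟩
  have hmax' : ∀ i, r i ≤ r i₀ := fun i => hmax i (mem_univ i)
  have heq : ‖h‖ = Real.sqrt (r i₀) :=
    le_antisymm (rocn_norm_le h horth i₀ hmax') (rocn_le_norm h i₀)
  have hM0 : 0 ≤ r i₀ := Finset.sum_nonneg fun j _ => sq_nonneg _
  have hsum : ∑ i, r i = (n : ℝ) := by
    simp only [hr]
    rw [Finset.sum_comm]
    simp [hcol]
  have hnM : (n : ℝ) ≤ m * r i₀ := by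
    calc (n : ℝ) = ∑ i, r i := hsum.symm
      _ ≤ ∑ _i : Fin m, r i₀ := Finset.sum_le_sum fun i _ => hmax' i
      _ = m * r i₀ := by simp [Finset.sum_const, card_univ, nsmul_eq_mul]
  have hprod : Real.sqrt (m * n) * ‖h‖ = Real.sqrt ((m * n : ℝ) * r i₀) := by
    rw [heq, ← Real.sqrt_mul (by positivity)]
  have hm' : (0:ℝ) < m := by exact_mod_cast hm
  have hn' : (0:ℝ) < n := by exact_mod_cast hn
  refine ⟨⟨⟨i₀, heq.symm⟩, ?_⟩, ?_, ?_⟩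
  · rintro _ ⟨i, rfl⟩
    exact rocn_le_norm h i
  · rw [ge_iff_le, hprod, Real.le_sqrt hn'.le (by positivity)]
    nlinarith
  · rw [hprod]
    constructor
    · intro hEq
      have h2 : (m * n : ℝ) * r i₀ = (n : ℝ) ^ 2 := by
        have := congrArg (fun t : ℝ => t ^ 2) hEq
        simpa [Real.sq_sqrt (by positivity : (0:ℝ) ≤ (m * n : ℝ) * r i₀)] using this
      have hMval : r i₀ = (n : ℝ) / m := by
        field_simp
        nlinarith
      have hall : ∀ i ∈ (univ : Finset (Fin m)), r i₀ - r i = 0 := by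
        rw [← Finset.sum_eq_zero_iff_of_nonneg (fun i _ => sub_nonneg.mpr (hmax' i))]
        rw [Finset.sum_sub_distrib, hsum, Finset.sum_const, card_univ, Fintype.card_fin,
          nsmul_eq_mul, hMval]
        field_simp; ring
      intro i
      have := hall i (mem_univ i)
      have : r i = r i₀ := by linarith
      rw [show (∑ j, (h i j) ^ 2) = r i from rfl, this, hMval]
    · intro hall
      have hMval : r i₀ = (n : ℝ) / m := hall i₀
      rw [hMval]
      rw [show (m * n : ℝ) * ((n:ℝ) / m) = (n:ℝ)^2 by field_simp]
      exact Real.sqrt_sq hn'.le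
end

section
/- (Existence of ROCN matrices with prescribed row norms.) Let m ≤ n be positive integers and let H_1,…,H_m be strictly positive real numbers with Σ_{i=1}^m H_i² = n. Then there exists an m×n ROCN matrix h such that Σ_{j=1}^n h_{ij}² = H_i² for every i ∈ {1,…,m}. In particular, whenever the H_i are not all equal to √(n/m), this produces an ROCN matrix that is not semi-orthogonal (hence an ROCN Bell inequality that is not Platonic). -/
/-!
The rows of `h` are orthogonal with squared norms `Hᵢ²` exactly when `h * hᵀ = diagonal (H²)`,
and this Gram matrix is unchanged by `h ↦ h * G` for orthogonal `G`. Start from the matrix with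
`Hᵢ` in position `(i, i)`: its columns have total squared norm `trace (h * hᵀ) = n`, so while
some column is not normalized there is one of squared norm `< 1` and one of squared norm `> 1`,
and a Givens rotation in their plane makes the second one a unit vector.
-/

open Matrix Finset

theorem Fintype.sum_eq_sum_of_eq_off_pair {κ M : Type*} [Fintype κ] [AddCommGroup M]
    {f g : κ → M} {p q : κ} (hpq : p ≠ q) (hpair : f p + f q = g p + g q)
    (hoff : ∀ j, j ≠ p → j ≠ q → f j = g j) : ∑ j, f j = ∑ j, g j := by
  rw [← sub_eq_zero, ← Finset.sum_sub_distrib,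
    Fintype.sum_eq_add p q hpq fun j hj => sub_eq_zero.2 (hoff j hj.1 hj.2)]
  rw [sub_add_sub_comm, hpair, sub_self]

theorem Fintype.exists_lt_and_exists_gt_of_sum_eq_card {κ : Type*} [Fintype κ] {f : κ → ℝ}
    (hsum : ∑ j, f j = Fintype.card κ) (hne : ∃ j, f j ≠ 1) :
    (∃ p, f p < 1) ∧ ∃ q, 1 < f q := by
  obtain ⟨j, hj⟩ := hne
  have hcard : ∑ _j : κ, (1 : ℝ) = Fintype.card κ := by simp
  constructor
  · by_contra! hge
    have := Finset.sum_lt_sum (fun i _ => hge i) ⟨j, mem_univ j, lt_of_le_of_ne (hge j) hj.symm⟩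
    linarith
  · by_contra! hle
    have := Finset.sum_lt_sum (fun i _ => hle i) ⟨j, mem_univ j, lt_of_le_of_ne (hle j) hj⟩
    linarith

namespace Matrix

variable {ι κ : Type*}

theorem exists_mul_transpose_eq_diagonal_sq [Fintype κ] [DecidableEq ι] [DecidableEq κ]
    (e : ι ↪ κ) (d : ι → ℝ) :
    ∃ h : Matrix ι κ ℝ, h * hᵀ = diagonal fun i => d i ^ 2 := by
  refine ⟨of fun i j => if e i = j then d i else 0, ?_⟩
  ext i k
  by_cases hik : i = k
  · subst hik
    simp [mul_apply, sq]
  · simp [mul_apply, hik]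

section rotateCols

variable [DecidableEq κ] {p q : κ}

/-- Rotation by the angle `θ` in the plane of the columns `p` and `q`, i.e. `h * G` for the
Givens rotation `G`. -/
noncomputable def rotateCols (h : Matrix ι κ ℝ) (p q : κ) (θ : ℝ) : Matrix ι κ ℝ :=
  of fun i j =>
    if j = p then Real.cos θ * h i p - Real.sin θ * h i q
    else if j = q then Real.sin θ * h i p + Real.cos θ * h i q
    else h i j

theorem rotateCols_apply_left (h : Matrix ι κ ℝ) (θ : ℝ) (i : ι) :
    rotateCols h p q θ i p = Real.cos θ * h i p - Real.sin θ * h i q := by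
  simp [rotateCols]

theorem rotateCols_apply_right (h : Matrix ι κ ℝ) (hpq : p ≠ q) (θ : ℝ) (i : ι) :
    rotateCols h p q θ i q = Real.sin θ * h i p + Real.cos θ * h i q := by
  simp [rotateCols, hpq.symm]

theorem rotateCols_apply_of_ne (h : Matrix ι κ ℝ) (θ : ℝ) (i : ι) {j : κ} (hp : j ≠ p)
    (hq : j ≠ q) : rotateCols h p q θ i j = h i j := by
  simp [rotateCols, hp, hq]

theorem rotateCols_mul_transpose [Fintype κ] (h : Matrix ι κ ℝ) (hpq : p ≠ q) (θ : ℝ) :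
    rotateCols h p q θ * (rotateCols h p q θ)ᵀ = h * hᵀ := by
  ext i k
  simp only [mul_apply, transpose_apply]
  refine Fintype.sum_eq_sum_of_eq_off_pair hpq ?_ fun j hp hq => by
    rw [rotateCols_apply_of_ne h θ i hp hq, rotateCols_apply_of_ne h θ k hp hq]
  simp only [rotateCols_apply_left, rotateCols_apply_right h hpq]
  linear_combination (h i p * h k p + h i q * h k q) * Real.sin_sq_add_cos_sq θ

end rotateCols

variable [Fintype ι]

def colNormSq (h : Matrix ι κ ℝ) (j : κ) : ℝ := ∑ i, h i j ^ 2

theorem sum_colNormSq [Fintype κ] (h : Matrix ι κ ℝ) :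
    ∑ j, colNormSq h j = (h * hᵀ).trace := by
  simp only [colNormSq, trace, diag, mul_apply, transpose_apply, sq]
  exact Finset.sum_comm

variable [DecidableEq κ] {p q : κ}

theorem colNormSq_rotateCols_of_ne (h : Matrix ι κ ℝ) (θ : ℝ) {j : κ} (hp : j ≠ p)
    (hq : j ≠ q) : colNormSq (rotateCols h p q θ) j = colNormSq h j := by
  simp only [colNormSq, rotateCols_apply_of_ne h θ _ hp hq]

/-- The angle `π / 2` swaps the two columns, so by the intermediate value theorem column `q`
takes every squared norm between the two. -/
theorem exists_colNormSq_rotateCols_eq (h : Matrix ι κ ℝ) (hpq : p ≠ q) {c : ℝ}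
    (hp : colNormSq h p ≤ c) (hq : c ≤ colNormSq h q) :
    ∃ θ, colNormSq (rotateCols h p q θ) q = c := by
  simp only [colNormSq, rotateCols_apply_right h hpq] at hp hq ⊢
  have hcont : Continuous fun θ => ∑ i, (Real.sin θ * h i p + Real.cos θ * h i q) ^ 2 := by
    fun_prop
  have hmem : c ∈ Set.uIcc (∑ i, (Real.sin 0 * h i p + Real.cos 0 * h i q) ^ 2)
      (∑ i, (Real.sin (Real.pi / 2) * h i p + Real.cos (Real.pi / 2) * h i q) ^ 2) := by
    simpa [Set.mem_uIcc] using Or.inr ⟨hp, hq⟩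
  obtain ⟨θ, -, hθ⟩ := intermediate_value_uIcc hcont.continuousOn hmem
  exact ⟨θ, hθ⟩

/-- Induction on the number of columns of squared norm `≠ 1`: rotating a column of squared norm
`< 1` against one of squared norm `> 1` normalizes the latter. -/
theorem exists_mul_transpose_eq_and_colNormSq_eq_one [Fintype κ] (h : Matrix ι κ ℝ)
    (htr : (h * hᵀ).trace = Fintype.card κ) :
    ∃ h' : Matrix ι κ ℝ, h' * h'ᵀ = h * hᵀ ∧ ∀ j, colNormSq h' j = 1 := by
  induction hk : #{j | colNormSq h j ≠ 1} using Nat.strong_induction_on generalizing h with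
  | _ k ih =>
  by_cases hall : ∀ j, colNormSq h j = 1
  · exact ⟨h, rfl, hall⟩
  rw [not_forall] at hall
  obtain ⟨⟨p, hp⟩, q, hq⟩ :=
    Fintype.exists_lt_and_exists_gt_of_sum_eq_card ((sum_colNormSq h).trans htr) hall
  have hpq : p ≠ q := by
    rintro rfl
    linarith
  obtain ⟨θ, hθ⟩ := exists_colNormSq_rotateCols_eq h hpq hp.le hq.le
  have hgram := rotateCols_mul_transpose h hpq θ
  have hbad : ({j | colNormSq (rotateCols h p q θ) j ≠ 1} : Finset κ) ⊆
      ({j | colNormSq h j ≠ 1} : Finset κ).erase q := by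
    intro j hj
    simp only [mem_filter, mem_univ, true_and, mem_erase] at hj ⊢
    have hjq : j ≠ q := by
      rintro rfl
      exact hj hθ
    refine ⟨hjq, ?_⟩
    by_cases hjp : j = p
    · exact hjp ▸ hp.ne
    · rwa [colNormSq_rotateCols_of_ne h θ hjp hjq] at hj
  have hlt : #{j | colNormSq (rotateCols h p q θ) j ≠ 1} < k :=
    hk ▸ (card_le_card hbad).trans_lt (card_erase_lt_of_mem (by simpa using hq.ne'))
  obtain ⟨h', hh', hcol⟩ := ih _ hlt (rotateCols h p q θ) (hgram ▸ htr) rfl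
  exact ⟨h', hh'.trans hgram, hcol⟩

end Matrix

theorem rocn_exists_with_row_norms_general {m n : ℕ} (hmn : m ≤ n)
    (H : Fin m → ℝ) (hpos : ∀ i, 0 < H i)
    (hsum : ∑ i, (H i) ^ 2 = (n : ℝ)) :
    ∃ h : Matrix (Fin m) (Fin n) ℝ, IsROCN h ∧
      (∀ i, ∑ j, (h i j) ^ 2 = (H i) ^ 2) ∧
      ((∃ i, (H i) ^ 2 ≠ (n : ℝ) / m) → ¬ ∀ i, ∑ j, (h i j) ^ 2 = (n : ℝ) / m) := by
  obtain ⟨h₀, hh₀⟩ := exists_mul_transpose_eq_diagonal_sq (Fin.castLEEmb hmn) H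
  obtain ⟨h, hgram, hcol⟩ := exists_mul_transpose_eq_and_colNormSq_eq_one h₀
    (by rw [hh₀, trace_diagonal, hsum, Fintype.card_fin])
  rw [hh₀] at hgram
  have hrow : ∀ i, ∑ j, h i j ^ 2 = H i ^ 2 := fun i => by
    simpa [mul_apply, sq] using congr_fun₂ hgram i i
  refine ⟨h, ⟨hmn, fun i => ?_, fun i k hik => ?_, hcol⟩, hrow, ?_⟩
  · by_contra! hzero
    exact (pow_pos (hpos i) 2).ne (by simpa [hzero] using hrow i)
  · simpa [mul_apply, hik] using congr_fun₂ hgram i k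
  · rintro ⟨i, hi⟩ hall
    exact hi ((hrow i).symm.trans (hall i))

/-- (Existence of ROCN matrices with prescribed row norms.) Let
`0 < m ≤ n` and let `H₁, …, H_m > 0` satisfy `Σᵢ Hᵢ² = n`. Then there is an `m × n`
ROCN matrix `h` with `Σⱼ hᵢⱼ² = Hᵢ²` for every `i`. In particular, whenever the `Hᵢ²`
are not all equal to `n/m`, this produces an ROCN matrix that is not semi-orthogonal
(hence an ROCN Bell inequality that is not Platonic). -/
theorem rocn_exists_with_row_norms {m n : ℕ} (hm : 0 < m) (hmn : m ≤ n)
    (H : Fin m → ℝ) (hpos : ∀ i, 0 < H i)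
    (hsum : ∑ i, (H i) ^ 2 = (n : ℝ)) :
    ∃ h : Matrix (Fin m) (Fin n) ℝ, IsROCN h ∧
      (∀ i, ∑ j, (h i j) ^ 2 = (H i) ^ 2) ∧
      ((∃ i, (H i) ^ 2 ≠ (n : ℝ) / m) → ¬ ∀ i, ∑ j, (h i j) ^ 2 = (n : ℝ) / m) :=
  rocn_exists_with_row_norms_general hmn H hpos hsum
end
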